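/- arXiv:2101.03364 — 12 statements merged into one kernel-verified Lean document; each statement's English description precedes it below -/
import Mathlib

section
/- For every r with 3 ≤ r ≤ n, the characteristic polynomial Φ_r of the leading principal r×r submatrix S_r of the Seidel matrix S satisfies the recurrence Φ_r(x) = 2(x + β_{r-1})·Φ_{r-1}(x) − (x + β_{r-1})²·Φ_{r-2}(x), where Φ_1(x) = x and Φ_2(x) = x² − 1. -/
open Polynomial Matrix Finset

namespace SeidelAux

variable {R : Type*} [CommRing R]

/-- entry function for tridiagonal matrix with general corner `e` -/
def triCf (d c : ℕ → R) (e : R) (k i j : ℕ) : R :=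
  if i = j then (if i + 1 = k then e else d i)
  else if i + 1 = j then c i
  else if j + 1 = i then c j else 0

def triC (d c : ℕ → R) (e : R) (k : ℕ) : Matrix (Fin k) (Fin k) R :=
  Matrix.of fun i j => triCf d c e k i j

/-- uniform tridiagonal -/
def trif (d c : ℕ → R) (i j : ℕ) : R :=
  if i = j then d i else if i + 1 = j then c i else if j + 1 = i then c j else 0

def trig (d c : ℕ → R) (k : ℕ) : Matrix (Fin k) (Fin k) R :=
  Matrix.of fun i j => trif d c i j

lemma coe_succAbove {m : ℕ} (p : Fin (m+1)) (x : Fin m) :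
    ((p.succAbove x : Fin (m+1)) : ℕ) = if (x:ℕ) < (p:ℕ) then (x:ℕ) else (x:ℕ) + 1 := by
  rw [Fin.succAbove]
  split_ifs with h1 h2 h3 <;>
    simp_all [Fin.lt_def, Fin.coe_castSucc, Fin.val_succ] <;> omega

lemma triCf_eq_trif (d c : ℕ → R) (e : R) (k i j : ℕ) (hi : i + 1 ≠ k) :
    triCf d c e k i j = trif d c i j := by
  unfold triCf trif
  split_ifs <;> first | rfl | omega

lemma det_triC (d c : ℕ → R) (e : R) (k : ℕ) :
    (triC d c e (k+2)).det
      = e * (trig d c (k+1)).det - (c k)^2 * (trig d c k).det := by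
  have hk : k < k + 2 := by omega
  set pk : Fin (k+2) := ⟨k, hk⟩ with hpk
  set M : Matrix (Fin (k+2)) (Fin (k+2)) _ := triC d c e (k+2) with hM
  have hMapp : ∀ a b : Fin (k+2), M a b = triCf d c e (k+2) (a:ℕ) (b:ℕ) := fun a b => rfl
  have hlastcoe : ((Fin.last (k+1) : Fin (k+2)) : ℕ) = k + 1 := rfl
  have hne : pk ≠ Fin.last (k+1) := by
    intro h
    have := congrArg Fin.val h
    simp [hpk, Fin.val_last] at this
  rw [det_succ_row M (Fin.last (k+1))]
  rw [← Finset.sum_subset (Finset.subset_univ ({pk, Fin.last (k+1)} : Finset (Fin (k+2))))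
      (by
        intro j _ hj
        simp only [Finset.mem_insert, Finset.mem_singleton, not_or] at hj
        have h1 : (j:ℕ) ≠ k := fun h => hj.1 (Fin.ext h)
        have h2 : (j:ℕ) ≠ k+1 := fun h => hj.2 (Fin.ext h)
        have h3 : (j:ℕ) < k+2 := j.isLt
        have hz : M (Fin.last (k+1)) j = 0 := by
          rw [hMapp, hlastcoe]
          unfold triCf
          split_ifs <;> first | rfl | omega
        rw [hz, mul_zero, zero_mul])]
  rw [Finset.sum_pair hne]
  -- the corner entry
  have hcorner : M (Fin.last (k+1)) (Fin.last (k+1)) = e := by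
    rw [hMapp, hlastcoe]
    unfold triCf
    simp
  have hpkentry : M (Fin.last (k+1)) pk = c k := by
    rw [hMapp, hlastcoe]
    show triCf d c e (k+2) (k+1) k = c k
    unfold triCf
    split_ifs <;> first | rfl | omega
  -- first submatrix : leading (k+1) block
  have hsub1 : M.submatrix (Fin.last (k+1)).succAbove (Fin.last (k+1)).succAbove
      = trig d c (k+1) := by
    rw [Fin.succAbove_last]
    ext i j
    rw [Matrix.submatrix_apply, hMapp]
    simp only [Fin.coe_castSucc]
    exact triCf_eq_trif d c e (k+2) i j (by have := i.isLt; omega)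
  -- second submatrix and its determinant
  have hcoeSA : ∀ x : Fin (k+1), ((pk.succAbove x : Fin (k+2)) : ℕ)
      = if (x:ℕ) < k then (x:ℕ) else (x:ℕ) + 1 := by
    intro x
    rw [coe_succAbove]
  have hsub2 : (M.submatrix (Fin.last (k+1)).succAbove pk.succAbove).det
      = c k * (trig d c k).det := by
    rw [Fin.succAbove_last]
    set N : Matrix (Fin (k+1)) (Fin (k+1)) _ := M.submatrix Fin.castSucc pk.succAbove with hN
    have hNapp : ∀ a b : Fin (k+1), N a b
        = triCf d c e (k+2) (a:ℕ) (if (b:ℕ) < k then (b:ℕ) else (b:ℕ)+1) := by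
      intro a b
      rw [hN, Matrix.submatrix_apply, hMapp, Fin.coe_castSucc, hcoeSA]
    rw [det_succ_column N (Fin.last k)]
    rw [← Finset.sum_subset (Finset.subset_univ ({Fin.last k} : Finset (Fin (k+1))))
        (by
          intro i _ hi
          simp only [Finset.mem_singleton] at hi
          have h1 : (i:ℕ) ≠ k := fun h => hi (Fin.ext h)
          have h3 : (i:ℕ) < k+1 := i.isLt
          have hz : N i (Fin.last k) = 0 := by
            rw [hNapp]
            have : ((Fin.last k : Fin (k+1)) : ℕ) = k := rfl
            rw [this, if_neg (by omega)]
            unfold triCf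
            split_ifs <;> first | rfl | omega
          rw [hz, mul_zero, zero_mul])]
    rw [Finset.sum_singleton]
    have hNentry : N (Fin.last k) (Fin.last k) = c k := by
      rw [hNapp]
      show triCf d c e (k+2) k (if k < k then k else k+1) = c k
      rw [if_neg (by omega)]
      unfold triCf
      split_ifs <;> first | rfl | omega
    have hinner : N.submatrix (Fin.last k).succAbove (Fin.last k).succAbove
        = trig d c k := by
      rw [Fin.succAbove_last]
      ext i j
      rw [Matrix.submatrix_apply, hNapp]
      simp only [Fin.coe_castSucc]
      rw [if_pos (by exact j.isLt)]
      exact triCf_eq_trif d c e (k+2) i j (by have := i.isLt; omega)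
    rw [hNentry, hinner]
    have : ((Fin.last k : Fin (k+1)) : ℕ) = k := rfl
    rw [this]
    have hsgn : (-1 : R) ^ (k + k) = 1 := by
      rw [← two_mul]
      exact Even.neg_one_pow ⟨k, two_mul k⟩
    rw [hsgn, one_mul]
  rw [hcorner, hpkentry, hsub1, hsub2, hlastcoe]
  have hpkcoe : ((pk : Fin (k+2)) : ℕ) = k := rfl
  rw [hpkcoe]
  have hs1 : (-1 : R) ^ (k + 1 + k) = -1 := by
    have : k + 1 + k = 2 * k + 1 := by ring
    rw [this, pow_succ, Even.neg_one_pow ⟨k, by ring⟩, one_mul]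
  have hs2 : (-1 : R) ^ (k + 1 + (k + 1)) = 1 := by
    exact Even.neg_one_pow ⟨k+1, by ring⟩
  rw [hs1, hs2]
  ring

lemma det_trig_rec (d c : ℕ → R) (k : ℕ) :
    (trig d c (k+2)).det
      = d (k+1) * (trig d c (k+1)).det - (c k)^2 * (trig d c k).det := by
  have h : trig d c (k+2) = triC d c (d (k+1)) (k+2) := by
    ext i j
    unfold trig triC trif triCf
    simp only [Matrix.of_apply]
    have hi := i.isLt
    split_ifs <;> first | rfl | omega | (congr 1; omega)
  rw [h, det_triC]


/-- upper bidiagonal row-operation matrix -/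
def Pm (k : ℕ) : Matrix (Fin k) (Fin k) R :=
  Matrix.of fun i j => if i = j then 1 else if (i:ℕ)+1 = (j:ℕ) then -1 else 0

lemma det_Pm (k : ℕ) : (Pm (R := R) k).det = 1 := by
  have h : (Pm (R := R) k).BlockTriangular id := by
    intro i j hij
    have hv : (j:ℕ) < (i:ℕ) := hij
    show (if i = j then (1:R) else if (i:ℕ)+1 = (j:ℕ) then -1 else 0) = 0
    rw [if_neg (by intro h; subst h; exact lt_irrefl _ hv), if_neg (by omega)]
  rw [Matrix.det_of_upperTriangular h]
  have : ∀ i : Fin k, Pm (R := R) k i i = 1 := by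
    intro i; show (if i = i then (1:R) else _) = 1; rw [if_pos rfl]
  simp [this]

lemma Pm_mul_apply {k : ℕ} (A : Matrix (Fin k) (Fin k) R) (i j : Fin k) :
    (Pm k * A : Matrix (Fin k) (Fin k) R) i j = A i j - (if h : (i:ℕ)+1 < k then A ⟨(i:ℕ)+1, h⟩ j else 0) := by
  rw [Matrix.mul_apply]
  have step : ∀ b : Fin k, Pm (R := R) k i b * A b j
      = (if i = b then A b j else 0) + (if (i:ℕ)+1 = (b:ℕ) then -(A b j) else 0) := by
    intro b
    show (if i = b then (1:R) else if (i:ℕ)+1 = (b:ℕ) then -1 else 0) * A b j = _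
    split_ifs with h1 h2 h2
    · exfalso; subst h1; omega
    · ring
    · ring
    · ring
  rw [Finset.sum_congr rfl (fun b _ => step b), Finset.sum_add_distrib]
  have e1 : (∑ b : Fin k, if i = b then A b j else 0) = A i j := by
    rw [Finset.sum_ite_eq]
    exact if_pos (Finset.mem_univ i)
  have e2 : (∑ b : Fin k, if (i:ℕ)+1 = (b:ℕ) then -(A b j) else 0)
      = -(if h : (i:ℕ)+1 < k then A ⟨(i:ℕ)+1, h⟩ j else 0) := by
    by_cases h : (i:ℕ)+1 < k
    · rw [dif_pos h, Finset.sum_eq_single (⟨(i:ℕ)+1, h⟩ : Fin k)]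
      · rw [if_pos rfl]
      · intro b _ hb
        rw [if_neg]
        intro hc
        exact hb (Fin.ext hc.symm)
      · intro h'; exact absurd (Finset.mem_univ _) h'
    · rw [dif_neg h, neg_zero, Finset.sum_eq_zero]
      intro b _
      rw [if_neg]
      have := b.isLt
      omega
  rw [e1, e2]
  ring

lemma mul_PmT_apply {k : ℕ} (A : Matrix (Fin k) (Fin k) R) (i j : Fin k) :
    (A * (Pm k)ᵀ : Matrix (Fin k) (Fin k) R) i j = A i j - (if h : (j:ℕ)+1 < k then A i ⟨(j:ℕ)+1, h⟩ else 0) := by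
  rw [Matrix.mul_apply]
  have step : ∀ b : Fin k, A i b * (Pm (R := R) k)ᵀ b j
      = (if j = b then A i b else 0) + (if (j:ℕ)+1 = (b:ℕ) then -(A i b) else 0) := by
    intro b
    show A i b * (if j = b then (1:R) else if (j:ℕ)+1 = (b:ℕ) then -1 else 0) = _
    split_ifs with h1 h2 h2
    · exfalso; subst h1; omega
    · ring
    · ring
    · ring
  rw [Finset.sum_congr rfl (fun b _ => step b), Finset.sum_add_distrib]
  have e1 : (∑ b : Fin k, if j = b then A i b else 0) = A i j := by
    rw [Finset.sum_ite_eq]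
    exact if_pos (Finset.mem_univ j)
  have e2 : (∑ b : Fin k, if (j:ℕ)+1 = (b:ℕ) then -(A i b) else 0)
      = -(if h : (j:ℕ)+1 < k then A i ⟨(j:ℕ)+1, h⟩ else 0) := by
    by_cases h : (j:ℕ)+1 < k
    · rw [dif_pos h, Finset.sum_eq_single (⟨(j:ℕ)+1, h⟩ : Fin k)]
      · rw [if_pos rfl]
      · intro b _ hb
        rw [if_neg]
        intro hc
        exact hb (Fin.ext hc.symm)
      · intro h'; exact absurd (Finset.mem_univ _) h'
    · rw [dif_neg h, neg_zero, Finset.sum_eq_zero]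
      intro b _
      rw [if_neg]
      have := b.isLt
      omega
  rw [e1, e2]
  ring

/-- entry function of the char matrix of the Seidel matrix -/
noncomputable def smf (β : ℕ → ℝ) (i j : ℕ) : Polynomial ℝ :=
  if i = j then X else if i < j then -C (β (j+1)) else -C (β (i+1))

noncomputable def sm (β : ℕ → ℝ) (k : ℕ) : Matrix (Fin k) (Fin k) (Polynomial ℝ) :=
  Matrix.of fun i j => smf β i j

noncomputable def dg (β : ℕ → ℝ) (m : ℕ) : Polynomial ℝ := 2*(X + C (β (m+2)))
noncomputable def cg (β : ℕ → ℝ) (m : ℕ) : Polynomial ℝ := -(X + C (β (m+2)))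

section entry

variable (β : ℕ → ℝ) (k i j : ℕ)

lemma L_ee (hi : i < k) (hj : j < k) (hik : ¬ i+1 < k) (hjk : ¬ j+1 < k) :
    smf β i j = triCf (dg β) (cg β) X k i j := by
  unfold smf triCf dg cg
  split_ifs <;> first | rfl | (exfalso; omega) | ring1

lemma L_ei (hi : i < k) (hj : j < k) (hik : ¬ i+1 < k) (hjk : j+1 < k) :
    smf β i j - smf β i (j+1) = triCf (dg β) (cg β) X k i j := by
  unfold smf triCf dg cg
  split_ifs <;>
    first
      | (exfalso; omega)
      | ring1
      | (rw [show i+1 = j+2 by omega]; ring1)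
      | (rw [show j+1 = i+2 by omega]; ring1)
      | (rw [show i+1+1 = i+2 by omega]; ring1)
      | (rw [show j+1+1 = j+2 by omega]; ring1)
      | (rw [show j+1+1 = i+2 by omega]; ring1)
      | (rw [show i+1+1 = j+2 by omega]; ring1)
      | (rw [show i+1+1 = i+2 by omega, show j+1+1 = j+2 by omega, show j+2 = i+2 by omega]; ring1)

lemma L_ie (hi : i < k) (hj : j < k) (hik : i+1 < k) (hjk : ¬ j+1 < k) :
    smf β i j - smf β (i+1) j = triCf (dg β) (cg β) X k i j := by
  unfold smf triCf dg cg
  split_ifs <;>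
    first
      | (exfalso; omega)
      | ring1
      | (rw [show i+1 = j+2 by omega]; ring1)
      | (rw [show j+1 = i+2 by omega]; ring1)
      | (rw [show i+1+1 = i+2 by omega]; ring1)
      | (rw [show j+1+1 = j+2 by omega]; ring1)
      | (rw [show j+1+1 = i+2 by omega]; ring1)
      | (rw [show i+1+1 = j+2 by omega]; ring1)
      | (rw [show i+1+1 = i+2 by omega, show j+1+1 = j+2 by omega, show j+2 = i+2 by omega]; ring1)

lemma L_ii (hi : i < k) (hj : j < k) (hik : i+1 < k) (hjk : j+1 < k) :
    smf β i j - smf β (i+1) j - (smf β i (j+1) - smf β (i+1) (j+1))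
      = triCf (dg β) (cg β) X k i j := by
  unfold smf triCf dg cg
  split_ifs <;>
    first
      | (exfalso; omega)
      | ring1
      | (simp only [show i+1+1 = i+2 from rfl]; ring1)
      | (rw [show i+1 = j+2 by omega]; ring1)
      | (rw [show j+1 = i+2 by omega]; ring1)
      | (rw [show i+1+1 = i+2 by omega]; ring1)
      | (rw [show j+1+1 = j+2 by omega]; ring1)
      | (rw [show j+1+1 = i+2 by omega]; ring1)
      | (rw [show i+1+1 = j+2 by omega]; ring1)
      | (rw [show i+1+1 = i+2 by omega, show j+1+1 = j+2 by omega, show j+2 = i+2 by omega]; ring1)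

end entry

lemma conj (β : ℕ → ℝ) (k : ℕ) :
    (Pm k * sm β k * (Pm k)ᵀ : Matrix (Fin k) (Fin k) (Polynomial ℝ)) = triC (dg β) (cg β) X k := by
  apply Matrix.ext
  intro i j
  simp only [mul_PmT_apply, Pm_mul_apply]
  have hi := i.isLt
  have hj := j.isLt
  by_cases hik : (i:ℕ)+1 < k <;> by_cases hjk : (j:ℕ)+1 < k
  · simp only [dif_pos hik, dif_pos hjk]
    show smf β i j - smf β ((i:ℕ)+1) j - (smf β i ((j:ℕ)+1) - smf β ((i:ℕ)+1) ((j:ℕ)+1))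
      = triCf (dg β) (cg β) X k i j
    exact L_ii β k i j hi hj hik hjk
  · simp only [dif_pos hik, dif_neg hjk, sub_zero]
    show smf β i j - smf β ((i:ℕ)+1) j = triCf (dg β) (cg β) X k i j
    exact L_ie β k i j hi hj hik hjk
  · simp only [dif_neg hik, dif_pos hjk, sub_zero]
    show smf β i j - smf β i ((j:ℕ)+1) = triCf (dg β) (cg β) X k i j
    exact L_ei β k i j hi hj hik hjk
  · simp only [dif_neg hik, dif_neg hjk, sub_zero]
    show smf β i j = triCf (dg β) (cg β) X k i j
    exact L_ee β k i j hi hj hik hjk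

lemma det_sm (β : ℕ → ℝ) (k : ℕ) :
    (sm β k).det = (triC (dg β) (cg β) X k).det := by
  have h := conj β k
  calc (sm β k).det
      = (Pm k).det * (sm β k).det * ((Pm k)ᵀ).det := by
        rw [det_Pm, Matrix.det_transpose, det_Pm]; ring
    _ = (Pm k * sm β k * (Pm k)ᵀ).det := by rw [Matrix.det_mul, Matrix.det_mul]
    _ = _ := by rw [h]

noncomputable def w (β : ℕ → ℝ) : ℕ → Polynomial ℝ
  | 0 => 0
  | (m+1) => (cg β m)^2 * (trig (dg β) (cg β) m).det

lemma phiX (β : ℕ → ℝ) (m : ℕ) :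
    (triC (dg β) (cg β) X (m+1)).det
      = X * (trig (dg β) (cg β) m).det - w β m := by
  cases m with
  | zero =>
      show (triC (dg β) (cg β) X 1).det = X * (trig (dg β) (cg β) 0).det - 0
      rw [Matrix.det_fin_one, Matrix.det_fin_zero]
      show triCf (dg β) (cg β) X 1 0 0 = X * 1 - 0
      unfold triCf
      norm_num
  | succ m' =>
      show (triC (dg β) (cg β) X (m'+2)).det
        = X * (trig (dg β) (cg β) (m'+1)).det
          - (cg β m')^2 * (trig (dg β) (cg β) m').det
      exact det_triC (dg β) (cg β) X m'

lemma trigrec (β : ℕ → ℝ) (m : ℕ) :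
    (trig (dg β) (cg β) (m+1)).det
      = dg β m * (trig (dg β) (cg β) m).det - w β m := by
  cases m with
  | zero =>
      show (trig (dg β) (cg β) 1).det = dg β 0 * (trig (dg β) (cg β) 0).det - 0
      rw [Matrix.det_fin_one, Matrix.det_fin_zero]
      show trif (dg β) (cg β) 0 0 = dg β 0 * 1 - 0
      unfold trif
      norm_num
  | succ m' =>
      show (trig (dg β) (cg β) (m'+2)).det
        = dg β (m'+1) * (trig (dg β) (cg β) (m'+1)).det
          - (cg β m')^2 * (trig (dg β) (cg β) m').det
      exact det_trig_rec (dg β) (cg β) m'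

end SeidelAux

open SeidelAux

theorem stmt_0 (n : ℕ) (hn : 2 ≤ n) (β : ℕ → ℝ)
    (hβ : ∀ i, 1 ≤ i → i ≤ n → β i = 1 ∨ β i = -1)
    (S : Matrix (Fin n) (Fin n) ℝ)
    (hS : ∀ i j : Fin n, S i j = if i = j then 0 else β (max (i : ℕ) (j : ℕ) + 1))
    (Φ : (r : ℕ) → r ≤ n → Polynomial ℝ)
    (hΦ : ∀ (r : ℕ) (h : r ≤ n),
      Φ r h = (S.submatrix (Fin.castLE h) (Fin.castLE h)).charpoly) :
    (∀ h1 : 1 ≤ n, Φ 1 h1 = X) ∧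
    (∀ h2 : 2 ≤ n, Φ 2 h2 = X ^ 2 - 1) ∧
    (∀ (r : ℕ) (hr3 : 3 ≤ r) (hr : r ≤ n),
      Φ r hr = 2 * (X + C (β (r - 1))) * Φ (r - 1) (by omega) -
        (X + C (β (r - 1))) ^ 2 * Φ (r - 2) (by omega)) := by
  have key : ∀ (r : ℕ) (h : r ≤ n),
      Φ r h = (triC (dg β) (cg β) X r).det := by
    intro r h
    rw [hΦ r h, Matrix.charpoly, ← det_sm β r]
    congr 1
    apply Matrix.ext
    intro i j
    by_cases hij : i = j
    · subst hij
      rw [Matrix.charmatrix_apply_eq]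
      have h0 : (S.submatrix (Fin.castLE h) (Fin.castLE h)) i i = 0 := by
        rw [Matrix.submatrix_apply, hS, if_pos rfl]
      rw [h0, map_zero, sub_zero]
      show (X : Polynomial ℝ) = smf β i i
      unfold smf
      rw [if_pos rfl]
    · rw [Matrix.charmatrix_apply_ne _ _ _ hij]
      have hc : Fin.castLE h i ≠ Fin.castLE h j := by
        intro hc
        apply hij
        apply Fin.ext
        have hv := congrArg Fin.val hc
        exact hv
      have h1 : (S.submatrix (Fin.castLE h) (Fin.castLE h)) i j
          = β (max (i:ℕ) (j:ℕ) + 1) := by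
        rw [Matrix.submatrix_apply, hS, if_neg hc]
        rfl
      rw [h1]
      show -C (β (max (i:ℕ) (j:ℕ) + 1)) = smf β i j
      unfold smf
      have hij' : (i:ℕ) ≠ (j:ℕ) := fun hc => hij (Fin.ext hc)
      rw [if_neg hij']
      by_cases hlt : (i:ℕ) < (j:ℕ)
      · rw [if_pos hlt, max_eq_right (le_of_lt hlt)]
      · rw [if_neg hlt, max_eq_left (by omega)]
  have trig0 : (trig (dg β) (cg β) 0).det = 1 := Matrix.det_fin_zero
  refine ⟨?_, ?_, ?_⟩
  · intro h1
    have H : (triC (dg β) (cg β) X 1).det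
        = X * (trig (dg β) (cg β) 0).det - w β 0 := phiX β 0
    rw [key 1 h1, H, trig0]
    show X * 1 - 0 = X
    ring
  · intro h2
    have hb2 : C (β 2) * C (β 2) = (1 : Polynomial ℝ) := by
      rcases hβ 2 (by omega) hn with h | h <;> rw [h] <;> simp
    have H : (triC (dg β) (cg β) X 2).det
        = X * (trig (dg β) (cg β) 1).det - w β 1 := phiX β 1
    have H1 : (trig (dg β) (cg β) 1).det
        = dg β 0 * (trig (dg β) (cg β) 0).det - w β 0 := trigrec β 0
    have Hw1 : w β 1 = (cg β 0)^2 * (trig (dg β) (cg β) 0).det := rfl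
    have Hw0 : w β 0 = 0 := rfl
    rw [key 2 h2, H, H1, Hw1, Hw0, trig0]
    simp only [dg, cg]
    linear_combination (-1 : Polynomial ℝ) * hb2
  · intro r hr3 hr
    obtain ⟨m, rfl⟩ : ∃ m, r = m + 3 := ⟨r - 3, by omega⟩
    have ha : C (β (m+2)) * C (β (m+2)) = (1 : Polynomial ℝ) := by
      rcases hβ (m+2) (by omega) (by omega) with h | h <;> rw [h] <;> simp
    have hb : C (β (m+3)) * C (β (m+3)) = (1 : Polynomial ℝ) := by
      rcases hβ (m+3) (by omega) (by omega) with h | h <;> rw [h] <;> simp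
    show Φ (m+3) hr = 2 * (X + C (β (m+2))) * Φ (m+2) (by omega) -
        (X + C (β (m+2)))^2 * Φ (m+1) (by omega)
    rw [key (m+3) hr, key (m+2) (by omega), key (m+1) (by omega)]
    have H1 : (triC (dg β) (cg β) X (m+3)).det
        = X * (trig (dg β) (cg β) (m+2)).det - w β (m+2) := phiX β (m+2)
    have H2 : (triC (dg β) (cg β) X (m+2)).det
        = X * (trig (dg β) (cg β) (m+1)).det - w β (m+1) := phiX β (m+1)
    have H3 : (triC (dg β) (cg β) X (m+1)).det
        = X * (trig (dg β) (cg β) m).det - w β m := phiX β m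
    have H4 : (trig (dg β) (cg β) (m+2)).det
        = dg β (m+1) * (trig (dg β) (cg β) (m+1)).det - w β (m+1) := trigrec β (m+1)
    have H5 : (trig (dg β) (cg β) (m+1)).det
        = dg β m * (trig (dg β) (cg β) m).det - w β m := trigrec β m
    have H6 : w β (m+2) = (cg β (m+1))^2 * (trig (dg β) (cg β) (m+1)).det := rfl
    have H7 : w β (m+1) = (cg β m)^2 * (trig (dg β) (cg β) m).det := rfl
    rw [H1, H4, H6, H2, H3, H7]
    simp only [dg, cg] at H5 ⊢
    simp only [show m+1+2 = m+3 from rfl] at H5 ⊢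
    linear_combination (trig (dg β) (cg β) (m+1)).det * ha
      - (trig (dg β) (cg β) (m+1)).det * hb
      - (X + C (β (m+2)))^2 * H5
end

section
/- The determinant of the Seidel matrix S equals the determinant of the n×n tridiagonal matrix T whose diagonal entries are T_{ii} = −2β_{i+1} for 1 ≤ i ≤ n−1 and T_{nn} = 0, and whose sub- and super-diagonal entries are T_{i,i+1} = T_{i+1,i} = β_{i+1} for 1 ≤ i ≤ n−1, with all other entries 0. -/
open Polynomial Matrix

theorem stmt_1 (n : ℕ) (hn : 2 ≤ n) (β : ℕ → ℝ)
    (hβ : ∀ i, 1 ≤ i → i ≤ n → β i = 1 ∨ β i = -1)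
    (S : Matrix (Fin n) (Fin n) ℝ)
    (hS : ∀ i j : Fin n, S i j = if i = j then 0 else β (max (i : ℕ) (j : ℕ) + 1))
    (T : Matrix (Fin n) (Fin n) ℝ)
    (hT : ∀ i j : Fin n, T i j =
      if (i : ℕ) = (j : ℕ) then
        (if (i : ℕ) + 1 < n then -2 * β ((i : ℕ) + 2) else 0)
      else if (i : ℕ) + 1 = (j : ℕ) then β ((i : ℕ) + 2)
      else if (j : ℕ) + 1 = (i : ℕ) then β ((j : ℕ) + 2)
      else 0) :
    S.det = T.det := by
  classical
  set L : Matrix (Fin n) (Fin n) ℝ :=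
    fun i j => (if j = i then (1:ℝ) else 0) + (if (j:ℕ) = (i:ℕ)+1 then (-1:ℝ) else 0)
    with hLdef
  have hLdet : L.det = 1 := by
    have htri : L.BlockTriangular id := by
      intro i j hij
      simp only [Matrix.BlockTriangular, id] at hij ⊢
      have h1 : ¬ (j = i) := by intro h; subst h; exact lt_irrefl _ hij
      have h2 : ¬ ((j:ℕ) = (i:ℕ)+1) := by
        have : (j:ℕ) < (i:ℕ) := hij
        omega
      simp [hLdef, h1, h2]
    rw [Matrix.det_of_upperTriangular htri]
    apply Finset.prod_eq_one
    intro i _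
    simp [hLdef]
  have hmulL : ∀ (A : Matrix (Fin n) (Fin n) ℝ) (i k : Fin n),
      (L * A) i k = A i k - (if h : (i:ℕ)+1 < n then A ⟨(i:ℕ)+1, h⟩ k else 0) := by
    intro A i k
    rw [Matrix.mul_apply]
    have key : ∀ j : Fin n, L i j * A j k =
        (if j = i then A j k else 0) + (if h : (i:ℕ)+1 < n then
          (if j = (⟨(i:ℕ)+1, h⟩ : Fin n) then -A j k else 0) else 0) := by
      intro j
      by_cases h : (i:ℕ)+1 < n
      · rw [dif_pos h]
        by_cases h1 : j = i
        · subst h1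
          have h2 : ¬ ((j:ℕ) = (j:ℕ)+1) := by omega
          have h3 : ¬ (j = (⟨(j:ℕ)+1, h⟩ : Fin n)) := by
            intro he; have := congrArg Fin.val he; simp at this
          simp [hLdef, h2, h3]
        · by_cases h2 : j = (⟨(i:ℕ)+1, h⟩ : Fin n)
          · subst h2
            simp [hLdef, h1]
          · have h3 : ¬ ((j:ℕ) = (i:ℕ)+1) := by
              intro he; exact h2 (Fin.ext he)
            simp [hLdef, h1, h2, h3]
      · rw [dif_neg h]
        by_cases h1 : j = i
        · subst h1
          have h2 : ¬ ((j:ℕ) = (j:ℕ)+1) := by omega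
          simp [hLdef, h2]
        · have h3 : ¬ ((j:ℕ) = (i:ℕ)+1) := by
            intro he; have := j.isLt; omega
          simp [hLdef, h1, h3]
    rw [Finset.sum_congr rfl (fun j _ => key j)]
    rw [Finset.sum_add_distrib]
    by_cases h : (i:ℕ)+1 < n
    · simp only [dif_pos h]
      rw [Finset.sum_ite_eq' Finset.univ i (fun j => A j k),
        Finset.sum_ite_eq' Finset.univ (⟨(i:ℕ)+1, h⟩ : Fin n) (fun j => -A j k)]
      simp
      ring
    · simp only [dif_neg h]
      rw [Finset.sum_ite_eq' Finset.univ i (fun j => A j k)]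
      simp
  have hmulR : ∀ (A : Matrix (Fin n) (Fin n) ℝ) (i k : Fin n),
      (A * Lᵀ) i k = A i k - (if h : (k:ℕ)+1 < n then A i ⟨(k:ℕ)+1, h⟩ else 0) := by
    intro A i k
    have h0 : (A * Lᵀ) i k = (L * Aᵀ) k i := by
      rw [← Matrix.transpose_apply (A * Lᵀ), Matrix.transpose_mul, Matrix.transpose_transpose]
    rw [h0, hmulL]
    simp [Matrix.transpose_apply]
  have eSne : ∀ (a b : ℕ) (ha : a < n) (hb : b < n), a ≠ b →
      S ⟨a, ha⟩ ⟨b, hb⟩ = β (max a b + 1) := by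
    intro a b ha hb hab
    rw [hS, if_neg (fun he => hab (congrArg Fin.val he))]
  have eS0 : ∀ (a b : ℕ) (ha : a < n) (hb : b < n), a = b →
      S ⟨a, ha⟩ ⟨b, hb⟩ = 0 := by
    intro a b ha hb hab
    subst hab
    rw [hS, if_pos rfl]
  have key : T = L * S * Lᵀ := by
    ext i j
    have hi : (i:ℕ) < n := i.isLt
    have hj : (j:ℕ) < n := j.isLt
    rw [hmulR (L * S) i j, hmulL S i j, hT i j]
    have hmul2 : ∀ (h : (j:ℕ)+1 < n), (L * S) i ⟨(j:ℕ)+1, h⟩ =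
        S i ⟨(j:ℕ)+1, h⟩ - (if h' : (i:ℕ)+1 < n then S ⟨(i:ℕ)+1, h'⟩ ⟨(j:ℕ)+1, h⟩ else 0) := by
      intro h; exact hmulL S i ⟨(j:ℕ)+1, h⟩
    rcases lt_trichotomy (i:ℕ) (j:ℕ) with hlt | heq | hgt
    · -- i < j
      have hi1 : (i:ℕ)+1 < n := by omega
      rw [if_neg (by omega : ¬ ((i:ℕ) = (j:ℕ))), dif_pos hi1]
      have e0 : S i j = β ((j:ℕ)+1) := by
        rw [eSne (i:ℕ) (j:ℕ) hi hj (by omega)]; congr 1; omega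
      rw [e0]
      by_cases hsucc : (i:ℕ)+1 = (j:ℕ)
      · rw [if_pos hsucc]
        have e1 : S ⟨(i:ℕ)+1, hi1⟩ j = 0 := eS0 _ _ hi1 hj hsucc
        rw [e1]
        by_cases hj1 : (j:ℕ)+1 < n
        · rw [dif_pos hj1, hmul2 hj1, dif_pos hi1]
          have e2 : S i ⟨(j:ℕ)+1, hj1⟩ = β ((j:ℕ)+2) := by
            rw [eSne (i:ℕ) ((j:ℕ)+1) hi hj1 (by omega)]; congr 1; omega
          have e3 : S ⟨(i:ℕ)+1, hi1⟩ ⟨(j:ℕ)+1, hj1⟩ = β ((j:ℕ)+2) := by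
            rw [eSne ((i:ℕ)+1) ((j:ℕ)+1) hi1 hj1 (by omega)]; congr 1; omega
          rw [e2, e3]
          have : (j:ℕ)+1 = (i:ℕ)+2 := by omega
          rw [this]; ring
        · rw [dif_neg hj1]
          have : (j:ℕ)+1 = (i:ℕ)+2 := by omega
          rw [this]; ring
      · rw [if_neg hsucc, if_neg (by omega : ¬ ((j:ℕ)+1 = (i:ℕ)))]
        have e1 : S ⟨(i:ℕ)+1, hi1⟩ j = β ((j:ℕ)+1) := by
          rw [eSne ((i:ℕ)+1) (j:ℕ) hi1 hj (by omega)]; congr 1; omega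
        rw [e1]
        by_cases hj1 : (j:ℕ)+1 < n
        · rw [dif_pos hj1, hmul2 hj1, dif_pos hi1]
          have e2 : S i ⟨(j:ℕ)+1, hj1⟩ = β ((j:ℕ)+2) := by
            rw [eSne (i:ℕ) ((j:ℕ)+1) hi hj1 (by omega)]; congr 1; omega
          have e3 : S ⟨(i:ℕ)+1, hi1⟩ ⟨(j:ℕ)+1, hj1⟩ = β ((j:ℕ)+2) := by
            rw [eSne ((i:ℕ)+1) ((j:ℕ)+1) hi1 hj1 (by omega)]; congr 1; omega
          rw [e2, e3]; ring
        · rw [dif_neg hj1]; ring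
    · -- i = j
      rw [if_pos heq]
      have e0 : S i j = 0 := eS0 (i:ℕ) (j:ℕ) hi hj heq
      rw [e0]
      by_cases hi1 : (i:ℕ)+1 < n
      · have hj1 : (j:ℕ)+1 < n := by omega
        rw [if_pos hi1, dif_pos hi1, dif_pos hj1, hmul2 hj1, dif_pos hi1]
        have e1 : S ⟨(i:ℕ)+1, hi1⟩ j = β ((i:ℕ)+2) := by
          rw [eSne ((i:ℕ)+1) (j:ℕ) hi1 hj (by omega)]; congr 1; omega
        have e2 : S i ⟨(j:ℕ)+1, hj1⟩ = β ((i:ℕ)+2) := by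
          rw [eSne (i:ℕ) ((j:ℕ)+1) hi hj1 (by omega)]; congr 1; omega
        have e3 : S ⟨(i:ℕ)+1, hi1⟩ ⟨(j:ℕ)+1, hj1⟩ = 0 :=
          eS0 _ _ hi1 hj1 (by omega)
        rw [e1, e2, e3]; ring
      · have hj1 : ¬ ((j:ℕ)+1 < n) := by omega
        rw [if_neg hi1, dif_neg hi1, dif_neg hj1]; ring
    · -- j < i
      have hj1 : (j:ℕ)+1 < n := by omega
      rw [if_neg (by omega : ¬ ((i:ℕ) = (j:ℕ))),
        if_neg (by omega : ¬ ((i:ℕ)+1 = (j:ℕ))), dif_pos hj1, hmul2 hj1]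
      have e0 : S i j = β ((i:ℕ)+1) := by
        rw [eSne (i:ℕ) (j:ℕ) hi hj (by omega)]; congr 1; omega
      rw [e0]
      by_cases hsucc : (j:ℕ)+1 = (i:ℕ)
      · rw [if_pos hsucc]
        have e2 : S i ⟨(j:ℕ)+1, hj1⟩ = 0 := eS0 _ _ hi hj1 (by omega)
        rw [e2]
        by_cases hi1 : (i:ℕ)+1 < n
        · rw [dif_pos hi1, dif_pos hi1]
          have e1 : S ⟨(i:ℕ)+1, hi1⟩ j = β ((i:ℕ)+2) := by
            rw [eSne ((i:ℕ)+1) (j:ℕ) hi1 hj (by omega)]; congr 1; omega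
          have e3 : S ⟨(i:ℕ)+1, hi1⟩ ⟨(j:ℕ)+1, hj1⟩ = β ((i:ℕ)+2) := by
            rw [eSne ((i:ℕ)+1) ((j:ℕ)+1) hi1 hj1 (by omega)]; congr 1; omega
          rw [e1, e3]
          have h4 : (j:ℕ)+2 = (i:ℕ)+1 := by omega
          rw [h4]; ring
        · rw [dif_neg hi1, dif_neg hi1]
          have h4 : (j:ℕ)+2 = (i:ℕ)+1 := by omega
          rw [h4]; ring
      · rw [if_neg hsucc]
        have e2 : S i ⟨(j:ℕ)+1, hj1⟩ = β ((i:ℕ)+1) := by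
          rw [eSne (i:ℕ) ((j:ℕ)+1) hi hj1 (by omega)]; congr 1; omega
        rw [e2]
        by_cases hi1 : (i:ℕ)+1 < n
        · rw [dif_pos hi1, dif_pos hi1]
          have e1 : S ⟨(i:ℕ)+1, hi1⟩ j = β ((i:ℕ)+2) := by
            rw [eSne ((i:ℕ)+1) (j:ℕ) hi1 hj (by omega)]; congr 1; omega
          have e3 : S ⟨(i:ℕ)+1, hi1⟩ ⟨(j:ℕ)+1, hj1⟩ = β ((i:ℕ)+2) := by
            rw [eSne ((i:ℕ)+1) ((j:ℕ)+1) hi1 hj1 (by omega)]; congr 1; omega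
          rw [e1, e3]; ring
        · rw [dif_neg hi1, dif_neg hi1]; ring
  rw [key, Matrix.det_mul, Matrix.det_mul, hLdet, Matrix.det_transpose, hLdet]
  ring
end

section
/- Define real numbers d_1,…,d_n recursively by d_1 = −2β_2, d_i = −2β_{i+1} − 1/d_{i−1} for 2 ≤ i ≤ n−1, and d_n = −1/d_{n−1}. If d_i ≠ 0 for all 1 ≤ i ≤ n−1, then det(S) = d_1·d_2⋯d_n. -/
open Polynomial Matrix

/-!
Subtracting from every row of `S` the next row, and then doing the same with the columns,
conjugates `S` by a unimodular bidiagonal matrix and turns it into the symmetric tridiagonal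
matrix `T` with diagonal `(-2β₂, …, -2βₙ, 0)` and off-diagonal entries `β₂, …, βₙ`. Because
`βᵢ² = 1`, the numbers `dᵢ` are exactly the pivots of Gaussian elimination on `T`, i.e. `T = L U`
with `L` unit lower bidiagonal and `U` upper bidiagonal with diagonal `d₁, …, dₙ`.
-/

namespace Matrix

variable {R : Type*}

/-- Entries are indexed by `ℕ` so that products with tridiagonal matrices can be evaluated
without `Fin` arithmetic at the boundary. -/
def tridiagEntry [Zero R] (a b c : ℕ → R) (i j : ℕ) : R :=
  if j = i then a i else if j = i + 1 then b i else if i = j + 1 then c j else 0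

def tridiagonal [Zero R] (n : ℕ) (a b c : ℕ → R) : Matrix (Fin n) (Fin n) R :=
  of fun i j => tridiagEntry a b c i j

theorem tridiagonal_mul_of_apply [CommRing R] {n : ℕ} (a b c : ℕ → R) (K : ℕ → ℕ → R)
    (i j : Fin n) :
    (tridiagonal n a b c * of fun i j : Fin n => K i j) i j =
      a i * K i j + (if (i : ℕ) + 1 < n then b i * K (i + 1) j else 0) +
        if 0 < (i : ℕ) then c (i - 1) * K (i - 1) j else 0 := by
  have h_split : ∀ k : ℕ, tridiagEntry a b c i k * K k j =
      (if k = i then a i * K i j else 0) + (if k = i + 1 then b i * K (i + 1) j else 0) +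
        if 0 < (i : ℕ) then (if k = i - 1 then c (i - 1) * K (i - 1) j else 0) else 0 := by
    intro k
    unfold tridiagEntry
    split_ifs <;> (try subst_vars) <;> first | (exfalso; omega) | simp
  simp only [mul_apply, tridiagonal, of_apply]
  rw [Fin.sum_univ_eq_sum_range (fun k => tridiagEntry a b c i k * K k j)]
  simp only [h_split, Finset.sum_add_distrib, Finset.sum_ite_eq', Finset.sum_ite_irrel,
    Finset.sum_const_zero, Finset.mem_range, i.isLt]
  split_ifs <;> first | (exfalso; omega) | simp

theorem det_tridiagonal_zero_superdiag [CommRing R] {n : ℕ} (a c : ℕ → R) :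
    (tridiagonal n a 0 c).det = ∏ i : Fin n, a i := by
  rw [det_of_isLowerTriangular _ fun i j hij => ?_]
  · simp [tridiagonal, tridiagEntry]
  have : (i : ℕ) < j := hij
  simp only [tridiagonal, tridiagEntry, of_apply, Pi.zero_apply]
  split_ifs <;> first | rfl | omega

theorem det_tridiagonal_zero_subdiag [CommRing R] {n : ℕ} (a b : ℕ → R) :
    (tridiagonal n a b 0).det = ∏ i : Fin n, a i := by
  rw [det_of_isUpperTriangular fun i j hij => ?_]
  · simp [tridiagonal, tridiagEntry]
  have : (j : ℕ) < i := hij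
  simp only [tridiagonal, tridiagEntry, of_apply, Pi.zero_apply]
  split_ifs <;> first | rfl | omega

theorem tridiagonal_eq_mul_of_pivots [Field R] {n : ℕ} (a b c p : ℕ → R) (hp₀ : p 0 = a 0)
    (hp : ∀ i, i + 1 < n → p (i + 1) = a (i + 1) - c i * b i / p i)
    (hp_ne : ∀ i, i + 1 < n → p i ≠ 0) :
    tridiagonal n a b c = tridiagonal n 1 0 (fun i => c i / p i) * tridiagonal n p b 0 := by
  ext ⟨i, hi⟩ ⟨j, hj⟩
  rw [show tridiagonal n p b 0 = of fun i j : Fin n => tridiagEntry p b 0 i j from rfl,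
    tridiagonal_mul_of_apply]
  simp only [tridiagonal, of_apply, Pi.zero_apply, Pi.one_apply, one_mul, zero_mul]
  obtain rfl | rfl | rfl | ⟨h₁, h₂, h₃⟩ :
      j = i ∨ j = i + 1 ∨ i = j + 1 ∨ (j ≠ i ∧ j ≠ i + 1 ∧ i ≠ j + 1) := by omega
  · rcases j with _ | j
    · simp [tridiagEntry, hp₀]
    · simp (disch := omega) only [tridiagEntry, if_pos, if_neg, if_true, ite_self,
        hp j (by omega), Nat.add_sub_cancel, add_zero]
      ring
  · rcases i with _ | i
    · simp [tridiagEntry]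
    · simp [tridiagEntry, show i + 1 + 1 ≠ i by omega]
  · simp [tridiagEntry, hp_ne j (by omega), show j ≠ j + 1 + 1 by omega]
  · simp only [tridiagEntry]
    split_ifs <;> first | omega | simp

theorem det_tridiagonal_eq_prod_pivots [Field R] {n : ℕ} (a b c p : ℕ → R) (hp₀ : p 0 = a 0)
    (hp : ∀ i, i + 1 < n → p (i + 1) = a (i + 1) - c i * b i / p i)
    (hp_ne : ∀ i, i + 1 < n → p i ≠ 0) :
    (tridiagonal n a b c).det = ∏ i : Fin n, p i := by
  rw [tridiagonal_eq_mul_of_pivots a b c p hp₀ hp hp_ne, det_mul, det_tridiagonal_zero_superdiag,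
    det_tridiagonal_zero_subdiag]
  simp

theorem tridiagonal_one_neg_one_mul_of [CommRing R] (n : ℕ) (K : ℕ → ℕ → R) :
    (tridiagonal n 1 (-1) 0 * of fun i j : Fin n => K i j) =
      of fun i j : Fin n => K i j - if (i : ℕ) + 1 < n then K (i + 1) j else 0 := by
  ext i j
  rw [tridiagonal_mul_of_apply]
  simp only [Pi.one_apply, Pi.neg_apply, Pi.zero_apply, of_apply]
  split_ifs <;> ring

end Matrix

section Seidel

variable {R : Type*}

/-- Indices start at `0`, so entry `(i, j)` is `β_{max(i,j)}` of the 1-based indexing. -/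
def seidelMatrix [Zero R] (n : ℕ) (β : ℕ → R) : Matrix (Fin n) (Fin n) R :=
  of fun i j => if (i : ℕ) = j then 0 else β (max (i : ℕ) (j : ℕ) + 1)

theorem seidelMatrix_transpose [Zero R] (n : ℕ) (β : ℕ → R) :
    (seidelMatrix n β)ᵀ = seidelMatrix n β := by
  ext i j
  simp only [seidelMatrix, transpose_apply, of_apply, eq_comm (a := (j : ℕ)), max_comm]

theorem tridiagonal_mul_seidelMatrix_mul_transpose [CommRing R] (n : ℕ) (β : ℕ → R) :
    tridiagonal n 1 (-1) 0 * seidelMatrix n β * (tridiagonal n 1 (-1) 0)ᵀ =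
      tridiagonal n (fun i => if i + 1 < n then -2 * β (i + 2) else 0) (fun i => β (i + 2))
        (fun i => β (i + 2)) := by
  let s : ℕ → ℕ → R := fun i j => if i = j then 0 else β (max i j + 1)
  let t : ℕ → ℕ → R := fun i j => s i j - if i + 1 < n then s (i + 1) j else 0
  have h_rows : tridiagonal n 1 (-1) 0 * seidelMatrix n β = of fun i j : Fin n => t i j :=
    tridiagonal_one_neg_one_mul_of n s
  rw [Matrix.mul_assoc, ← seidelMatrix_transpose, ← transpose_mul, h_rows,
    show (of fun i j : Fin n => t i j)ᵀ = of fun i j : Fin n => t j i from rfl,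
    tridiagonal_one_neg_one_mul_of n fun i j => t j i]
  ext ⟨i, hi⟩ ⟨j, hj⟩
  simp only [t, s, tridiagonal, tridiagEntry, of_apply]
  by_cases hi' : i + 1 < n <;> by_cases hj' : j + 1 < n <;>
  obtain h | rfl | rfl | rfl | h : j + 1 < i ∨ j + 1 = i ∨ j = i ∨ j = i + 1 ∨ i + 1 < j := by
    omega
  all_goals first
    | omega
    | (simp (disch := omega) only [if_pos, if_neg, if_true, max_eq_left, max_eq_right]; ring)

end Seidel

theorem stmt_2 (n : ℕ) (hn : 2 ≤ n) (β : ℕ → ℝ)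
    (hβ : ∀ i, 1 ≤ i → i ≤ n → β i = 1 ∨ β i = -1)
    (S : Matrix (Fin n) (Fin n) ℝ)
    (hS : ∀ i j : Fin n, S i j = if i = j then 0 else β (max (i : ℕ) (j : ℕ) + 1))
    (d : ℕ → ℝ)
    (hd1 : d 1 = -2 * β 2)
    (hdi : ∀ i, 2 ≤ i → i ≤ n - 1 → d i = -2 * β (i + 1) - 1 / d (i - 1))
    (hdn : d n = -1 / d (n - 1))
    (hne : ∀ i, 1 ≤ i → i ≤ n - 1 → d i ≠ 0) :
    S.det = ∏ i ∈ Finset.Icc 1 n, d i := by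
  have hS_eq : S = seidelMatrix n β := by
    ext i j
    simp [hS, seidelMatrix, Fin.ext_iff]
  have hβ_sq : ∀ i, 1 ≤ i → i ≤ n → β i * β i = 1 := fun i h₁ h₂ => by
    rcases hβ i h₁ h₂ with h | h <;> simp [h]
  have h_pivot : ∀ i, i + 1 < n → d (i + 2) =
      (if i + 1 + 1 < n then -2 * β (i + 1 + 2) else 0) - β (i + 2) * β (i + 2) / d (i + 1) := by
    intro i hi
    rw [hβ_sq (i + 2) (by omega) (by omega)]
    split_ifs with h
    · rw [hdi (i + 2) (by omega) (by omega), show i + 2 - 1 = i + 1 by omega]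
    · rw [show i + 2 = n by omega, hdn, show n - 1 = i + 1 by omega]
      ring
  calc S.det
      = (tridiagonal n 1 (-1) 0 * seidelMatrix n β * (tridiagonal n 1 (-1) 0)ᵀ).det := by
        simp [hS_eq, det_mul, det_tridiagonal_zero_subdiag]
    _ = ∏ i : Fin n, d (i + 1) := by
        rw [tridiagonal_mul_seidelMatrix_mul_transpose]
        refine det_tridiagonal_eq_prod_pivots _ _ _ _ ?_ h_pivot
          fun i hi => hne (i + 1) (by omega) (by omega)
        simp [hd1, show 1 < n by omega]
    _ = ∏ i ∈ Finset.Icc 1 n, d i := by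
        rw [Fin.prod_univ_eq_prod_range (fun i => d (i + 1)), Finset.range_eq_Ico,
          Finset.prod_Ico_add', zero_add, Finset.Ico_add_one_right_eq_Icc]
end

section
/- The Seidel quotient matrix Q_S is diagonalizable over ℝ; that is, there exists an invertible 2k×2k real matrix P such that P⁻¹·Q_S·P is a diagonal matrix. -/
open Polynomial Matrix

theorem stmt_3
    (k : ℕ) (hk : 1 ≤ k) (s t : ℕ → ℕ)
    (hs : ∀ i, 1 ≤ i → i ≤ k → 1 ≤ s i) (ht : ∀ i, 1 ≤ i → i ≤ k → 1 ≤ t i)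
    (c : ℕ → ℕ)
    (hc : ∀ i, 1 ≤ i → i ≤ k → c (2 * i - 1) = s i ∧ c (2 * i) = t i)
    (Q : Matrix (Fin (2 * k)) (Fin (2 * k)) ℝ)
    (hQ : ∀ p q : Fin (2 * k), Q p q = if p = q
      then (-1 : ℝ) ^ (p : ℕ) * ((c ((p : ℕ) + 1) : ℝ) - 1)
      else (-1 : ℝ) ^ (max (p : ℕ) (q : ℕ)) * (c ((q : ℕ) + 1) : ℝ)) :
    ∃ P : Matrix (Fin (2 * k)) (Fin (2 * k)) ℝ,
      IsUnit P ∧ (P⁻¹ * Q * P).IsDiag := by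
  -- positivity of block sizes
  have cpos : ∀ p : Fin (2 * k), 0 < c ((p : ℕ) + 1) := by
    intro p
    have hp : (p : ℕ) + 1 ≤ 2 * k := p.2
    have hp' : (p : ℕ) < 2 * k := p.2
    rcases Nat.even_or_odd ((p : ℕ) + 1) with ⟨m, hm⟩ | ⟨m, hm⟩
    · have hm1 : 1 ≤ m := by omega
      have hm2 : m ≤ k := by omega
      have := (hc m hm1 hm2).2
      have : c ((p : ℕ) + 1) = t m := by rw [show (p : ℕ) + 1 = 2 * m by omega]; exact this
      rw [this]; exact ht m hm1 hm2
    · have hm1 : 1 ≤ m + 1 := by omega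
      have hm2 : m + 1 ≤ k := by omega
      have := (hc (m + 1) hm1 hm2).1
      have : c ((p : ℕ) + 1) = s (m + 1) := by
        rw [show (p : ℕ) + 1 = 2 * (m + 1) - 1 by omega]; exact this
      rw [this]; exact hs (m + 1) hm1 hm2
  set d : Fin (2 * k) → ℝ := fun p => Real.sqrt (c ((p : ℕ) + 1)) with hd
  have dpos : ∀ p, 0 < d p := fun p =>
    Real.sqrt_pos.mpr (by exact_mod_cast cpos p)
  have dsq : ∀ p, d p * d p = (c ((p : ℕ) + 1) : ℝ) := fun p =>
    Real.mul_self_sqrt (by exact_mod_cast (cpos p).le)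
  set E : Matrix (Fin (2 * k)) (Fin (2 * k)) ℝ := Matrix.diagonal d with hE
  set E' : Matrix (Fin (2 * k)) (Fin (2 * k)) ℝ := Matrix.diagonal (fun p => (d p)⁻¹) with hE'
  have hEE' : E * E' = 1 := by
    rw [hE, hE', Matrix.diagonal_mul_diagonal]
    rw [show (fun i => d i * (d i)⁻¹) = fun _ => (1 : ℝ) from
      funext fun i => mul_inv_cancel₀ (dpos i).ne', Matrix.diagonal_one]
  have hE'E : E' * E = 1 := by
    rw [hE, hE', Matrix.diagonal_mul_diagonal]
    rw [show (fun i => (d i)⁻¹ * d i) = fun _ => (1 : ℝ) from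
      funext fun i => inv_mul_cancel₀ (dpos i).ne', Matrix.diagonal_one]
  set S : Matrix (Fin (2 * k)) (Fin (2 * k)) ℝ := E * Q * E' with hSdef
  have hSentry : ∀ p q, S p q = d p * Q p q * (d q)⁻¹ := by
    intro p q
    rw [hSdef, hE, hE', Matrix.mul_diagonal, Matrix.diagonal_mul]
  have hS : S.IsHermitian := by
    rw [Matrix.IsHermitian]
    ext p q
    simp only [Matrix.conjTranspose_apply, star_trivial]
    rw [hSentry, hSentry]
    by_cases hpq : p = q
    · subst hpq; ring
    · rw [hQ q p, hQ p q, if_neg (Ne.symm hpq), if_neg hpq, max_comm]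
      have h1 : (c ((p : ℕ) + 1) : ℝ) = d p * d p := (dsq p).symm
      have h2 : (c ((q : ℕ) + 1) : ℝ) = d q * d q := (dsq q).symm
      have key : ∀ a b : ℝ, a ≠ 0 → b ≠ 0 → ∀ e : ℝ,
          a * (e * (b * b)) * b⁻¹ = e * (a * b) := by
        intro a b ha hb e; field_simp
      rw [h1, h2, key _ _ (dpos p).ne' (dpos q).ne',
        key _ _ (dpos q).ne' (dpos p).ne']
      ring
  set U : Matrix (Fin (2 * k)) (Fin (2 * k)) ℝ := (hS.eigenvectorUnitary : Matrix (Fin (2 * k)) (Fin (2 * k)) ℝ) with hU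
  have hU1 : U * star U = 1 := Matrix.mem_unitaryGroup_iff.mp (hS.eigenvectorUnitary).2
  have hU2 : star U * U = 1 := Matrix.mem_unitaryGroup_iff'.mp (hS.eigenvectorUnitary).2
  set D : Matrix (Fin (2 * k)) (Fin (2 * k)) ℝ :=
    Matrix.diagonal (RCLike.ofReal ∘ hS.eigenvalues) with hD
  have hspec : S = U * D * star U := hS.spectral_theorem
  refine ⟨E' * U, ?_, ?_⟩
  · have h1 : (E' * U) * (star U * E) = 1 := by
      rw [Matrix.mul_assoc, ← Matrix.mul_assoc U, hU1, Matrix.one_mul, hE'E]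
    have h2 : (star U * E) * (E' * U) = 1 := mul_eq_one_comm.mp h1
    exact ⟨⟨E' * U, star U * E, h1, h2⟩, rfl⟩
  · have hinv : (E' * U)⁻¹ = star U * E := by
      apply Matrix.inv_eq_right_inv
      rw [Matrix.mul_assoc, ← Matrix.mul_assoc U, hU1, Matrix.one_mul, hE'E]
    rw [hinv]
    have : star U * E * Q * (E' * U) = star U * S * U := by
      rw [hSdef]; noncomm_ring
    rw [this, hspec]
    have : star U * (U * D * star U) * U = D := by
      rw [← Matrix.mul_assoc, ← Matrix.mul_assoc, hU2, Matrix.one_mul,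
        Matrix.mul_assoc, hU2, Matrix.mul_one]
    rw [this, hD]
    exact Matrix.isDiag_diagonal _
end

section
/- The number −1 is an eigenvalue of the Seidel quotient matrix Q_S if and only if t_k = 1; moreover, when t_k = 1 the eigenspace ker(Q_S + I) is one-dimensional, spanned by the vector (0,0,…,0,1,s_k)ᵀ ∈ ℝ^{2k}. -/
open Polynomial Matrix

lemma key5 (k : ℕ) (hk : 1 ≤ k) (s t : ℕ → ℕ)
    (hs : ∀ i, 1 ≤ i → i ≤ k → 1 ≤ s i) (ht : ∀ i, 1 ≤ i → i ≤ k → 1 ≤ t i)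
    (c : ℕ → ℕ)
    (hc : ∀ i, 1 ≤ i → i ≤ k → c (2 * i - 1) = s i ∧ c (2 * i) = t i)
    (Q : Matrix (Fin (2 * k)) (Fin (2 * k)) ℝ)
    (hQ : ∀ p q : Fin (2 * k), Q p q = if p = q
      then (-1 : ℝ) ^ (p : ℕ) * ((c ((p : ℕ) + 1) : ℝ) - 1)
      else (-1 : ℝ) ^ (max (p : ℕ) (q : ℕ)) * (c ((q : ℕ) + 1) : ℝ))
    (X : Fin (2 * k) → ℝ) (hX : Q.mulVec X = (-1 : ℝ) • X) :
    (∀ p : Fin (2 * k), (p : ℕ) + 3 ≤ 2 * k → X p = 0) ∧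
    (s k : ℝ) * X ⟨2 * k - 2, by omega⟩ = (t k : ℝ) * X ⟨2 * k - 1, by omega⟩ ∧
    (1 - (t k : ℝ)) * X ⟨2 * k - 1, by omega⟩ = 0 := by
  set x : ℕ → ℝ := fun q => if h : q < 2 * k then X ⟨q, h⟩ else 0 with hxdef
  have hxX : ∀ (q : ℕ) (h : q < 2 * k), x q = X ⟨q, h⟩ := fun q h => dif_pos h
  set S : ℕ → ℝ := fun j => ∑ q ∈ Finset.Ico j (2 * k), (-1 : ℝ) ^ q * (c (q + 1) : ℝ) * x q
    with hSdef
  set A : ℕ → ℝ := fun p => ∑ q ∈ Finset.range p, (c (q + 1) : ℝ) * x q with hAdef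
  have hSn : S (2 * k) = 0 := by simp [hSdef]
  have hSstep : ∀ j, j < 2 * k →
      S j = (-1 : ℝ) ^ j * (c (j + 1) : ℝ) * x j + S (j + 1) := by
    intro j hj
    simp only [hSdef]
    rw [Finset.sum_eq_sum_Ico_succ_bot hj]
  have hAstep : ∀ p, A (p + 1) = A p + (c (p + 1) : ℝ) * x p := by
    intro p; simp [hAdef, Finset.sum_range_succ]
  have hrow : ∀ p, ∀ hp : p < 2 * k,
      (-1 : ℝ) ^ p * A p + (-1 : ℝ) ^ p * ((c (p + 1) : ℝ) - 1) * x p + x p + S (p + 1) = 0 := by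
    intro p hp
    have h0 : (Q.mulVec X) ⟨p, hp⟩ = ((-1 : ℝ) • X) ⟨p, hp⟩ := by rw [hX]
    simp only [Matrix.mulVec, dotProduct, Pi.smul_apply, smul_eq_mul] at h0
    have hsum : ∑ q : Fin (2 * k), Q ⟨p, hp⟩ q * X q
        = ∑ q ∈ Finset.range (2 * k),
            (if p = q then (-1 : ℝ) ^ p * ((c (p + 1) : ℝ) - 1)
             else (-1 : ℝ) ^ (max p q) * (c (q + 1) : ℝ)) * x q := by
      rw [← Fin.sum_univ_eq_sum_range]
      refine Finset.sum_congr rfl fun q _ => ?_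
      rw [hQ]
      have : X q = x (q : ℕ) := by rw [hxX _ q.isLt]
      simp only [Fin.ext_iff]
      rw [this]
    rw [hsum] at h0
    rw [← Finset.sum_range_add_sum_Ico _ (Nat.succ_le_of_lt hp), Finset.sum_range_succ] at h0
    have e1 : ∑ q ∈ Finset.range p,
        (if p = q then (-1 : ℝ) ^ p * ((c (p + 1) : ℝ) - 1)
         else (-1 : ℝ) ^ (max p q) * (c (q + 1) : ℝ)) * x q = (-1 : ℝ) ^ p * A p := by
      rw [hAdef, Finset.mul_sum]
      refine Finset.sum_congr rfl fun q hq => ?_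
      rw [Finset.mem_range] at hq
      rw [if_neg (by omega), max_eq_left (by omega)]
      ring
    have e3 : ∑ q ∈ Finset.Ico (p + 1) (2 * k),
        (if p = q then (-1 : ℝ) ^ p * ((c (p + 1) : ℝ) - 1)
         else (-1 : ℝ) ^ (max p q) * (c (q + 1) : ℝ)) * x q = S (p + 1) := by
      rw [hSdef]
      refine Finset.sum_congr rfl fun q hq => ?_
      rw [Finset.mem_Ico] at hq
      rw [if_neg (by omega), max_eq_right (by omega)]
    rw [e1, e3, if_pos rfl] at h0
    have hxp : X ⟨p, hp⟩ = x p := (hxX p hp).symm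
    rw [hxp] at h0
    linarith
  have hpe : ∀ m : ℕ, (-1 : ℝ) ^ (2 * m) = 1 := by
    intro m; rw [pow_mul]; norm_num
  have hpo : ∀ m : ℕ, (-1 : ℝ) ^ (2 * m + 1) = -1 := by
    intro m; rw [pow_succ, hpe]; norm_num
  -- even combination
  have hE : ∀ j, 2 * j + 1 < 2 * k →
      (1 - (c (2 * j + 2) : ℝ)) * x (2 * j + 1) + S (2 * j + 2) = 0 := by
    intro j hj
    have h1 := hrow (2 * j) (by omega)
    have h2 := hrow (2 * j + 1) hj
    have hA1 := hAstep (2 * j)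
    have hS1 := hSstep (2 * j + 1) hj
    rw [hpe] at h1
    rw [hpo, hA1] at h2
    rw [hpo] at hS1
    rw [hS1] at h1
    linarith
  -- odd combination
  have hO : ∀ j, 2 * j + 2 < 2 * k → x (2 * j + 1) + S (2 * j + 2) = 0 := by
    intro j hj
    have h1 := hrow (2 * j + 1) (by omega)
    have h2 := hrow (2 * j + 2) hj
    have hA1 := hAstep (2 * j + 1)
    have hS1 := hSstep (2 * j + 2) hj
    rw [hpo] at h1
    have h22 : 2 * j + 2 = 2 * (j + 1) := by ring
    rw [h22, hpe] at h2
    rw [h22, hpe] at hS1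
    rw [← h22] at h2 hS1
    rw [hA1] at h2
    rw [hS1] at h1
    rw [show 2 * j + 1 + 1 = 2 * j + 2 from rfl] at h1
    linarith
  -- odd entries vanish, even tails vanish
  have hOz : ∀ j, 2 * j + 2 < 2 * k → x (2 * j + 1) = 0 ∧ S (2 * j + 2) = 0 := by
    intro j hj
    have h1 := hE j (by omega)
    have h2 := hO j hj
    have htc : 1 ≤ c (2 * j + 2) := by
      have h1 := (hc (j + 1) (by omega) (by omega)).2
      have h2 := ht (j + 1) (by omega) (by omega)
      rw [show 2 * (j + 1) = 2 * j + 2 from by ring] at h1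
      omega
    have hcc : (1 : ℝ) ≤ (c (2 * j + 2) : ℝ) := by exact_mod_cast htc
    have hx1 : (c (2 * j + 2) : ℝ) * x (2 * j + 1) = 0 := by linarith
    have hx0 : x (2 * j + 1) = 0 := by
      rcases mul_eq_zero.mp hx1 with h | h
      · linarith
      · exact h
    exact ⟨hx0, by linarith⟩
  have hEz : ∀ j, 1 ≤ j → 2 * j + 2 < 2 * k → x (2 * j) = 0 := by
    intro j hj1 hj
    obtain ⟨hx1, hS2⟩ := hOz j hj
    obtain ⟨hx1', hS2'⟩ := hOz (j - 1) (by omega)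
    have hSj : S (2 * j) = 0 := by
      have : 2 * (j - 1) + 2 = 2 * j := by omega
      rwa [this] at hS2'
    have hs1 := hSstep (2 * j) (by omega)
    have hs2 := hSstep (2 * j + 1) (by omega)
    rw [hpe] at hs1
    rw [hpo] at hs2
    rw [show 2 * j + 1 + 1 = 2 * j + 2 from rfl] at hs2
    rw [hs2, hx1, hS2, hSj] at hs1
    have hsc : 1 ≤ c (2 * j + 1) := by
      have h1 := (hc (j + 1) (by omega) (by omega)).1
      have h2 := hs (j + 1) (by omega) (by omega)
      have : 2 * (j + 1) - 1 = 2 * j + 1 := by omega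
      rw [this] at h1
      omega
    have hcc : (1 : ℝ) ≤ (c (2 * j + 1) : ℝ) := by exact_mod_cast hsc
    have : (c (2 * j + 1) : ℝ) * x (2 * j) = 0 := by linarith
    rcases mul_eq_zero.mp this with h | h
    · linarith
    · exact h
  have hck := hc k hk le_rfl
  -- middle entries vanish
  have hmid : ∀ q, q + 3 ≤ 2 * k → x q = 0 := by
    intro q hq
    rcases Nat.even_or_odd q with ⟨j, hje⟩ | ⟨j, hjo⟩
    · rcases Nat.eq_zero_or_pos j with rfl | hj1
      · -- q = 0, k ≥ 2
        have hk2 : 2 ≤ k := by omega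
        have h0 := hrow 0 (by omega)
        have hA0 : A 0 = 0 := by simp [hAdef]
        have hS1 := hSstep 1 (by omega)
        obtain ⟨hx1, hS2⟩ := hOz 0 (by omega)
        rw [show 2 * 0 + 1 = 1 from rfl] at hx1
        rw [show 2 * 0 + 2 = 2 from rfl] at hS2
        rw [hx1, hS2] at hS1
        rw [hA0, hS1, pow_zero] at h0
        have hsc : 1 ≤ c 1 := by
          have h1 := (hc 1 (by omega) (by omega)).1
          have h2 := hs 1 (by omega) (by omega)
          norm_num at h1
          omega
        have hcc : (1 : ℝ) ≤ (c 1 : ℝ) := by exact_mod_cast hsc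
        have hprod : (c 1 : ℝ) * x 0 = 0 := by simp at h0; linarith
        rcases mul_eq_zero.mp hprod with h | h
        · linarith
        · rw [hje]; simpa using h
      · have := hEz j hj1 (by omega)
        rw [hje, ← two_mul]; exact this
    · have := (hOz j (by omega)).1
      rw [hjo]; exact this
  -- final relation 1
  have hfin1 : (1 - (t k : ℝ)) * x (2 * k - 1) = 0 := by
    have h1 := hE (k - 1) (by omega)
    rw [show 2 * (k - 1) + 2 = 2 * k from by omega, show 2 * (k - 1) + 1 = 2 * k - 1 from by omega,
      hSn, hck.2] at h1
    linarith
  -- final relation 2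
  have hfin2 : (s k : ℝ) * x (2 * k - 2) = (t k : ℝ) * x (2 * k - 1) := by
    rcases Nat.lt_or_ge k 2 with hk1 | hk2
    · have hk1' : k = 1 := by omega
      subst hk1'
      have h0 := hrow 0 (by omega)
      have hA0 : A 0 = 0 := by simp [hAdef]
      have hS1 := hSstep 1 (by omega)
      rw [show (1 : ℕ) + 1 = 2 * 1 from rfl, hSn] at hS1
      rw [hA0, hS1, pow_zero] at h0
      have hc1 : c 1 = s 1 := by simpa using (hc 1 le_rfl le_rfl).1
      have hc2 : (c (1 + 1) : ℝ) = (t 1 : ℝ) := by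
        have := (hc 1 le_rfl le_rfl).2; norm_num at this ⊢; exact_mod_cast this
      have hx0 : x (2 * 1 - 2) = x 0 := rfl
      have hx1 : x (2 * 1 - 1) = x 1 := rfl
      rw [hx0, hx1]
      rw [show (0 : ℕ) + 1 = 1 from rfl, hc1, pow_one] at h0
      rw [hc2] at h0
      linarith
    · have hS2 : S (2 * k - 2) = 0 := by
        have := (hOz (k - 2) (by omega)).2
        rwa [show 2 * (k - 2) + 2 = 2 * k - 2 from by omega] at this
      have hs1 := hSstep (2 * k - 2) (by omega)
      have hs2 := hSstep (2 * k - 1) (by omega)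
      rw [show 2 * k - 2 = 2 * (k - 1) from by omega, hpe,
        show 2 * (k - 1) + 1 = 2 * k - 1 from by omega,
        show 2 * (k - 1) = 2 * k - 2 from by omega] at hs1
      rw [show 2 * k - 1 = 2 * (k - 1) + 1 from by omega, hpo,
        show 2 * (k - 1) + 1 + 1 = 2 * k from by omega,
        show 2 * (k - 1) + 1 = 2 * k - 1 from by omega, hSn] at hs2
      rw [hs2, hS2, hck.1, hck.2] at hs1
      linarith
  refine ⟨?_, ?_, ?_⟩
  · intro p hp
    have := hmid p hp
    rwa [hxX _ p.isLt] at this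
  · rw [← hxX _ (by omega : 2 * k - 2 < 2 * k), ← hxX _ (by omega : 2 * k - 1 < 2 * k)]
    exact hfin2
  · rw [← hxX _ (by omega : 2 * k - 1 < 2 * k)]
    exact hfin1

lemma eig5 (k : ℕ) (hk : 1 ≤ k) (s t : ℕ → ℕ)
    (c : ℕ → ℕ)
    (hc : ∀ i, 1 ≤ i → i ≤ k → c (2 * i - 1) = s i ∧ c (2 * i) = t i)
    (Q : Matrix (Fin (2 * k)) (Fin (2 * k)) ℝ)
    (hQ : ∀ p q : Fin (2 * k), Q p q = if p = q
      then (-1 : ℝ) ^ (p : ℕ) * ((c ((p : ℕ) + 1) : ℝ) - 1)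
      else (-1 : ℝ) ^ (max (p : ℕ) (q : ℕ)) * (c ((q : ℕ) + 1) : ℝ))
    (htk : t k = 1) :
    Q.mulVec (fun p : Fin (2 * k) =>
        if (p : ℕ) + 2 = 2 * k then (1 : ℝ)
        else if (p : ℕ) + 1 = 2 * k then (s k : ℝ) else 0)
      = (-1 : ℝ) • (fun p : Fin (2 * k) =>
        if (p : ℕ) + 2 = 2 * k then (1 : ℝ)
        else if (p : ℕ) + 1 = 2 * k then (s k : ℝ) else 0) := by
  have hi : 2 * k - 2 < 2 * k := by omega
  have hj : 2 * k - 1 < 2 * k := by omega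
  have hck := hc k hk le_rfl
  have hpe : (-1 : ℝ) ^ (2 * k - 2) = 1 := by
    rw [show 2 * k - 2 = 2 * (k - 1) from by omega, pow_mul]; norm_num
  have hpo : (-1 : ℝ) ^ (2 * k - 1) = -1 := by
    rw [show 2 * k - 1 = 2 * (k - 1) + 1 from by omega, pow_succ, pow_mul]; norm_num
  have hij : (⟨2 * k - 2, hi⟩ : Fin (2 * k)) ≠ ⟨2 * k - 1, hj⟩ := by
    simp only [ne_eq, Fin.mk.injEq]; omega
  funext p
  have hplt := p.isLt
  have hsplit : ∀ q : Fin (2 * k),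
      (if (q : ℕ) + 2 = 2 * k then (1 : ℝ) else if (q : ℕ) + 1 = 2 * k then (s k : ℝ) else 0)
      = (if q = ⟨2 * k - 2, hi⟩ then (1 : ℝ) else 0)
        + (if q = ⟨2 * k - 1, hj⟩ then (s k : ℝ) else 0) := by
    intro q
    have hq := q.isLt
    by_cases h2 : (q : ℕ) + 2 = 2 * k
    · rw [if_pos h2, if_pos (Fin.ext (show (q : ℕ) = 2 * k - 2 by omega)),
        if_neg (by simp only [ne_eq, Fin.ext_iff]; omega)]
      norm_num
    · rw [if_neg h2, if_neg (show ¬q = ⟨2 * k - 2, hi⟩ by simp only [Fin.ext_iff]; omega)]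
      by_cases h1 : (q : ℕ) + 1 = 2 * k
      · rw [if_pos h1, if_pos (Fin.ext (show (q : ℕ) = 2 * k - 1 by omega))]
        norm_num
      · rw [if_neg h1, if_neg (show ¬q = ⟨2 * k - 1, hj⟩ by simp only [Fin.ext_iff]; omega)]
        norm_num
  have hmv : (Q.mulVec (fun p : Fin (2 * k) =>
        if (p : ℕ) + 2 = 2 * k then (1 : ℝ)
        else if (p : ℕ) + 1 = 2 * k then (s k : ℝ) else 0)) p
      = Q p ⟨2 * k - 2, hi⟩ + Q p ⟨2 * k - 1, hj⟩ * (s k : ℝ) := by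
    simp only [Matrix.mulVec, dotProduct]
    simp only [hsplit, mul_add, Finset.sum_add_distrib, mul_ite, mul_one, mul_zero,
      Finset.sum_ite_eq', Finset.mem_univ, if_true]
  rw [hmv]
  simp only [Pi.smul_apply, smul_eq_mul]
  by_cases hp2 : (p : ℕ) + 2 = 2 * k
  · have hpi : p = ⟨2 * k - 2, hi⟩ := Fin.ext (show (p : ℕ) = 2 * k - 2 by omega)
    rw [hpi, hQ, hQ, if_pos rfl, if_neg hij]
    simp only [Fin.val_mk]
    rw [if_pos (show (2 * k - 2 : ℕ) + 2 = 2 * k by omega)]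
    rw [max_eq_right (show 2 * k - 2 ≤ 2 * k - 1 by omega)]
    rw [show (2 * k - 2 : ℕ) + 1 = 2 * k - 1 from by omega,
      show (2 * k - 1 : ℕ) + 1 = 2 * k from by omega, hck.1, hck.2, htk, hpe, hpo]
    push_cast
    ring
  · by_cases hp1 : (p : ℕ) + 1 = 2 * k
    · have hpj : p = ⟨2 * k - 1, hj⟩ := Fin.ext (show (p : ℕ) = 2 * k - 1 by omega)
      rw [hpj, hQ, hQ,
        if_neg (show ¬(⟨2 * k - 1, hj⟩ : Fin (2 * k)) = ⟨2 * k - 2, hi⟩ from fun h => hij h.symm),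
        if_pos rfl]
      simp only [Fin.val_mk]
      rw [if_neg (show ¬(2 * k - 1 : ℕ) + 2 = 2 * k by omega),
        if_pos (show (2 * k - 1 : ℕ) + 1 = 2 * k by omega)]
      rw [max_eq_left (show 2 * k - 2 ≤ 2 * k - 1 by omega)]
      rw [show (2 * k - 2 : ℕ) + 1 = 2 * k - 1 from by omega,
        show (2 * k - 1 : ℕ) + 1 = 2 * k from by omega, hck.1, hck.2, htk, hpo]
      push_cast
      ring
    · rw [hQ, hQ,
        if_neg (show ¬p = ⟨2 * k - 2, hi⟩ by
          intro h; exact hp2 (by rw [h]; simp only [Fin.val_mk]; omega)),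
        if_neg (show ¬p = ⟨2 * k - 1, hj⟩ by
          intro h; exact hp1 (by rw [h]; simp only [Fin.val_mk]; omega))]
      simp only [Fin.val_mk]
      rw [if_neg hp2, if_neg hp1]
      rw [max_eq_right (show (p : ℕ) ≤ 2 * k - 2 by omega),
        max_eq_right (show (p : ℕ) ≤ 2 * k - 1 by omega)]
      rw [show (2 * k - 2 : ℕ) + 1 = 2 * k - 1 from by omega,
        show (2 * k - 1 : ℕ) + 1 = 2 * k from by omega, hck.1, hck.2, htk, hpe, hpo]
      push_cast
      ring

theorem stmt_5
    (k : ℕ) (hk : 1 ≤ k) (s t : ℕ → ℕ)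
    (hs : ∀ i, 1 ≤ i → i ≤ k → 1 ≤ s i) (ht : ∀ i, 1 ≤ i → i ≤ k → 1 ≤ t i)
    (c : ℕ → ℕ)
    (hc : ∀ i, 1 ≤ i → i ≤ k → c (2 * i - 1) = s i ∧ c (2 * i) = t i)
    (Q : Matrix (Fin (2 * k)) (Fin (2 * k)) ℝ)
    (hQ : ∀ p q : Fin (2 * k), Q p q = if p = q
      then (-1 : ℝ) ^ (p : ℕ) * ((c ((p : ℕ) + 1) : ℝ) - 1)
      else (-1 : ℝ) ^ (max (p : ℕ) (q : ℕ)) * (c ((q : ℕ) + 1) : ℝ)) :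
    ((∃ X : Fin (2 * k) → ℝ, X ≠ 0 ∧ Q.mulVec X = (-1 : ℝ) • X) ↔ t k = 1) ∧
    (t k = 1 → ∀ X : Fin (2 * k) → ℝ, Q.mulVec X = (-1 : ℝ) • X ↔
      ∃ a : ℝ, X = a • (fun p : Fin (2 * k) =>
        if (p : ℕ) + 2 = 2 * k then (1 : ℝ)
        else if (p : ℕ) + 1 = 2 * k then (s k : ℝ) else 0)) := by
  have hi : 2 * k - 2 < 2 * k := by omega
  have hj : 2 * k - 1 < 2 * k := by omega
  constructor
  · constructor
    · rintro ⟨X, hX0, hX⟩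
      by_contra htk
      obtain ⟨hmid, hfin2, hfin1⟩ := key5 k hk s t hs ht c hc Q hQ X hX
      have htk1 : (t k : ℝ) ≠ 1 := fun h => htk (by exact_mod_cast h)
      have hx1 : X ⟨2 * k - 1, hj⟩ = 0 := by
        rcases mul_eq_zero.mp hfin1 with h | h
        · exact absurd (by linarith : (t k : ℝ) = 1) htk1
        · exact h
      have hx2 : X ⟨2 * k - 2, hi⟩ = 0 := by
        rw [hx1, mul_zero] at hfin2
        have hsk : (1 : ℝ) ≤ (s k : ℝ) := by exact_mod_cast hs k hk le_rfl
        rcases mul_eq_zero.mp hfin2 with h | h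
        · linarith
        · exact h
      apply hX0
      funext p
      show X p = 0
      by_cases h3 : (p : ℕ) + 3 ≤ 2 * k
      · exact hmid p h3
      · by_cases h2 : (p : ℕ) = 2 * k - 2
        · rw [show p = ⟨2 * k - 2, hi⟩ from Fin.ext h2]; exact hx2
        · have hpe : (p : ℕ) = 2 * k - 1 := by have := p.isLt; omega
          rw [show p = ⟨2 * k - 1, hj⟩ from Fin.ext hpe]; exact hx1
    · intro htk
      refine ⟨_, ?_, eig5 k hk s t c hc Q hQ htk⟩
      intro h
      have h1 := congrFun h ⟨2 * k - 2, hi⟩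
      simp only [Pi.zero_apply, Fin.val_mk] at h1
      rw [if_pos (show 2 * k - 2 + 2 = 2 * k by omega)] at h1
      exact one_ne_zero h1
  · intro htk X
    constructor
    · intro hX
      obtain ⟨hmid, hfin2, hfin1⟩ := key5 k hk s t hs ht c hc Q hQ X hX
      refine ⟨X ⟨2 * k - 2, hi⟩, ?_⟩
      funext p
      simp only [Pi.smul_apply, smul_eq_mul]
      by_cases hp2 : (p : ℕ) + 2 = 2 * k
      · rw [if_pos hp2, mul_one, show p = ⟨2 * k - 2, hi⟩ from Fin.ext (show (p : ℕ) = 2 * k - 2 by omega)]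
      · rw [if_neg hp2]
        by_cases hp1 : (p : ℕ) + 1 = 2 * k
        · rw [if_pos hp1, show p = ⟨2 * k - 1, hj⟩ from Fin.ext (show (p : ℕ) = 2 * k - 1 by omega)]
          have htkr : (t k : ℝ) = 1 := by rw [htk]; norm_num
          rw [htkr, one_mul] at hfin2
          rw [← hfin2]; ring
        · rw [if_neg hp1, mul_zero]
          exact hmid p (by have := p.isLt; omega)
    · rintro ⟨a, rfl⟩
      rw [Matrix.mulVec_smul, eig5 k hk s t c hc Q hQ htk, smul_comm]
end

section
/- The number 1 is an eigenvalue of the Seidel quotient matrix Q_S if and only if s_1 = 1; moreover, when s_1 = 1 the eigenspace ker(Q_S − I) is one-dimensional, spanned by the vector (t_1,−1,0,…,0)ᵀ ∈ ℝ^{2k}. -/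
open Polynomial Matrix

theorem stmt_6
    (k : ℕ) (hk : 1 ≤ k) (s t : ℕ → ℕ)
    (hs : ∀ i, 1 ≤ i → i ≤ k → 1 ≤ s i) (ht : ∀ i, 1 ≤ i → i ≤ k → 1 ≤ t i)
    (c : ℕ → ℕ)
    (hc : ∀ i, 1 ≤ i → i ≤ k → c (2 * i - 1) = s i ∧ c (2 * i) = t i)
    (Q : Matrix (Fin (2 * k)) (Fin (2 * k)) ℝ)
    (hQ : ∀ p q : Fin (2 * k), Q p q = if p = q
      then (-1 : ℝ) ^ (p : ℕ) * ((c ((p : ℕ) + 1) : ℝ) - 1)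
      else (-1 : ℝ) ^ (max (p : ℕ) (q : ℕ)) * (c ((q : ℕ) + 1) : ℝ)) :
    ((∃ X : Fin (2 * k) → ℝ, X ≠ 0 ∧ Q.mulVec X = (1 : ℝ) • X) ↔ s 1 = 1) ∧
    (s 1 = 1 → ∀ X : Fin (2 * k) → ℝ, Q.mulVec X = (1 : ℝ) • X ↔
      ∃ a : ℝ, X = a • (fun p : Fin (2 * k) =>
        if (p : ℕ) = 0 then (t 1 : ℝ)
        else if (p : ℕ) = 1 then (-1 : ℝ) else 0)) := by
  classical
  have h0lt : (0:ℕ) < 2 * k := by omega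
  have h1lt : (1:ℕ) < 2 * k := by omega
  have hc1 : c 1 = s 1 := by have := (hc 1 le_rfl hk).1; simpa using this
  have hc2 : c 2 = t 1 := by have := (hc 1 le_rfl hk).2; simpa using this
  have ht1 : 1 ≤ t 1 := ht 1 le_rfl hk
  have hs1ge : 1 ≤ s 1 := hs 1 le_rfl hk
  set v : Fin (2*k) → ℝ := fun p : Fin (2*k) =>
    if (p : ℕ) = 0 then (t 1 : ℝ) else if (p : ℕ) = 1 then (-1 : ℝ) else 0 with hv
  -- v is nonzero
  have hvne : v ≠ 0 := by
    intro h
    have := congrFun h ⟨0, h0lt⟩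
    simp only [hv, Pi.zero_apply] at this
    norm_num at this
    omega
  -- v is an eigenvector when s 1 = 1
  have hvec : s 1 = 1 → Q.mulVec v = v := by
    intro hs1
    funext p
    have hsum : Q.mulVec v p = Q p ⟨0,h0lt⟩ * v ⟨0,h0lt⟩ + Q p ⟨1,h1lt⟩ * v ⟨1,h1lt⟩ := by
      rw [Matrix.mulVec, dotProduct]
      rw [← Finset.sum_subset (Finset.subset_univ ({⟨0,h0lt⟩, ⟨1,h1lt⟩} : Finset (Fin (2*k))))]
      · rw [Finset.sum_pair (by simp [Fin.ext_iff] : (⟨0,h0lt⟩ : Fin (2*k)) ≠ ⟨1,h1lt⟩)]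
      · intro q _ hq
        simp only [Finset.mem_insert, Finset.mem_singleton] at hq
        push_neg at hq
        have h0 : (q:ℕ) ≠ 0 := fun h => hq.1 (Fin.ext h)
        have h1 : (q:ℕ) ≠ 1 := fun h => hq.2 (Fin.ext h)
        simp [hv, h0, h1]
    have hv0 : v ⟨0,h0lt⟩ = (t 1:ℝ) := by simp [hv]
    have hv1 : v ⟨1,h1lt⟩ = -1 := by simp [hv]
    rw [hsum, hv0, hv1, hQ, hQ]
    rcases (show (p:ℕ) = 0 ∨ (p:ℕ) = 1 ∨ 2 ≤ (p:ℕ) by omega) with hp | hp | hp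
    · have hp0 : p = ⟨0,h0lt⟩ := Fin.ext hp
      subst hp0
      rw [if_pos rfl, if_neg (by simp [Fin.ext_iff])]
      simp only [hv, Fin.ext_iff]
      norm_num [hc1, hc2, hs1]
    · have hp0 : p = ⟨1,h1lt⟩ := Fin.ext hp
      subst hp0
      rw [if_neg (by simp [Fin.ext_iff]), if_pos rfl]
      simp only [hv, Fin.ext_iff]
      norm_num [hc1, hc2, hs1]
      ring
    · have hne0 : p ≠ ⟨0,h0lt⟩ := by intro h; rw [h] at hp; simp at hp
      have hne1 : p ≠ ⟨1,h1lt⟩ := by intro h; rw [h] at hp; simp at hp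
      rw [if_neg hne0, if_neg hne1]
      have hm0 : max (p:ℕ) ((⟨0,h0lt⟩ : Fin (2*k)):ℕ) = (p:ℕ) := by simp
      have hm1 : max (p:ℕ) ((⟨1,h1lt⟩ : Fin (2*k)):ℕ) = (p:ℕ) := by
        simp only []; omega
      rw [hm0, hm1]
      have hvp : v p = 0 := by
        simp only [hv]
        rw [if_neg (by omega), if_neg (by omega)]
      rw [hvp]
      have : ((⟨0,h0lt⟩ : Fin (2*k)):ℕ) = 0 := rfl
      rw [this]
      have : ((⟨1,h1lt⟩ : Fin (2*k)):ℕ) = 1 := rfl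
      rw [this]
      norm_num [hc1, hc2, hs1]
  -- the key structural lemma
  have key : ∀ X : Fin (2*k) → ℝ, Q.mulVec X = X →
      ((c 1 : ℝ) - 1) * X ⟨0, h0lt⟩ = 0 ∧
      (c 1 : ℝ) * X ⟨0, h0lt⟩ + (c 2 : ℝ) * X ⟨1, h1lt⟩ = 0 ∧
      ∀ p : Fin (2*k), 2 ≤ (p : ℕ) → X p = 0 := by
    intro X hX
    set X' : ℕ → ℝ := fun q => if h : q < 2*k then X ⟨q, h⟩ else 0 with hX'
    set S : ℕ → ℝ := fun n => ∑ q ∈ Finset.range n, (c (q+1) : ℝ) * X' q with hSdef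
    set f : ℕ → ℕ → ℝ := fun p q =>
      (if p = q then (-1:ℝ)^p * ((c (p+1):ℝ) - 1) else (-1:ℝ)^(max p q) * (c (q+1):ℝ)) * X' q
      with hf
    have hXval : ∀ q : Fin (2*k), X q = X' (q:ℕ) := by
      intro q; simp [hX', q.isLt]
    have hS1 : ∀ n, S (n+1) = S n + (c (n+1):ℝ) * X' n := by
      intro n; simp only [hSdef]; rw [Finset.sum_range_succ]
    have hS0 : S 0 = 0 := by simp [hSdef]
    have hE : ∀ p, p < 2*k → ∑ q ∈ Finset.range (2*k), f p q = X' p := by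
      intro p hp
      have h1 := congrFun hX ⟨p, hp⟩
      rw [Matrix.mulVec, dotProduct] at h1
      have h2 : ∀ q : Fin (2*k), Q ⟨p,hp⟩ q * X q = f p (q:ℕ) := by
        intro q
        rw [hQ, hXval]
        simp only [hf]
        rcases eq_or_ne p (q:ℕ) with h | h
        · rw [if_pos (Fin.ext h : (⟨p,hp⟩ : Fin (2*k)) = q), if_pos h]
        · rw [if_neg (fun hh => h (congrArg Fin.val hh)), if_neg h]
      calc ∑ q ∈ Finset.range (2*k), f p q
          = ∑ q : Fin (2*k), f p (q:ℕ) := (Fin.sum_univ_eq_sum_range (f p) (2*k)).symm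
        _ = ∑ q : Fin (2*k), Q ⟨p,hp⟩ q * X q := Finset.sum_congr rfl fun q _ => (h2 q).symm
        _ = X ⟨p,hp⟩ := h1
        _ = X' p := hXval ⟨p,hp⟩
    have hhead : ∀ p m, m ≤ p → ∑ q ∈ Finset.range m, f p q = (-1:ℝ)^p * S m := by
      intro p m hm
      simp only [hSdef, Finset.mul_sum]
      refine Finset.sum_congr rfl fun q hq => ?_
      have hq' : q < m := Finset.mem_range.mp hq
      simp only [hf]
      rw [if_neg (by omega), max_eq_left (by omega)]
      ring
    have htail : ∀ p, ∑ q ∈ Finset.Ico (p+2) (2*k), f p q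
        = ∑ q ∈ Finset.Ico (p+2) (2*k), f (p+1) q := by
      intro p
      refine Finset.sum_congr rfl fun q hq => ?_
      have hq' := (Finset.mem_Ico.mp hq).1
      simp only [hf]
      rw [if_neg (by omega), if_neg (by omega), max_eq_right (by omega),
        max_eq_right (by omega)]
    have hAB : ∀ p, p + 1 < 2*k →
        (-1:ℝ)^p * (2*S p + (2*(c (p+1):ℝ) - 1)*X' p - X' (p+1)) = X' p - X' (p+1) := by
      intro p hp
      have e1 := hE p (by omega)
      have e2 := hE (p+1) hp
      rw [← Finset.sum_range_add_sum_Ico (f p) (show p+2 ≤ 2*k by omega),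
        Finset.sum_range_succ, Finset.sum_range_succ, hhead p p le_rfl] at e1
      rw [← Finset.sum_range_add_sum_Ico (f (p+1)) (show p+2 ≤ 2*k by omega),
        Finset.sum_range_succ, Finset.sum_range_succ, hhead (p+1) p (by omega),
        ← htail p] at e2
      have d1 : f p p = (-1:ℝ)^p * ((c (p+1):ℝ) - 1) * X' p := by
        simp only [hf]; norm_num
      have d2 : f p (p+1) = -((-1:ℝ)^p * (c (p+2):ℝ) * X' (p+1)) := by
        simp only [hf]; rw [if_neg (by omega), max_eq_right (by omega), pow_succ]; ring
      have d3 : f (p+1) p = -((-1:ℝ)^p * (c (p+1):ℝ) * X' p) := by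
        simp only [hf]; rw [if_neg (by omega), max_eq_left (by omega), pow_succ]; ring
      have d4 : f (p+1) (p+1) = -((-1:ℝ)^p * ((c (p+2):ℝ) - 1) * X' (p+1)) := by
        simp only [hf]; norm_num [pow_succ]
      have e5 : (-1:ℝ)^(p+1) = -(-1:ℝ)^p := by rw [pow_succ]; ring
      rw [d1, d2] at e1
      rw [d3, d4, e5] at e2
      linear_combination e1 - e2
    have hA : ∀ j, j < k → S (2*j+1) = X' (2*j) := by
      intro j hj
      have h := hAB (2*j) (by omega)
      have he : (-1:ℝ)^(2*j) = 1 := by rw [pow_mul]; norm_num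
      rw [he] at h
      rw [hS1]
      linear_combination h / 2
    have hB : ∀ j, j+1 < k → S (2*j+2) = X' (2*j+2) := by
      intro j hj
      have h := hAB (2*j+1) (by omega)
      have he : (-1:ℝ)^(2*j+1) = -1 := by rw [pow_succ, pow_mul]; norm_num
      rw [he] at h
      have h22 : 2*j+2 = (2*j+1)+1 := by omega
      rw [h22, hS1]
      linear_combination -h / 2
    have hC : S (2*k) = 0 := by
      obtain ⟨p, hp⟩ : ∃ p, p + 1 = 2*k := ⟨2*k - 1, by omega⟩
      have e1 := hE p (by omega)
      rw [← hp, Finset.sum_range_succ, hhead p p le_rfl] at e1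
      have d1 : f p p = (-1:ℝ)^p * ((c (p+1):ℝ) - 1) * X' p := by
        simp only [hf]; norm_num
      have he : (-1:ℝ)^p = -1 := Odd.neg_one_pow ⟨k-1, by omega⟩
      rw [d1, he] at e1
      rw [← hp, hS1]
      linear_combination -e1
    have hBfull : ∀ j, 1 ≤ j → j ≤ k → S (2*j) = X' (2*j) := by
      intro j h1 h2
      rcases eq_or_lt_of_le h2 with rfl | hlt
      · have hx : X' (2*j) = 0 := by simp [hX']
        rw [hx]; exact hC
      · obtain ⟨i, rfl⟩ : ∃ i, j = i+1 := ⟨j-1, by omega⟩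
        have := hB i (by omega)
        have h22 : 2*(i+1) = 2*i+2 := by omega
        rw [h22]; exact this
    have hEZ : ∀ j, 1 ≤ j → j < k → X' (2*j) = 0 := by
      intro j h1 h2
      have ha := hA j h2
      have hb := hBfull j h1 (le_of_lt h2)
      have hs1' := hS1 (2*j)
      have hz : (c (2*j+1):ℝ) * X' (2*j) = 0 := by linarith [hs1', ha, hb]
      have hcval : c (2*j+1) = s (j+1) := by
        have := (hc (j+1) (by omega) (by omega)).1
        have h22 : 2*(j+1)-1 = 2*j+1 := by omega
        rwa [h22] at this
      have hpos : (0:ℝ) < (c (2*j+1):ℝ) := by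
        have : 1 ≤ s (j+1) := hs (j+1) (by omega) (by omega)
        exact_mod_cast by omega
      rcases mul_eq_zero.mp hz with h | h
      · exact absurd h (ne_of_gt hpos)
      · exact h
    have hSE : ∀ j, 1 ≤ j → j ≤ k → S (2*j) = 0 := by
      intro j h1 h2
      rcases eq_or_lt_of_le h2 with rfl | hlt
      · exact hC
      · rw [hBfull j h1 h2, hEZ j h1 hlt]
    have hOZ : ∀ j, 1 ≤ j → j < k → X' (2*j+1) = 0 := by
      intro j h1 h2
      have hs1' := hS1 (2*j+1)
      have hS2j2 : S (2*j+1+1) = 0 := by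
        have := hSE (j+1) (by omega) (by omega)
        have h22 : 2*(j+1) = 2*j+1+1 := by omega
        rwa [h22] at this
      have hS2j1 : S (2*j+1) = 0 := by rw [hA j h2, hEZ j h1 h2]
      have hz : (c (2*j+1+1):ℝ) * X' (2*j+1) = 0 := by linarith [hs1', hS2j2, hS2j1]
      have hcval : c (2*j+1+1) = t (j+1) := by
        have := (hc (j+1) (by omega) (by omega)).2
        have h22 : 2*(j+1) = 2*j+1+1 := by omega
        rwa [h22] at this
      have hpos : (0:ℝ) < (c (2*j+1+1):ℝ) := by
        have : 1 ≤ t (j+1) := ht (j+1) (by omega) (by omega)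
        exact_mod_cast by omega
      rcases mul_eq_zero.mp hz with h | h
      · exact absurd h (ne_of_gt hpos)
      · exact h
    have hX0 : X ⟨0, h0lt⟩ = X' 0 := hXval _
    have hX1 : X ⟨1, h1lt⟩ = X' 1 := hXval _
    have ha0 := hA 0 (by omega)
    have hS1' := hS1 0
    have hS2 : S 2 = 0 := by
      have := hSE 1 le_rfl hk
      have h22 : 2*1 = 2 := by omega
      rwa [h22] at this
    have hS2' := hS1 1
    refine ⟨?_, ?_, ?_⟩
    · rw [hX0]
      have : S 1 = (c 1:ℝ) * X' 0 := by rw [hS1' ] at ha0 ⊢; rw [hS0]; ring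
      rw [this] at ha0
      linear_combination ha0
    · rw [hX0, hX1]
      have e1 : S 1 = (c 1:ℝ) * X' 0 := by rw [hS1', hS0]; ring
      rw [e1] at hS2'
      rw [hS2] at hS2'
      linear_combination -hS2'
    · intro p hp
      rw [hXval]
      have hplt := p.isLt
      rcases Nat.even_or_odd (p:ℕ) with ⟨j, hj⟩ | ⟨j, hj⟩
      · rw [hj]
        have h22 : j + j = 2*j := by omega
        rw [h22]
        exact hEZ j (by omega) (by omega)
      · rw [hj]
        exact hOZ j (by omega) (by omega)
  -- assemble
  refine ⟨⟨?_, ?_⟩, ?_⟩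
  · rintro ⟨X, hX0, hX⟩
    rw [one_smul] at hX
    obtain ⟨k1, k2, k3⟩ := key X hX
    by_contra hs1
    apply hX0
    have hcne : (c 1 : ℝ) - 1 ≠ 0 := by
      intro h
      have : (c 1 : ℝ) = 1 := by linarith
      have : c 1 = 1 := by exact_mod_cast this
      exact hs1 (by omega)
    have hx0 : X ⟨0, h0lt⟩ = 0 := by
      rcases mul_eq_zero.mp k1 with h | h
      · exact absurd h hcne
      · exact h
    have hx1 : X ⟨1, h1lt⟩ = 0 := by
      rw [hx0] at k2
      have hz : (c 2 : ℝ) * X ⟨1, h1lt⟩ = 0 := by linarith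
      have hpos : (0:ℝ) < (c 2:ℝ) := by exact_mod_cast by omega
      rcases mul_eq_zero.mp hz with h | h
      · exact absurd h (ne_of_gt hpos)
      · exact h
    funext p
    show X p = 0
    rcases (show (p:ℕ) = 0 ∨ (p:ℕ) = 1 ∨ 2 ≤ (p:ℕ) by omega) with hp | hp | hp
    · rw [show p = ⟨0, h0lt⟩ from Fin.ext hp]; exact hx0
    · rw [show p = ⟨1, h1lt⟩ from Fin.ext hp]; exact hx1
    · exact k3 p hp
  · intro hs1
    exact ⟨v, hvne, by rw [one_smul]; exact hvec hs1⟩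
  · intro hs1 X
    constructor
    · intro hX
      rw [one_smul] at hX
      obtain ⟨k1, k2, k3⟩ := key X hX
      refine ⟨-(X ⟨1, h1lt⟩), ?_⟩
      funext p
      simp only [Pi.smul_apply, smul_eq_mul, hv]
      rcases (show (p:ℕ) = 0 ∨ (p:ℕ) = 1 ∨ 2 ≤ (p:ℕ) by omega) with hp | hp | hp
      · rw [if_pos hp, show p = ⟨0, h0lt⟩ from Fin.ext hp]
        have hcc : (c 1 : ℝ) = 1 := by rw [hc1, hs1]; norm_num
        rw [hcc] at k2
        have hcc2 : (c 2 : ℝ) = (t 1 : ℝ) := by rw [hc2]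
        rw [hcc2] at k2
        linear_combination k2
      · rw [if_neg (by omega), if_pos hp, show p = ⟨1, h1lt⟩ from Fin.ext hp]
        ring
      · rw [if_neg (by omega), if_neg (by omega), k3 p hp]
        ring
    · rintro ⟨a, rfl⟩
      rw [one_smul, Matrix.mulVec_smul, hvec hs1]
end

section
/- All eigenvalues of the Seidel quotient matrix Q_S are real and simple: the characteristic polynomial of Q_S has 2k distinct real roots (equivalently, Q_S has exactly 2k distinct real eigenvalues, each of algebraic multiplicity one). -/
/-!
`diag(c) * Q_S` is symmetric, so conjugating `Q_S` by `diag(√c)` gives a real symmetric matrix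
with the same characteristic polynomial: the eigenvalues are real, and each one is simple as soon
as its eigenspace is a line. Subtracting row `p + 2` from row `p` of `Q_S x = μ x` leaves the
three-term relation `(μ + ε_p) (x_p - x_{p+2}) = -2 ε_p c_{p+1} x_{p+1}`, and adding the last two
rows gives `(μ + 1) x_{2k-1} = (1 - μ - 2 c_{2k}) x_{2k}`. These relations (and, for `μ = -1`,
the first row) recover an eigenvector from a single coordinate, `x_2` if `μ = 1` and `x_{2k}`
otherwise, so every eigenspace is a line.
-/

open Polynomial Matrix

namespace Matrix.IsHermitian

variable {𝕜 n : Type*} [RCLike 𝕜] [Fintype n] [DecidableEq n] {A : Matrix n n 𝕜}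

theorem eigenvalues_injective (hA : A.IsHermitian)
    (h : ∀ μ : 𝕜, ∃ i₀, ∀ x, A *ᵥ x = μ • x → x i₀ = 0 → x = 0) :
    Function.Injective hA.eigenvalues := by
  intro i j hij
  by_contra hne
  set u := hA.eigenvectorBasis i
  set v := hA.eigenvectorBasis j
  obtain ⟨i₀, hi₀⟩ := h (hA.eigenvalues i)
  have hu : A *ᵥ u = (hA.eigenvalues i : 𝕜) • u := by
    rw [hA.mulVec_eigenvectorBasis, RCLike.real_smul_eq_coe_smul (K := 𝕜)]
  have hv : A *ᵥ v = (hA.eigenvalues i : 𝕜) • v := by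
    rw [hA.mulVec_eigenvectorBasis, hij, RCLike.real_smul_eq_coe_smul (K := 𝕜)]
  have hw : v i₀ • u - u i₀ • v = 0 := by
    refine WithLp.ofLp_injective _ (hi₀ _ ?_ ?_)
    · simp only [WithLp.ofLp_sub, WithLp.ofLp_smul, mulVec_sub, mulVec_smul, hu, hv, smul_sub,
        smul_comm (v i₀), smul_comm (u i₀)]
    · simp [mul_comm]
  have hON := hA.eigenvectorBasis.orthonormal
  have hui₀ : u i₀ = 0 := by
    simpa [inner_sub_right, inner_smul_right, hON.inner_eq_zero (Ne.symm hne), u, v]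
      using congrArg (inner 𝕜 v) hw
  have hu0 : (u : n → 𝕜) = 0 := hi₀ u hu hui₀
  exact hON.ne_zero i (WithLp.ofLp_injective _ hu0)

end Matrix.IsHermitian

namespace Matrix

variable {n : Type*} [Fintype n] [DecidableEq n]

theorem isHermitian_diagonal_mul_mul_diagonal_inv {A : Matrix n n ℝ} {e : n → ℝ}
    (he : ∀ i, e i ≠ 0) (hA : ∀ i j, e i ^ 2 * A i j = e j ^ 2 * A j i) :
    (diagonal e * A * diagonal e⁻¹).IsHermitian := by
  ext i j
  simp only [conjTranspose_apply, star_trivial, mul_diagonal, diagonal_mul, Pi.inv_apply]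
  field_simp [he i, he j]
  linear_combination hA j i

theorem charpoly_diagonal_mul_mul_diagonal_inv {A : Matrix n n ℝ} {e : n → ℝ}
    (he : ∀ i, e i ≠ 0) : (diagonal e * A * diagonal e⁻¹).charpoly = A.charpoly := by
  rw [charpoly_mul_comm, ← mul_assoc, diagonal_mul_diagonal]
  simp [he]

theorem exists_injective_charpoly_eq_prod_of_symmetrizable {A : Matrix n n ℝ} {d : n → ℝ}
    (hd : ∀ i, 0 < d i) (hA : ∀ i j, d i * A i j = d j * A j i)
    (hsimple : ∀ μ : ℝ, ∃ i₀, ∀ x, A *ᵥ x = μ • x → x i₀ = 0 → x = 0) :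
    ∃ f : n → ℝ, Function.Injective f ∧ A.charpoly = ∏ i, (X - C (f i)) := by
  set e : n → ℝ := fun i => √(d i)
  have he : ∀ i, e i ≠ 0 := fun i => (Real.sqrt_pos.mpr (hd i)).ne'
  set S := diagonal e * A * diagonal e⁻¹
  have hS : S.IsHermitian :=
    isHermitian_diagonal_mul_mul_diagonal_inv he (by simpa [e, Real.sq_sqrt (hd _).le] using hA)
  refine ⟨hS.eigenvalues, hS.eigenvalues_injective fun μ => ?_, ?_⟩
  · obtain ⟨i₀, hi₀⟩ := hsimple μ
    refine ⟨i₀, fun x hx hx₀ => ?_⟩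
    have hAx : A *ᵥ (diagonal e⁻¹ *ᵥ x) = μ • (diagonal e⁻¹ *ᵥ x) := by
      have : A * diagonal e⁻¹ = diagonal e⁻¹ * S := by
        simp only [S, ← mul_assoc, diagonal_mul_diagonal]
        simp [he]
      rw [mulVec_mulVec, this, ← mulVec_mulVec, hx, mulVec_smul]
    have := hi₀ _ hAx (by simp [mulVec_diagonal, hx₀])
    funext i
    simpa [mulVec_diagonal, he i] using congrFun this i
  · rw [← charpoly_diagonal_mul_mul_diagonal_inv he, hS.charpoly_eq]
    simp

end Matrix

open Finset

/-- `(Q_S)_{p+1,q+1}` for `d j = c_{j+1}`: indices start at `0`, so `ε_{p+1} = (-1) ^ p`. -/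
def seidelEntry (d : ℕ → ℝ) (p q : ℕ) : ℝ :=
  if p = q then (-1) ^ p * (d p - 1) else (-1) ^ max p q * d q

namespace seidelEntry

variable {d : ℕ → ℝ}

theorem mul_symm (p q : ℕ) : d p * seidelEntry d p q = d q * seidelEntry d q p := by
  unfold seidelEntry
  by_cases h : p = q
  · subst h; rfl
  · rw [if_neg h, if_neg (Ne.symm h), max_comm]; ring

theorem sub_add_two (p q : ℕ) :
    seidelEntry d p q - seidelEntry d (p + 2) q = (-1) ^ p *
      ((if q = p + 2 then 1 else 0) - (if q = p then 1 else 0) -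
        (if q = p + 1 then 2 * d (p + 1) else 0)) := by
  unfold seidelEntry
  rcases lt_trichotomy q p with h | rfl | h
  · have h₁ : q ≠ p + 1 := by omega
    have h₂ : q ≠ p + 2 := by omega
    rw [if_neg (by omega), if_neg (by omega), max_eq_left h.le, max_eq_left (by omega)]
    simp [pow_add, h.ne, h₁, h₂]
  · simp [pow_add, sub_eq_add_neg, mul_add]
  · rcases (by omega : q = p + 1 ∨ q = p + 2 ∨ p + 2 < q) with rfl | rfl | h'
    · simp [pow_succ]
      ring
    · simp [pow_add, mul_sub]
    · have h₁ : q ≠ p + 1 := by omega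
      rw [if_neg (by omega), if_neg (by omega), max_eq_right h.le, max_eq_right h'.le]
      simp [h.ne', h₁, h'.ne']

theorem add_succ {p q : ℕ} (hp : Even p) (hq : q ≤ p + 1) :
    seidelEntry d p q + seidelEntry d (p + 1) q =
      (if q = p + 1 then 1 - 2 * d (p + 1) else 0) - (if q = p then 1 else 0) := by
  unfold seidelEntry
  rcases (by omega : q < p ∨ q = p ∨ q = p + 1) with h | rfl | rfl
  · have h₁ : q ≠ p + 1 := by omega
    rw [if_neg (by omega), if_neg (by omega), max_eq_left h.le, max_eq_left (by omega)]
    simp [pow_succ, hp.neg_one_pow, h₁, h.ne]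
  · simp [pow_succ, hp.neg_one_pow, sub_eq_add_neg, add_comm]
  · simp [pow_succ, hp.neg_one_pow]
    ring

end seidelEntry

/-- The equations `Q_S x = μ x` for `x` indexed by `ℕ`; only `x 0, …, x (n - 1)` enter. -/
def SeidelEigenEq (n : ℕ) (d : ℕ → ℝ) (μ : ℝ) (x : ℕ → ℝ) : Prop :=
  ∀ p < n, ∑ q ∈ range n, seidelEntry d p q * x q = μ * x p

namespace SeidelEigenEq

variable {n m p : ℕ} {d : ℕ → ℝ} {μ : ℝ} {x : ℕ → ℝ}

theorem sub_add_two (hx : SeidelEigenEq n d μ x) (hp : p + 2 < n) :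
    (μ + (-1) ^ p) * (x p - x (p + 2)) = -2 * (-1) ^ p * d (p + 1) * x (p + 1) := by
  have h : ∑ q ∈ range n, (seidelEntry d p q - seidelEntry d (p + 2) q) * x q =
      μ * (x p - x (p + 2)) := by
    simp only [sub_mul, sum_sub_distrib, hx p (by omega), hx (p + 2) hp, mul_sub]
  simp only [seidelEntry.sub_add_two, mul_assoc, ← mul_sum, sub_mul, sum_sub_distrib, ite_mul,
    one_mul, zero_mul, sum_ite_eq', mem_range, hp, (by omega : p < n), (by omega : p + 1 < n),
    if_true] at h
  linear_combination -h

theorem last_rows (hx : SeidelEigenEq (2 * m + 2) d μ x) :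
    (μ + 1) * x (2 * m) = (1 - μ - 2 * d (2 * m + 1)) * x (2 * m + 1) := by
  have h : ∑ q ∈ range (2 * m + 2),
      (seidelEntry d (2 * m) q + seidelEntry d (2 * m + 1) q) * x q =
        μ * (x (2 * m) + x (2 * m + 1)) := by
    simp only [add_mul, sum_add_distrib, hx (2 * m) (by omega), hx (2 * m + 1) (by omega), mul_add]
  rw [sum_congr rfl fun q hq => by
    rw [seidelEntry.add_succ (even_two_mul m) (Nat.le_of_lt_succ (mem_range.mp hq))]] at h
  simp only [sub_mul, sum_sub_distrib, ite_mul, zero_mul, one_mul, sum_ite_eq', mem_range,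
    (by omega : 2 * m < 2 * m + 2), (by omega : 2 * m + 1 < 2 * m + 2), if_true] at h
  linear_combination -h

theorem eq_zero_of_eigenvalue_one (hd : ∀ p < 2 * m + 2, d p ≠ 0)
    (hx : SeidelEigenEq (2 * m + 2) d 1 x) (h₁ : x 1 = 0) : ∀ p < 2 * m + 2, x p = 0 := by
  have heven : ∀ i < m, x (2 * i + 2) = 0 := fun i hi => by
    have h := hx.sub_add_two (p := 2 * i + 1) (by omega)
    norm_num [pow_succ, pow_mul] at h
    exact h.resolve_left (hd _ (by omega))
  have hodd : ∀ i, i + 1 < m → x (2 * i + 3) = 0 := fun i hi => by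
    have h := hx.sub_add_two (p := 2 * i + 2) (by omega)
    rw [heven i (by omega), show 2 * i + 2 + 2 = 2 * (i + 1) + 2 by ring, heven (i + 1) hi] at h
    norm_num [pow_succ, pow_mul] at h
    exact h.resolve_left (hd _ (by omega))
  have hfirst : x 0 = 0 := by
    rcases m.eq_zero_or_pos with rfl | hm
    · have h := hx.last_rows
      norm_num [h₁] at h
      exact h
    · have h := hx.sub_add_two (p := 0) (by omega)
      norm_num [h₁, heven 0 hm] at h
      exact h
  have hlast : x (2 * m + 1) = 0 := by
    rcases m.eq_zero_or_pos with rfl | hm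
    · exact h₁
    · have h := hx.last_rows
      have h₂ := heven (m - 1) (by omega)
      rw [show 2 * (m - 1) + 2 = 2 * m by omega] at h₂
      rw [h₂] at h
      norm_num at h
      exact h.resolve_left (hd _ (by omega))
  intro p hp
  obtain ⟨i, rfl | rfl⟩ := Nat.even_or_odd' p
  · rcases i.eq_zero_or_pos with rfl | hi
    · exact hfirst
    · rw [show 2 * i = 2 * (i - 1) + 2 by omega]
      exact heven _ (by omega)
  · rcases (by omega : i = 0 ∨ i = m ∨ (0 < i ∧ i < m)) with rfl | rfl | hi
    · exact h₁
    · exact hlast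
    · rw [show 2 * i + 1 = 2 * (i - 1) + 3 by omega]
      exact hodd _ (by omega)

theorem eq_zero_of_eigenvalue_neg_one (hd : ∀ p < 2 * m + 2, d p ≠ 0)
    (hx : SeidelEigenEq (2 * m + 2) d (-1) x) (hlast : x (2 * m + 1) = 0) :
    ∀ p < 2 * m + 2, x p = 0 := by
  have hodd : ∀ i ≤ m, x (2 * i + 1) = 0 := fun i hi => by
    rcases hi.lt_or_eq with hi | rfl
    · have h := hx.sub_add_two (p := 2 * i) (by omega)
      norm_num [pow_succ, pow_mul] at h
      exact h.resolve_left (hd _ (by omega))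
    · exact hlast
  have heven : ∀ i < m, x (2 * i + 2) = 0 := fun i hi => by
    have h := hx.sub_add_two (p := 2 * i + 1) (by omega)
    rw [hodd i hi.le, show 2 * i + 1 + 2 = 2 * (i + 1) + 1 by ring, hodd (i + 1) hi] at h
    norm_num [pow_succ, pow_mul] at h
    exact h.resolve_left (hd _ (by omega))
  have hpos : ∀ p, 0 < p → p < 2 * m + 2 → x p = 0 := fun p hp₀ hp => by
    obtain ⟨i, rfl | rfl⟩ := Nat.even_or_odd' p
    · rw [show 2 * i = 2 * (i - 1) + 2 by omega]
      exact heven _ (by omega)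
    · exact hodd i (by omega)
  have hfirst : x 0 = 0 := by
    have h := hx 0 (by omega)
    rw [sum_eq_single 0 (fun q hq hq₀ => by rw [hpos q (by omega) (by simpa using hq), mul_zero])
      (by simp)] at h
    norm_num [seidelEntry] at h
    have h' : d 0 * x 0 = 0 := by linear_combination h
    exact (mul_eq_zero.mp h').resolve_left (hd 0 (by omega))
  intro p hp
  rcases p.eq_zero_or_pos with rfl | hp₀
  · exact hfirst
  · exact hpos p hp₀ hp

theorem eq_zero_of_eigenvalue_ne (hμ₁ : μ ≠ 1) (hμ₂ : μ ≠ -1)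
    (hx : SeidelEigenEq (2 * m + 2) d μ x) (hlast : x (2 * m + 1) = 0) :
    ∀ p < 2 * m + 2, x p = 0 := by
  have hne : ∀ p, μ + (-1) ^ p ≠ 0 := fun p => by
    rcases neg_one_pow_eq_or ℝ p with h | h <;> rw [h]
    · exact fun h' => hμ₂ (by linarith)
    · exact fun h' => hμ₁ (by linarith)
  have hpair : ∀ j ≤ 2 * m, x (2 * m - j) = 0 ∧ x (2 * m + 1 - j) = 0 := by
    intro j hj
    induction j with
    | zero =>
      have h := hx.last_rows
      rw [hlast, mul_zero] at h
      exact ⟨(mul_eq_zero.mp h).resolve_left (by simpa [add_comm] using hne 0), hlast⟩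
    | succ j ih =>
      obtain ⟨h₀, h₁⟩ := ih (by omega)
      have h := hx.sub_add_two (p := 2 * m - (j + 1)) (by omega)
      rw [show 2 * m - (j + 1) + 1 = 2 * m - j by omega,
        show 2 * m - (j + 1) + 2 = 2 * m + 1 - j by omega, h₀, h₁] at h
      refine ⟨?_, by rwa [show 2 * m + 1 - (j + 1) = 2 * m - j by omega]⟩
      simpa [hne] using h
  intro p hp
  rcases (by omega : p = 2 * m + 1 ∨ p ≤ 2 * m) with rfl | hp
  · exact hlast
  · simpa [Nat.sub_sub_self hp] using (hpair (2 * m - p) (by omega)).1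

theorem exists_forall_eq_zero_of_apply_eq_zero (hd : ∀ p < 2 * m + 2, d p ≠ 0) (μ : ℝ) :
    ∃ i₀ < 2 * m + 2, ∀ x, SeidelEigenEq (2 * m + 2) d μ x → x i₀ = 0 →
      ∀ p < 2 * m + 2, x p = 0 := by
  by_cases h₁ : μ = 1
  · subst h₁
    exact ⟨1, by omega, fun x hx h => hx.eq_zero_of_eigenvalue_one hd h⟩
  by_cases h₂ : μ = -1
  · subst h₂
    exact ⟨2 * m + 1, by omega, fun x hx h => hx.eq_zero_of_eigenvalue_neg_one hd h⟩
  exact ⟨2 * m + 1, by omega, fun x hx h => hx.eq_zero_of_eigenvalue_ne h₁ h₂ h⟩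

end SeidelEigenEq

def seidelQuotient (n : ℕ) (d : ℕ → ℝ) : Matrix (Fin n) (Fin n) ℝ :=
  Matrix.of fun p q => seidelEntry d p q

namespace seidelQuotient

variable {n : ℕ} {d : ℕ → ℝ} {μ : ℝ}

theorem seidelEigenEq_of_mulVec_eq {x : Fin n → ℝ} (h : seidelQuotient n d *ᵥ x = μ • x) :
    SeidelEigenEq n d μ (fun i => if hi : i < n then x ⟨i, hi⟩ else 0) := by
  intro p hp
  have := congrFun h ⟨p, hp⟩
  simp only [mulVec, dotProduct, seidelQuotient, of_apply, Pi.smul_apply, smul_eq_mul] at this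
  rw [← Fin.sum_univ_eq_sum_range
    (fun q => seidelEntry d p q * if hq : q < n then x ⟨q, hq⟩ else 0)]
  simpa [hp] using this

theorem exists_forall_eq_zero_of_apply_eq_zero (hn : Even n) (hn₀ : 0 < n)
    (hd : ∀ p < n, d p ≠ 0) (μ : ℝ) :
    ∃ i₀, ∀ x, seidelQuotient n d *ᵥ x = μ • x → x i₀ = 0 → x = 0 := by
  obtain ⟨m, rfl⟩ : ∃ m, n = 2 * m + 2 := by
    obtain ⟨r, rfl⟩ := hn
    exact ⟨r - 1, by omega⟩
  obtain ⟨i₀, hi₀, h⟩ := SeidelEigenEq.exists_forall_eq_zero_of_apply_eq_zero hd μ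
  refine ⟨⟨i₀, hi₀⟩, fun x hx hx₀ => funext fun p => ?_⟩
  simpa using h _ (seidelEigenEq_of_mulVec_eq hx) (by simpa [hi₀] using hx₀) p p.2

end seidelQuotient

theorem one_le_of_interleave {k : ℕ} {s t c : ℕ → ℕ}
    (hs : ∀ i, 1 ≤ i → i ≤ k → 1 ≤ s i) (ht : ∀ i, 1 ≤ i → i ≤ k → 1 ≤ t i)
    (hc : ∀ i, 1 ≤ i → i ≤ k → c (2 * i - 1) = s i ∧ c (2 * i) = t i)
    {j : ℕ} (hj₁ : 1 ≤ j) (hj : j ≤ 2 * k) : 1 ≤ c j := by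
  obtain ⟨i, rfl | rfl⟩ := Nat.even_or_odd' j
  · rw [(hc i (by omega) (by omega)).2]
    exact ht i (by omega) (by omega)
  · have h := (hc (i + 1) (by omega) (by omega)).1
    rw [show 2 * (i + 1) - 1 = 2 * i + 1 by omega] at h
    rw [h]
    exact hs (i + 1) (by omega) (by omega)

theorem stmt_7
    (k : ℕ) (hk : 1 ≤ k) (s t : ℕ → ℕ)
    (hs : ∀ i, 1 ≤ i → i ≤ k → 1 ≤ s i) (ht : ∀ i, 1 ≤ i → i ≤ k → 1 ≤ t i)
    (c : ℕ → ℕ)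
    (hc : ∀ i, 1 ≤ i → i ≤ k → c (2 * i - 1) = s i ∧ c (2 * i) = t i)
    (Q : Matrix (Fin (2 * k)) (Fin (2 * k)) ℝ)
    (hQ : ∀ p q : Fin (2 * k), Q p q = if p = q
      then (-1 : ℝ) ^ (p : ℕ) * ((c ((p : ℕ) + 1) : ℝ) - 1)
      else (-1 : ℝ) ^ (max (p : ℕ) (q : ℕ)) * (c ((q : ℕ) + 1) : ℝ)) :
    ∃ f : Fin (2 * k) → ℝ, Function.Injective f ∧
      Q.charpoly = ∏ i : Fin (2 * k), (X - C (f i)) := by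
  set d : ℕ → ℝ := fun p => c (p + 1)
  have hd : ∀ p < 2 * k, 0 < d p := fun p hp => by
    have := one_le_of_interleave hs ht hc (j := p + 1) (by omega) (by omega)
    simp only [d]
    exact_mod_cast this
  obtain rfl : Q = seidelQuotient (2 * k) d := by
    ext p q
    rw [hQ]
    simp [seidelQuotient, seidelEntry, d, Fin.val_inj]
  exact Matrix.exists_injective_charpoly_eq_prod_of_symmetrizable (fun p => hd p p.2)
    (fun p q => seidelEntry.mul_symm p q)
    (seidelQuotient.exists_forall_eq_zero_of_apply_eq_zero (even_two_mul k) (by omega)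
      fun p hp => (hd p hp).ne')
end

section
/- If I ⊆ {1,…,n} is a set of consecutive indices with β_i = 1 for every i ∈ I (a run of 0's in the binary string), then every vector v ∈ ℝⁿ that vanishes outside I and satisfies Σ_{i∈I} v_i = 0 is an eigenvector of the Seidel matrix S for the eigenvalue −1, i.e., S v = −v. -/
open Polynomial Matrix

/-!
Every row of `S + 1` is constant along a run `I` of zeros. In a row `i ∈ I` each entry is
`β = 1`, the diagonal `0` having become `1`. In a row `i ∉ I`, order-convexity of `I` puts all of
`I` on one side of `i`, so the entries are all `β (i + 1)` or all equal to `1`. Hence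
`(S + 1) v = 0` for every `v` supported on `I` with zero sum.
-/

theorem Matrix.mulVec_eq_zero_of_forall_row_const_on {m n R : Type*} [Fintype n]
    [NonUnitalNonAssocSemiring R] (M : Matrix m n R) {I : Finset n} {v : n → R}
    (hv : ∀ j ∉ I, v j = 0) (hsum : ∑ j ∈ I, v j = 0)
    (hM : ∀ i, ∃ c, ∀ j ∈ I, M i j = c) : M *ᵥ v = 0 := by
  funext i
  obtain ⟨c, hc⟩ := hM i
  calc (M *ᵥ v) i = ∑ j ∈ I, M i j * v j :=
        (Finset.sum_subset (Finset.subset_univ I) fun j _ hj => by rw [hv j hj, mul_zero]).symm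
    _ = ∑ j ∈ I, c * v j := Finset.sum_congr rfl fun j hj => by rw [hc j hj]
    _ = 0 := by rw [← Finset.mul_sum, hsum, mul_zero]

theorem Set.OrdConnected.forall_lt_or_forall_gt_of_notMem {α : Type*} [LinearOrder α]
    {s : Set α} (hs : s.OrdConnected) {x : α} (hx : x ∉ s) :
    (∀ y ∈ s, y < x) ∨ ∀ y ∈ s, x < y := by
  by_contra! h
  obtain ⟨⟨b, hb, hxb⟩, ⟨a, ha, hax⟩⟩ := h
  exact hx (hs.out ha hb ⟨hax, hxb⟩)

theorem seidel_add_one_row_const_on_run {n : ℕ} {β : ℕ → ℝ} {S : Matrix (Fin n) (Fin n) ℝ}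
    (hS : ∀ i j : Fin n, S i j = if i = j then 0 else β (max (i : ℕ) (j : ℕ) + 1))
    {I : Finset (Fin n)} (hI : (I : Set (Fin n)).OrdConnected)
    (hIβ : ∀ i ∈ I, β ((i : ℕ) + 1) = 1) (i : Fin n) :
    ∃ c, ∀ j ∈ I, (S + 1) i j = c := by
  by_cases hi : i ∈ I
  · refine ⟨1, fun j hj => ?_⟩
    rw [Matrix.add_apply, hS, one_apply]
    split_ifs
    · simp
    · rcases max_choice (i : ℕ) j with h | h <;> rw [h, add_zero]
      exacts [hIβ i hi, hIβ j hj]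
  · rcases hI.forall_lt_or_forall_gt_of_notMem hi with hlt | hgt
    · refine ⟨β (i + 1), fun j hj => ?_⟩
      have hji := hlt j hj
      rw [Matrix.add_apply, hS, one_apply, if_neg hji.ne', if_neg hji.ne', add_zero,
        max_eq_left (Fin.le_iff_val_le_val.mp hji.le)]
    · refine ⟨1, fun j hj => ?_⟩
      have hij := hgt j hj
      rw [Matrix.add_apply, hS, one_apply, if_neg hij.ne, if_neg hij.ne, add_zero,
        max_eq_right (Fin.le_iff_val_le_val.mp hij.le), hIβ j hj]

theorem stmt_8_general (n : ℕ) (β : ℕ → ℝ)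
    (S : Matrix (Fin n) (Fin n) ℝ)
    (hS : ∀ i j : Fin n, S i j = if i = j then 0 else β (max (i : ℕ) (j : ℕ) + 1))
    (I : Finset (Fin n))
    (hIcons : ∀ i j l : Fin n, i ∈ I → l ∈ I → i ≤ j → j ≤ l → j ∈ I)
    (hIβ : ∀ i ∈ I, β ((i : ℕ) + 1) = 1)
    (v : Fin n → ℝ) (hv0 : ∀ i, i ∉ I → v i = 0)
    (hvsum : ∑ i ∈ I, v i = 0) :
    S.mulVec v = (-1 : ℝ) • v := by
  have hI : (I : Set (Fin n)).OrdConnected :=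
    ⟨fun i hi l hl j hj => hIcons i j l hi hl hj.1 hj.2⟩
  have h : (S + 1) *ᵥ v = 0 :=
    (S + 1).mulVec_eq_zero_of_forall_row_const_on hv0 hvsum
      (seidel_add_one_row_const_on_run hS hI hIβ)
  rw [add_mulVec, one_mulVec, add_eq_zero_iff_eq_neg] at h
  rw [h, neg_one_smul]

theorem stmt_8 (n : ℕ) (hn : 2 ≤ n) (β : ℕ → ℝ)
    (hβ : ∀ i, 1 ≤ i → i ≤ n → β i = 1 ∨ β i = -1)
    (S : Matrix (Fin n) (Fin n) ℝ)
    (hS : ∀ i j : Fin n, S i j = if i = j then 0 else β (max (i : ℕ) (j : ℕ) + 1))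
    (I : Finset (Fin n))
    (hIcons : ∀ i j l : Fin n, i ∈ I → l ∈ I → i ≤ j → j ≤ l → j ∈ I)
    (hIβ : ∀ i ∈ I, β ((i : ℕ) + 1) = 1)
    (v : Fin n → ℝ) (hv0 : ∀ i, i ∉ I → v i = 0)
    (hvsum : ∑ i ∈ I, v i = 0) :
    S.mulVec v = (-1 : ℝ) • v :=
  stmt_8_general n β S hS I hIcons hIβ v hv0 hvsum
end

section
/- If I ⊆ {1,…,n} is a set of consecutive indices with β_i = −1 for every i ∈ I (a run of 1's in the binary string), then every vector v ∈ ℝⁿ that vanishes outside I and satisfies Σ_{i∈I} v_i = 0 is an eigenvector of the Seidel matrix S for the eigenvalue 1, i.e., S v = v. -/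
open Matrix

/-!
A vector supported on the run `I` with zero sum is killed by every matrix whose rows are constant
on `I`, so it suffices that each row of `S - 1` is constant on `I`. For `i ∈ I` every entry
`(S - 1) i j` with `j ∈ I` is `-1`, since `max i j ∈ I`. For `i ∉ I` the run lies entirely on
one side of `i`: above it all entries `S i j` equal `β (j + 1) = -1`, below it they all equal
`β (i + 1)`.
-/

theorem Set.OrdConnected.forall_lt_or_forall_lt_of_notMem {α : Type*} [LinearOrder α]
    {s : Set α} (hs : s.OrdConnected) {x : α} (hx : x ∉ s) :
    (∀ y ∈ s, x < y) ∨ ∀ y ∈ s, y < x := by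
  by_contra! h
  obtain ⟨⟨a, ha, hax⟩, ⟨b, hb, hxb⟩⟩ := h
  exact hx (hs.out ha hb ⟨hax, hxb⟩)

theorem Matrix.mulVec_eq_zero_of_row_const_on_support {m n R : Type*} [Fintype n]
    [NonUnitalNonAssocSemiring R] (B : Matrix m n R) {I : Finset n} {v : n → R}
    (hv0 : ∀ j, j ∉ I → v j = 0) (hvsum : ∑ j ∈ I, v j = 0)
    (hB : ∀ i, ∀ j ∈ I, ∀ j' ∈ I, B i j = B i j') : B *ᵥ v = 0 := by
  funext i
  obtain rfl | ⟨j₀, hj₀⟩ := I.eq_empty_or_nonempty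
  · simp [mulVec, dotProduct, hv0]
  calc (B *ᵥ v) i = ∑ j ∈ I, B i j * v j :=
        (Finset.sum_subset (Finset.subset_univ I) fun j _ hj => by rw [hv0 j hj, mul_zero]).symm
    _ = ∑ j ∈ I, B i j₀ * v j := Finset.sum_congr rfl fun j hj => by rw [hB i j hj j₀ hj₀]
    _ = 0 := by rw [← Finset.mul_sum, hvsum, mul_zero]

section Seidel

variable {n : ℕ} {β : ℕ → ℝ} {S : Matrix (Fin n) (Fin n) ℝ} {I : Finset (Fin n)}

theorem seidel_apply_of_max_mem
    (hS : ∀ i j : Fin n, S i j = if i = j then 0 else β (max (i : ℕ) (j : ℕ) + 1))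
    (hIβ : ∀ i ∈ I, β ((i : ℕ) + 1) = -1) {i j : Fin n}
    (hij : i ≠ j) (hmax : max i j ∈ I) : S i j = -1 := by
  rw [hS, if_neg hij, ← Fin.coe_max, hIβ _ hmax]

theorem seidel_sub_one_apply_of_mem
    (hS : ∀ i j : Fin n, S i j = if i = j then 0 else β (max (i : ℕ) (j : ℕ) + 1))
    (hIβ : ∀ i ∈ I, β ((i : ℕ) + 1) = -1) {i j : Fin n}
    (hi : i ∈ I) (hj : j ∈ I) : (S - 1) i j = -1 := by
  by_cases hij : i = j
  · simp [hij, hS]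
  · have hmax : max i j ∈ I := by rcases max_choice i j with h | h <;> rw [h] <;> assumption
    rw [Matrix.sub_apply, one_apply_ne hij, seidel_apply_of_max_mem hS hIβ hij hmax, sub_zero]

theorem seidel_apply_eq_of_notMem
    (hS : ∀ i j : Fin n, S i j = if i = j then 0 else β (max (i : ℕ) (j : ℕ) + 1))
    (hI : (I : Set (Fin n)).OrdConnected)
    (hIβ : ∀ i ∈ I, β ((i : ℕ) + 1) = -1) {i j j' : Fin n}
    (hi : i ∉ I) (hj : j ∈ I) (hj' : j' ∈ I) : S i j = S i j' := by
  have hne : ∀ {k}, k ∈ I → i ≠ k := fun hk h => hi (h ▸ hk)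
  rcases hI.forall_lt_or_forall_lt_of_notMem (x := i) (by exact_mod_cast hi) with hlt | hlt
  · have hrow : ∀ k ∈ I, S i k = -1 := fun k hk =>
      seidel_apply_of_max_mem hS hIβ (hne hk) (by rwa [max_eq_right (hlt k hk).le])
    rw [hrow j hj, hrow j' hj']
  · have hrow : ∀ k ∈ I, S i k = β (i + 1) := fun k hk => by
      rw [hS, if_neg (hne hk), max_eq_left (Fin.le_def.mp (hlt k hk).le)]
    rw [hrow j hj, hrow j' hj']

theorem seidel_sub_one_apply_eq
    (hS : ∀ i j : Fin n, S i j = if i = j then 0 else β (max (i : ℕ) (j : ℕ) + 1))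
    (hI : (I : Set (Fin n)).OrdConnected) (hIβ : ∀ i ∈ I, β ((i : ℕ) + 1) = -1)
    (i : Fin n) {j j' : Fin n} (hj : j ∈ I) (hj' : j' ∈ I) : (S - 1) i j = (S - 1) i j' := by
  by_cases hi : i ∈ I
  · rw [seidel_sub_one_apply_of_mem hS hIβ hi hj, seidel_sub_one_apply_of_mem hS hIβ hi hj']
  · have hne : ∀ {k}, k ∈ I → i ≠ k := fun hk h => hi (h ▸ hk)
    rw [Matrix.sub_apply, Matrix.sub_apply, one_apply_ne (hne hj), one_apply_ne (hne hj'),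
      seidel_apply_eq_of_notMem hS hI hIβ hi hj hj']

end Seidel

theorem stmt_9_general (n : ℕ) (β : ℕ → ℝ)
    (S : Matrix (Fin n) (Fin n) ℝ)
    (hS : ∀ i j : Fin n, S i j = if i = j then 0 else β (max (i : ℕ) (j : ℕ) + 1))
    (I : Finset (Fin n))
    (hIcons : ∀ i j l : Fin n, i ∈ I → l ∈ I → i ≤ j → j ≤ l → j ∈ I)
    (hIβ : ∀ i ∈ I, β ((i : ℕ) + 1) = -1)
    (v : Fin n → ℝ) (hv0 : ∀ i, i ∉ I → v i = 0)
    (hvsum : ∑ i ∈ I, v i = 0) :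
    S.mulVec v = (1 : ℝ) • v := by
  have hI : (I : Set (Fin n)).OrdConnected :=
    ⟨fun i hi l hl j hj => hIcons i j l hi hl hj.1 hj.2⟩
  have hker := (S - 1).mulVec_eq_zero_of_row_const_on_support hv0 hvsum
    fun i _ hj _ hj' => seidel_sub_one_apply_eq hS hI hIβ i hj hj'
  rw [sub_mulVec, one_mulVec, sub_eq_zero] at hker
  rw [hker, one_smul]

theorem stmt_9 (n : ℕ) (hn : 2 ≤ n) (β : ℕ → ℝ)
    (hβ : ∀ i, 1 ≤ i → i ≤ n → β i = 1 ∨ β i = -1)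
    (S : Matrix (Fin n) (Fin n) ℝ)
    (hS : ∀ i j : Fin n, S i j = if i = j then 0 else β (max (i : ℕ) (j : ℕ) + 1))
    (I : Finset (Fin n))
    (hIcons : ∀ i j l : Fin n, i ∈ I → l ∈ I → i ≤ j → j ≤ l → j ∈ I)
    (hIβ : ∀ i ∈ I, β ((i : ℕ) + 1) = -1)
    (v : Fin n → ℝ) (hv0 : ∀ i, i ∉ I → v i = 0)
    (hvsum : ∑ i ∈ I, v i = 0) :
    S.mulVec v = (1 : ℝ) • v :=
  stmt_9_general n β S hS I hIcons hIβ v hv0 hvsum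
end

section
/- The multiplicity of −1 as a root of the characteristic polynomial of the Seidel matrix S equals (s_1 + s_2 + ⋯ + s_k) − k if t_k > 1, and equals (s_1 + s_2 + ⋯ + s_k) − k + 1 if t_k = 1. -/
/-!
`S` is symmetric, so the multiplicity of `-1` is the nullity of `S + I`, whose `(i, j)` entry is
`1` for `i = j` and `β_{max(i,j)}` otherwise. Two consecutive positions of one block of 0's give
equal columns, and when `t_k = 1` the last two columns are opposite; each such pair yields a kernel
vector. Conversely, subtracting consecutive rows shows that a kernel vector is constant on every
block of 1's, equal to the sum of all earlier coordinates, and the row at the end of the block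
forces that constant to vanish (for the last block only when `t_k > 1`). Sweeping block by block,
a kernel vector is therefore determined by its coordinates at the first positions of these pairs:
there are `∑ (s_i - 1)` of them, plus the last position when `t_k = 1`.
-/

open Polynomial Matrix

namespace Matrix.IsHermitian

variable {𝕜 ι : Type*} [RCLike 𝕜] [Fintype ι] [DecidableEq ι] {A : Matrix ι ι 𝕜}

lemma rootMultiplicity_zero_charpoly (hA : A.IsHermitian) :
    A.charpoly.rootMultiplicity 0 = Fintype.card ι - A.rank := by
  classical
  rw [← count_roots, hA.roots_charpoly_eq_eigenvalues, Multiset.count_map,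
    hA.rank_eq_card_non_zero_eigs, Fintype.card_subtype, ← Finset.card_univ,
    ← Finset.card_filter_add_card_filter_not (p := fun i => hA.eigenvalues i = 0)]
  simp [← Finset.filter_val, eq_comm (a := (0 : 𝕜))]

lemma rootMultiplicity_charpoly (hA : A.IsHermitian) (μ : ℝ) :
    A.charpoly.rootMultiplicity (μ : 𝕜) =
      Module.finrank 𝕜 (LinearMap.ker (A - scalar ι (μ : 𝕜)).mulVecLin) := by
  have hAμ : (A - scalar ι (μ : 𝕜)).IsHermitian :=
    hA.sub (by simp [IsHermitian])
  rw [rootMultiplicity_eq_rootMultiplicity, ← charpoly_sub_scalar,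
    hAμ.rootMultiplicity_zero_charpoly, ← Module.finrank_fintype_fun_eq_card 𝕜,
    ← LinearMap.finrank_range_add_finrank_ker (A - scalar ι (μ : 𝕜)).mulVecLin]
  simp [Matrix.rank]

end Matrix.IsHermitian

open Finset

namespace SeidelThreshold

/-- The entries of `S + I`, with positions shifted to start at `0`: `b i` is the sign of the
paper's position `i + 1`. -/
def maxSignEntry (b : ℕ → ℝ) (i j : ℕ) : ℝ := if i = j then 1 else b (max i j)

lemma sum_maxSignEntry_mul (b y : ℕ → ℝ) {n i : ℕ} (hi : i < n) :
    ∑ j ∈ range n, maxSignEntry b i j * y j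
      = b i * ∑ j ∈ range i, y j + y i + ∑ j ∈ Ico (i + 1) n, b j * y j := by
  rw [← sum_range_add_sum_Ico _ hi, sum_range_succ, mul_sum]
  congr 1
  · congr 1
    · refine sum_congr rfl fun j hj => ?_
      have hj := mem_range.1 hj
      simp [maxSignEntry, hj.ne', max_eq_left hj.le]
    · simp [maxSignEntry]
  · refine sum_congr rfl fun j hj => ?_
    have hj := (mem_Ico.1 hj).1
    simp [maxSignEntry, (Nat.lt_of_succ_le hj).ne, max_eq_right (Nat.le_of_succ_le hj)]

def RowsVanish (b y : ℕ → ℝ) (n : ℕ) : Prop :=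
  ∀ i < n, ∑ j ∈ range n, maxSignEntry b i j * y j = 0

variable {b y : ℕ → ℝ} {n : ℕ}

lemma RowsVanish.consecutive (h : RowsVanish b y n) {i : ℕ} (hi : i + 1 < n) :
    (b i - b (i + 1)) * ∑ j ∈ range i, y j + (1 - b (i + 1)) * (y i - y (i + 1)) = 0 := by
  have hrow := h i (by omega)
  have hrow' := h (i + 1) hi
  rw [sum_maxSignEntry_mul b y (by omega)] at hrow
  rw [sum_maxSignEntry_mul b y hi, sum_range_succ] at hrow'
  rw [sum_eq_sum_Ico_succ_bot hi] at hrow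
  linear_combination hrow - hrow'

lemma RowsVanish.last (h : RowsVanish b y n) (hn : 0 < n) :
    b (n - 1) * ∑ j ∈ range (n - 1), y j + y (n - 1) = 0 := by
  have hrow := h (n - 1) (by omega)
  rwa [sum_maxSignEntry_mul b y (by omega), Nat.sub_add_cancel hn, Ico_self, sum_empty,
    add_zero] at hrow

/-- Along the `1`-block `(p, e)` the vector `y` is constant, equal to `y p`, so the prefix sums grow
linearly there, and the row at the end of the block forces `y p = 0`. -/
lemma RowsVanish.eq_zero_of_block (h : RowsVanish b y n) {p e : ℕ} (hpe : p + 1 < e)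
    (hen : e ≤ n) (hp : b p = 1) (hneg : ∀ i, p < i → i < e → b i = -1)
    (hend : e < n → b e = 1) (hlast : e = n → p + 2 = n → y (n - 1) = 0)
    (hpre : ∀ j < p, y j = 0) : ∀ j < e, y j = 0 := by
  have hσp : ∑ j ∈ range p, y j = 0 := sum_eq_zero fun j hj => hpre j (mem_range.1 hj)
  have hconst : ∀ i, p < i → i < e → y i = y p := by
    intro i hpi hie
    induction i, hpi using Nat.le_induction with
    | base =>
      have := h.consecutive (i := p) (by omega)
      rw [hp, hneg (p + 1) (by omega) hie, hσp] at this
      linarith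
    | succ i hpi ih =>
      have := h.consecutive (i := i) (by omega)
      rw [hneg i hpi (by omega), hneg (i + 1) (by omega) hie] at this
      linarith [ih (by omega)]
  have hsum : ∀ i, p < i → i ≤ e → ∑ j ∈ range i, y j = ((i : ℝ) - p) * y p := by
    intro i hpi hie
    induction i, hpi using Nat.le_induction with
    | base => rw [sum_range_succ, hσp]; push_cast; ring
    | succ i hpi ih =>
      rw [sum_range_succ, ih (by omega), hconst i hpi (by omega)]; push_cast; ring
  have hyp : y p = 0 := by
    rcases hen.lt_or_eq with hen | rfl
    · have := h.consecutive (i := e - 1) (by omega)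
      rw [Nat.sub_add_cancel (by omega), hneg (e - 1) (by omega) (by omega), hend hen,
        hsum (e - 1) (by omega) (by omega)] at this
      have hpos : (0 : ℝ) < ((e - 1 : ℕ) : ℝ) - p := by
        rw [sub_pos]; exact_mod_cast (by omega : p < e - 1)
      nlinarith
    · have := h.last (by omega)
      rw [hneg (e - 1) (by omega) (by omega), hsum (e - 1) (by omega) (by omega),
        hconst (e - 1) (by omega) (by omega)] at this
      rcases (by omega : p + 2 = e ∨ p + 2 < e) with hpe2 | hpe2
      · rw [← hconst (e - 1) (by omega) (by omega)]; exact hlast rfl hpe2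
      · have hpos : (1 : ℝ) < ((e - 1 : ℕ) : ℝ) - p := by
          rw [lt_sub_iff_add_lt']; exact_mod_cast (by omega : p + 1 < e - 1)
        nlinarith
  intro j hj
  rcases lt_trichotomy j p with hjp | rfl | hjp
  · exact hpre j hjp
  · exact hyp
  · rw [hconst j hjp hj, hyp]

/-- `b` is the (0-indexed) sign sequence of `0^{s_1} 1^{t_1} ⋯ 0^{s_k} 1^{t_k}`, where `B p` is the
total length of the first `p` blocks. -/
structure AlternatingBlocks (b : ℕ → ℝ) (B : ℕ → ℕ) (k : ℕ) : Prop where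
  zero : B 0 = 0
  strictMonoOn : StrictMonoOn B (Set.Iic (2 * k))
  pos : ∀ l < k, ∀ i, B (2 * l) ≤ i → i < B (2 * l + 1) → b i = 1
  neg : ∀ l < k, ∀ i, B (2 * l + 1) ≤ i → i < B (2 * l + 2) → b i = -1

/-- The positions whose coordinates parametrise the kernel of `maxSignMatrix b n`. -/
def IsFree (b : ℕ → ℝ) (n v : ℕ) : Prop :=
  (v + 1 < n ∧ b v = 1 ∧ b (v + 1) = 1) ∨ (v + 1 = n ∧ 0 < v ∧ b (v - 1) = 1)

namespace AlternatingBlocks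

variable {B : ℕ → ℕ} {k : ℕ}

lemma lt (hb : AlternatingBlocks b B k) {p q : ℕ} (hpq : p < q) (hq : q ≤ 2 * k) : B p < B q :=
  hb.strictMonoOn (Set.mem_Iic.2 (by omega)) (Set.mem_Iic.2 hq) hpq

lemma le (hb : AlternatingBlocks b B k) {p q : ℕ} (hpq : p ≤ q) (hq : q ≤ 2 * k) : B p ≤ B q :=
  hb.strictMonoOn.monotoneOn (Set.mem_Iic.2 (by omega)) (Set.mem_Iic.2 hq) hpq

lemma eq_zero_of_rowsVanish (hb : AlternatingBlocks b B k) (hn : B (2 * k) = n)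
    (h : RowsVanish b y n) (hfree : ∀ v < n, IsFree b n v → y v = 0) : ∀ j < n, y j = 0 := by
  suffices ∀ l ≤ k, ∀ j < B (2 * l), y j = 0 from hn ▸ this k le_rfl
  intro l hl
  induction l with
  | zero => simp [hb.zero]
  | succ l ih =>
    rw [show 2 * (l + 1) = 2 * l + 2 by ring]
    have h₁ := hb.lt (p := 2 * l) (q := 2 * l + 1) (by omega) (by omega)
    have h₂ := hb.lt (p := 2 * l + 1) (q := 2 * l + 2) (by omega) (by omega)
    have h₃ := hb.le (p := 2 * l + 2) (q := 2 * k) (by omega) le_rfl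
    have hpiv : b (B (2 * l + 1) - 1) = 1 := hb.pos l (by omega) _ (by omega) (by omega)
    refine h.eq_zero_of_block (p := B (2 * l + 1) - 1) (by omega) (by omega) hpiv
      (fun i hi hi' => hb.neg l (by omega) i (by omega) hi') (fun he => ?_) (fun he hp => ?_)
      (fun j hj => ?_)
    · have hlk : l + 1 < k := by
        by_contra! hlk
        rw [show 2 * k = 2 * l + 2 by omega] at hn
        omega
      exact hb.pos (l + 1) hlk _ le_rfl (hb.lt (by omega) (by omega))
    · exact hfree (n - 1) (by omega) (Or.inr ⟨by omega, by omega, by rwa [← hp]⟩)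
    · rcases lt_or_ge j (B (2 * l)) with hj' | hj'
      · exact ih (by omega) j hj'
      · exact hfree j (by omega) (Or.inl ⟨by omega, hb.pos l (by omega) j hj' (by omega),
          hb.pos l (by omega) (j + 1) (by omega) (by omega)⟩)

lemma card_twins (hb : AlternatingBlocks b B k) (hn : B (2 * k) = n) {l : ℕ} (hl : l ≤ k) :
    #{v ∈ range (B (2 * l)) | v + 1 < n ∧ b v = 1 ∧ b (v + 1) = 1}
      = ∑ j ∈ range l, (B (2 * j + 1) - B (2 * j) - 1) := by
  induction l with
  | zero => simp [hb.zero]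
  | succ l ih =>
    rw [show 2 * (l + 1) = 2 * l + 2 by ring]
    have h₁ := hb.lt (p := 2 * l) (q := 2 * l + 1) (by omega) (by omega)
    have h₂ := hb.lt (p := 2 * l + 1) (q := 2 * l + 2) (by omega) (by omega)
    have h₃ := hb.le (p := 2 * l + 2) (q := 2 * k) (by omega) le_rfl
    rw [sum_range_succ, ← ih (by omega), card_filter, card_filter,
      ← sum_range_add_sum_Ico _ (h₁.le.trans h₂.le),
      ← sum_Ico_consecutive _ (by omega : B (2 * l) ≤ B (2 * l + 1) - 1) (by omega)]
    have hzero : ∀ v ∈ Ico (B (2 * l)) (B (2 * l + 1) - 1),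
        (if v + 1 < n ∧ b v = 1 ∧ b (v + 1) = 1 then 1 else 0) = 1 := fun v hv => by
      rw [mem_Ico] at hv
      rw [if_pos ⟨by omega, hb.pos l (by omega) v (by omega) (by omega),
        hb.pos l (by omega) (v + 1) (by omega) (by omega)⟩]
    have hone : ∀ v ∈ Ico (B (2 * l + 1) - 1) (B (2 * l + 2)),
        (if v + 1 < n ∧ b v = 1 ∧ b (v + 1) = 1 then 1 else 0) = 0 := fun v hv => by
      rw [mem_Ico] at hv
      rcases (by omega : v + 1 = B (2 * l + 1) ∨ B (2 * l + 1) ≤ v) with hv' | hv'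
      · norm_num [hb.neg l (by omega) (v + 1) (by omega) (by omega)]
      · norm_num [hb.neg l (by omega) v hv' (by omega)]
    rw [sum_congr rfl hzero, sum_eq_zero hone, sum_const, Nat.card_Ico, smul_eq_mul, mul_one,
      add_zero]
    omega

lemma card_isFree (hb : AlternatingBlocks b B k) (hk : 0 < k) (hn : B (2 * k) = n)
    [DecidablePred (IsFree b n)] :
    #{v ∈ range n | IsFree b n v}
      = ∑ j ∈ range k, (B (2 * j + 1) - B (2 * j) - 1)
        + if B (2 * k - 1) + 1 = n then 1 else 0 := by
  have h₁ := hb.lt (p := 2 * k - 1) (q := 2 * k) (by omega) le_rfl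
  have h₂ := hb.lt (p := 2 * k - 2) (q := 2 * k - 1) (by omega) (by omega)
  have hpos := hb.pos (k - 1) (by omega)
  have hneg := hb.neg (k - 1) (by omega)
  rw [show 2 * (k - 1) = 2 * k - 2 by omega, show 2 * k - 2 + 1 = 2 * k - 1 by omega] at hpos hneg
  rw [show 2 * k - 2 + 2 = 2 * k by omega] at hneg
  have hsplit : {v ∈ range n | IsFree b n v}
      = {v ∈ range n | v + 1 < n ∧ b v = 1 ∧ b (v + 1) = 1}
        ∪ {v ∈ range n | v + 1 = n ∧ 0 < v ∧ b (v - 1) = 1} := by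
    ext v
    rw [mem_union, mem_filter, mem_filter, mem_filter, IsFree]
    tauto
  rw [hsplit, card_union_of_disjoint (disjoint_filter.2 fun v _ h h' => by omega),
    ← hb.card_twins hn le_rfl, hn]
  congr 1
  split_ifs with h
  · rw [card_eq_one]
    refine ⟨n - 1, ext fun v => ?_⟩
    simp only [mem_filter, mem_range, mem_singleton]
    constructor
    · rintro ⟨-, hv, -⟩; omega
    · rintro rfl
      exact ⟨by omega, by omega, by omega, hpos _ (by omega) (by omega)⟩
  · rw [card_eq_zero, filter_eq_empty_iff]
    rintro v - ⟨hv, -, hb'⟩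
    rw [hneg (v - 1) (by omega) (by omega)] at hb'
    norm_num at hb'

end AlternatingBlocks

def maxSignMatrix (b : ℕ → ℝ) (n : ℕ) : Matrix (Fin n) (Fin n) ℝ :=
  of fun i j => maxSignEntry b i j

lemma rowsVanish_of_mulVec_eq_zero {x : Fin n → ℝ} (hx : maxSignMatrix b n *ᵥ x = 0) :
    RowsVanish b (fun j => if h : j < n then x ⟨j, h⟩ else 0) n := by
  intro i hi
  have := congrFun hx ⟨i, hi⟩
  rw [← Fin.sum_univ_eq_sum_range
    (fun j => maxSignEntry b i j * if h : j < n then x ⟨j, h⟩ else 0)]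
  simpa [mulVec, dotProduct, maxSignMatrix] using this

lemma maxSignMatrix_mulVec_single_sub_single {i j : Fin n} (hij : (j : ℕ) = i + 1)
    (hi : b i = 1) (hj : b j = 1) :
    maxSignMatrix b n *ᵥ (Pi.single i 1 - Pi.single j 1) = 0 := by
  ext r
  simp only [mulVec_sub, mulVec_single, MulOpposite.op_one, one_smul, Pi.sub_apply, col_apply,
    maxSignMatrix, maxSignEntry, of_apply, Pi.zero_apply]
  rcases lt_trichotomy (r : ℕ) i with hr | hr | hr
  · rw [if_neg (by omega), if_neg (by omega), max_eq_right (by omega), max_eq_right (by omega),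
      hi, hj, sub_self]
  · rw [if_pos hr, if_neg (by omega), max_eq_right (by omega), hj, sub_self]
  · rw [if_neg (by omega), max_eq_left hr.le]
    rcases (by omega : (r : ℕ) = j ∨ (j : ℕ) < r) with hr' | hr'
    · rw [if_pos hr', hr', hj, sub_self]
    · rw [if_neg (by omega), max_eq_left hr'.le, sub_self]

lemma maxSignMatrix_mulVec_single_add_single {i j : Fin n} (hij : (j : ℕ) = i + 1)
    (hjn : (j : ℕ) + 1 = n) (hi : b i = 1) (hj : b j = -1) :
    maxSignMatrix b n *ᵥ (Pi.single i 1 + Pi.single j 1) = 0 := by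
  ext r
  simp only [mulVec_add, mulVec_single, MulOpposite.op_one, one_smul, Pi.add_apply, col_apply,
    maxSignMatrix, maxSignEntry, of_apply, Pi.zero_apply]
  have hrn := r.isLt
  rcases lt_trichotomy (r : ℕ) i with hr | hr | hr
  · rw [if_neg (by omega), if_neg (by omega), max_eq_right (by omega), max_eq_right (by omega),
      hi, hj, add_neg_cancel]
  · rw [if_pos hr, if_neg (by omega), max_eq_right (by omega), hj, add_neg_cancel]
  · rw [if_neg (by omega), if_pos (by omega), max_eq_left hr.le,
      show (r : ℕ) = j by omega, hj, neg_add_cancel]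

lemma AlternatingBlocks.last_eq_neg_one {B : ℕ → ℕ} {k : ℕ} (hb : AlternatingBlocks b B k)
    (hk : 0 < k) (hn : B (2 * k) = n) : b (n - 1) = -1 := by
  have h₁ := hb.lt (p := 2 * k - 1) (q := 2 * k) (by omega) le_rfl
  have := hb.neg (k - 1) (by omega) (n - 1)
  rw [show 2 * (k - 1) + 1 = 2 * k - 1 by omega, show 2 * (k - 1) + 2 = 2 * k by omega] at this
  exact this (by omega) (by omega)

variable [DecidablePred (IsFree b n)]

lemma lt_of_mem_filter_isFree (v : {v ∈ range n | IsFree b n v}) : (v : ℕ) < n :=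
  mem_range.1 (mem_filter.1 v.2).1

def restrictFree (b : ℕ → ℝ) (n : ℕ) [DecidablePred (IsFree b n)] :
    LinearMap.ker (maxSignMatrix b n).mulVecLin →ₗ[ℝ] ({v ∈ range n | IsFree b n v} → ℝ) :=
  LinearMap.funLeft ℝ ℝ (fun v => (⟨v, lt_of_mem_filter_isFree v⟩ : Fin n)) ∘ₗ Submodule.subtype _

lemma AlternatingBlocks.injective_restrictFree {B : ℕ → ℕ} {k : ℕ}
    (hb : AlternatingBlocks b B k) (hn : B (2 * k) = n) :
    Function.Injective (restrictFree b n) := by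
  rw [← LinearMap.ker_eq_bot, LinearMap.ker_eq_bot']
  intro z hz
  have hy := hb.eq_zero_of_rowsVanish hn (rowsVanish_of_mulVec_eq_zero z.2) fun v hv hfree => by
    simpa [restrictFree, hv] using congrFun hz ⟨v, by simp [hv, hfree]⟩
  ext j
  simpa [j.isLt] using hy j j.isLt

/-- Descending induction on `w`: the kernel vector `e_w - e_{w+1}` reduces `w` to `w + 1`, and
`e_{n-2} + e_{n-1}` settles `w = n - 1`. -/
lemma indicator_mem_range_restrictFree (hbn : b (n - 1) = -1) (w : ℕ) :
    (fun v : {v ∈ range n | IsFree b n v} => if (v : ℕ) = w then (1 : ℝ) else 0)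
      ∈ LinearMap.range (restrictFree b n) := by
  induction h : n - w generalizing w with
  | zero =>
    convert (LinearMap.range (restrictFree b n)).zero_mem using 1
    funext v
    rw [if_neg (by have := lt_of_mem_filter_isFree v; omega), Pi.zero_apply]
  | succ d ih =>
    by_cases hw : w ∈ {v ∈ range n | IsFree b n v}
    · obtain ⟨hwn, ⟨hw1, hbw, hbw1⟩ | ⟨hw1, hw0, hbw⟩⟩ := mem_filter.1 hw
      · have hker := maxSignMatrix_mulVec_single_sub_single
          (i := ⟨w, mem_range.1 hwn⟩) (j := ⟨w + 1, hw1⟩) rfl hbw hbw1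
        convert add_mem (LinearMap.mem_range_self (restrictFree b n) ⟨_, hker⟩)
          (ih (w + 1) (by omega)) using 1
        funext v
        simp [restrictFree, Pi.single_apply, Fin.ext_iff]
      · have hker := maxSignMatrix_mulVec_single_add_single (i := ⟨w - 1, by omega⟩)
          (j := ⟨w, mem_range.1 hwn⟩) (Nat.sub_add_cancel hw0).symm hw1 hbw (by rwa [← hw1] at hbn)
        convert LinearMap.mem_range_self (restrictFree b n) ⟨_, hker⟩ using 1
        funext v
        have hv : (v : ℕ) ≠ w - 1 := by
          rintro hv
          obtain ⟨-, ⟨-, -, hbv⟩ | ⟨hv', -⟩⟩ := mem_filter.1 v.2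
          · rw [hv, Nat.sub_add_cancel hw0, show w = n - 1 by omega, hbn] at hbv
            norm_num at hbv
          · omega
        simp [restrictFree, Pi.single_apply, Fin.ext_iff, hv]
    · convert (LinearMap.range (restrictFree b n)).zero_mem using 1
      funext v
      rw [if_neg (fun (h : (v : ℕ) = w) => hw (h ▸ v.2)), Pi.zero_apply]

lemma surjective_restrictFree (hbn : b (n - 1) = -1) : Function.Surjective (restrictFree b n) := by
  rw [← LinearMap.range_eq_top, eq_top_iff, ← (Pi.basisFun ℝ _).span_eq, Submodule.span_le]
  rintro _ ⟨v, rfl⟩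
  rw [SetLike.mem_coe]
  convert indicator_mem_range_restrictFree hbn v using 1
  funext u
  rw [Pi.basisFun_apply, Pi.single_apply]
  exact if_congr Subtype.ext_iff rfl rfl

lemma AlternatingBlocks.finrank_ker_maxSignMatrix {B : ℕ → ℕ} {k : ℕ}
    (hb : AlternatingBlocks b B k) (hk : 0 < k) (hn : B (2 * k) = n) :
    Module.finrank ℝ (LinearMap.ker (maxSignMatrix b n).mulVecLin)
      = #{v ∈ range n | IsFree b n v} := by
  rw [(LinearEquiv.ofBijective _ ⟨hb.injective_restrictFree hn,
      surjective_restrictFree (hb.last_eq_neg_one hk hn)⟩).finrank_eq,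
    Module.finrank_fintype_fun_eq_card, Fintype.card_coe]

lemma AlternatingBlocks.of_signs {β : ℕ → ℝ} {B : ℕ → ℕ} {k : ℕ} (hB0 : B 0 = 0)
    (hstep : ∀ p < 2 * k, B p < B (p + 1))
    (hβ : ∀ p j, 1 ≤ p → p ≤ 2 * k → B (p - 1) < j → j ≤ B p → β j = (-1 : ℝ) ^ (p + 1)) :
    AlternatingBlocks (fun i => β (i + 1)) B k := by
  refine ⟨hB0, strictMonoOn_of_lt_add_one Set.ordConnected_Iic fun p _ _ hp => hstep p ?_,
    fun l hl i hi hi' => ?_, fun l hl i hi hi' => ?_⟩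
  · have := Set.mem_Iic.1 hp; omega
  · rw [hβ (2 * l + 1) (i + 1) (by omega) (by omega) (by simpa using hi) (by omega)]
    exact Even.neg_one_pow ⟨l + 1, by ring⟩
  · rw [hβ (2 * l + 2) (i + 1) (by omega) (by omega) (by simpa using hi) (by omega)]
    exact Odd.neg_one_pow ⟨l + 1, by ring⟩

lemma sum_Icc_eq_sum_range_sub_one_add {f : ℕ → ℕ} {k : ℕ} (hf : ∀ i, 1 ≤ i → i ≤ k → 1 ≤ f i) :
    ∑ i ∈ Icc 1 k, f i = ∑ l ∈ range k, (f (l + 1) - 1) + k := by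
  calc ∑ i ∈ Icc 1 k, f i = ∑ l ∈ range k, f (l + 1) := by
        rw [range_eq_Ico, sum_Ico_add' f 0 k 1]; rfl
    _ = ∑ l ∈ range k, ((f (l + 1) - 1) + 1) := sum_congr rfl fun l hl => by
        have := hf (l + 1) (by omega) (by rw [mem_range] at hl; omega); omega
    _ = ∑ l ∈ range k, (f (l + 1) - 1) + k := by simp [sum_add_distrib]

end SeidelThreshold

open SeidelThreshold in
theorem stmt_10
    (k : ℕ) (hk : 1 ≤ k) (s t : ℕ → ℕ)
    (hs : ∀ i, 1 ≤ i → i ≤ k → 1 ≤ s i) (ht : ∀ i, 1 ≤ i → i ≤ k → 1 ≤ t i)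
    (c : ℕ → ℕ)
    (hc : ∀ i, 1 ≤ i → i ≤ k → c (2 * i - 1) = s i ∧ c (2 * i) = t i)
    (B : ℕ → ℕ) (hB0 : B 0 = 0) (hB : ∀ p, B (p + 1) = B p + c (p + 1))
    (n : ℕ) (hn : n = B (2 * k))
    (β : ℕ → ℝ)
    (hβ : ∀ p j, 1 ≤ p → p ≤ 2 * k → B (p - 1) < j → j ≤ B p →
      β j = (-1 : ℝ) ^ (p + 1))
    (S : Matrix (Fin n) (Fin n) ℝ)
    (hS : ∀ i j : Fin n, S i j = if i = j then 0 else β (max (i : ℕ) (j : ℕ) + 1)) :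
    (1 < t k → S.charpoly.rootMultiplicity (-1) =
      (∑ i ∈ Finset.Icc 1 k, s i) - k) ∧
    (t k = 1 → S.charpoly.rootMultiplicity (-1) =
      (∑ i ∈ Finset.Icc 1 k, s i) - k + 1) := by
  classical
  have hsB : ∀ l < k, B (2 * l + 1) = B (2 * l) + s (l + 1) := fun l hl => by
    rw [hB, ← (hc (l + 1) (by omega) (by omega)).1]; rfl
  have htB : ∀ l < k, B (2 * l + 2) = B (2 * l + 1) + t (l + 1) := fun l hl => by
    rw [hB, ← (hc (l + 1) (by omega) (by omega)).2]; rfl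
  have hblocks : AlternatingBlocks (fun i => β (i + 1)) B k := by
    refine .of_signs hB0 (fun p hp => ?_) hβ
    obtain ⟨l, rfl | rfl⟩ := Nat.even_or_odd' p
    · linarith [hsB l (by omega), hs (l + 1) (by omega) (by omega)]
    · rw [show 2 * l + 1 + 1 = 2 * l + 2 by ring]
      linarith [htB l (by omega), ht (l + 1) (by omega) (by omega)]
  have hSsub : S - scalar (Fin n) (-1 : ℝ) = maxSignMatrix (fun i => β (i + 1)) n := by
    ext i j
    rw [Matrix.sub_apply, hS, scalar_apply, diagonal_apply]
    simp only [maxSignMatrix, maxSignEntry, of_apply, Fin.val_inj]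
    split_ifs <;> simp
  have hherm : S.IsHermitian := IsHermitian.ext fun i j => by simp [hS, eq_comm, max_comm]
  have hmult : S.charpoly.rootMultiplicity (-1)
      = ∑ l ∈ range k, (s (l + 1) - 1) + if t k = 1 then 1 else 0 := by
    have hlast := htB (k - 1) (by omega)
    rw [show 2 * (k - 1) + 2 = 2 * k by omega, show 2 * (k - 1) + 1 = 2 * k - 1 by omega,
      Nat.sub_add_cancel hk] at hlast
    have := hherm.rootMultiplicity_charpoly (-1)
    simp only [RCLike.ofReal_real_eq_id, id] at this
    rw [this, (LinearEquiv.ofEq _ _ (by rw [hSsub])).finrank_eq,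
      hblocks.finrank_ker_maxSignMatrix hk hn.symm, hblocks.card_isFree hk hn.symm]
    congr 1
    · exact sum_congr rfl fun l hl => by rw [hsB l (mem_range.1 hl)]; omega
    · exact if_congr (by omega) rfl rfl
  rw [hmult, sum_Icc_eq_sum_range_sub_one_add hs]
  refine ⟨fun ht₁ => ?_, fun ht₁ => ?_⟩
  · rw [if_neg (by omega)]; omega
  · rw [if_pos ht₁]; omega
end

section
/- The multiplicity of 1 as a root of the characteristic polynomial of the Seidel matrix S equals (t_1 + t_2 + ⋯ + t_k) − k if s_1 > 1, and equals (t_1 + t_2 + ⋯ + t_k) − k + 1 if s_1 = 1. -/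
/-!
Since `S` is symmetric, the multiplicity of `1` as a root of its characteristic polynomial is the
dimension of the eigenspace `{v | S v = v}`. Describe `v` by its prefix sums
`P m = v 1 + ⋯ + v m`. The last row of `S v = v` reads `P n = 0` (the last position lies in a block
of `1`'s), and subtracting consecutive rows turns the other equations into the three-term relations
`(1 + β (a + 1)) P a + (1 + β (a + 2)) (P (a + 2) - 2 P (a + 1)) = 0`.
These are void between two positions of sign `-1`. On a maximal run `b < q ≤ c` of sign `+1` they
make `P` an arithmetic progression on `[b, c]` with `P (c - 1) = 0` and `P (b + 1) = 2 P b` (or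
`P b = 0` when `b = 0`), which forces `P = 0` on `[b, c]` unless the run is the single position `1`.
So the eigenspace is cut out by `P m = 0` for all `m` except the free ones: those `m < n` with
positions `m` and `m + 1` both of sign `-1`, and `m = 1` when `s 1 = 1`. A block of `t` ones
contributes `t - 1` free indices.
-/

open Polynomial Matrix Module Finset

theorem Matrix.IsHermitian.rootMultiplicity_charpoly_s11 {𝕜 ι : Type*} [RCLike 𝕜] [Fintype ι]
    [DecidableEq ι] {A : Matrix ι ι 𝕜} (hA : A.IsHermitian) (μ : 𝕜) :
    A.charpoly.rootMultiplicity μ = finrank 𝕜 (End.eigenspace (toLin' A) μ) := by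
  have hT := isSymmetric_toEuclideanLin_iff.mpr hA
  rw [← charpoly_toLin A (EuclideanSpace.basisFun ι 𝕜).toBasis,
    ← LinearMap.finrank_maxGenEigenspace_eq, ← toEuclideanLin_eq_toLin_orthonormal,
    hT.isFinitelySemisimple.maxGenEigenspace_eq_eigenspace]
  refine LinearEquiv.finrank_eq (LinearEquiv.ofSubmodules (WithLp.linearEquiv 2 𝕜 (ι → 𝕜)) _ _ ?_)
  ext v
  simp [← WithLp.toLp_smul]

theorem forall_lt_eq_iff_last_and_consecutive {α : Type*} {f : ℕ → α} {x : α} {n : ℕ} (hn : 0 < n) :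
    (∀ a < n, f a = x) ↔ f (n - 1) = x ∧ ∀ a, a + 2 ≤ n → f a = f (a + 1) := by
  refine ⟨fun h => ⟨h _ (by omega), fun a ha => (h a (by omega)).trans (h _ ha).symm⟩, ?_⟩
  rintro ⟨hlast, hstep⟩
  have key : ∀ j, j < n → f (n - 1 - j) = x := by
    intro j
    induction j with
    | zero => simpa using fun _ => hlast
    | succ j ih =>
      intro hj
      rw [hstep _ (by omega), show n - 1 - (j + 1) + 1 = n - 1 - j by omega]
      exact ih (by omega)
  intro a ha
  simpa [show n - 1 - (n - 1 - a) = a by omega] using key (n - 1 - a) (by omega)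

theorem eq_zero_of_arithmetic_run {P : ℕ → ℝ} {b c : ℕ} (hbc : b < c)
    (hlin : ∀ a, b ≤ a → a + 2 ≤ c → P (a + 2) - P (a + 1) = P (a + 1) - P a)
    (hend : P (c - 1) = 0) (hstart : (P b = 0 ∧ b + 2 ≤ c) ∨ P (b + 1) = 2 * P b) :
    ∀ m, b ≤ m → m ≤ c → P m = 0 := by
  set d := P (b + 1) - P b
  have hdiff : ∀ j, b + j + 1 ≤ c → P (b + j + 1) - P (b + j) = d := by
    intro j
    induction j with
    | zero => simp [d]
    | succ j ih =>
      intro hj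
      rw [← ih (by omega), ← hlin (b + j) (by omega) (by omega)]
      ring_nf
  have hap : ∀ j, b + j ≤ c → P (b + j) = P b + j * d := by
    intro j
    induction j with
    | zero => simp
    | succ j ih =>
      intro hj
      have := hdiff j (by omega)
      rw [← add_assoc, Nat.cast_succ]
      linarith [ih (by omega)]
  have hzero : P b = 0 ∧ d = 0 := by
    have h := hap (c - 1 - b) (by omega)
    rw [show b + (c - 1 - b) = c - 1 by omega, hend] at h
    rcases hstart with ⟨h0, hc⟩ | h2
    · have hk : ((c - 1 - b : ℕ) : ℝ) ≠ 0 := by exact_mod_cast (show c - 1 - b ≠ 0 by omega)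
      exact ⟨h0, (mul_eq_zero.mp (by linarith : ((c - 1 - b : ℕ) : ℝ) * d = 0)).resolve_left hk⟩
    · have hd : d = P b := by simp only [d]; linarith
      rw [hd] at h
      have hPb : P b = 0 := (mul_eq_zero.mp
        (by linarith : ((c - 1 - b : ℕ) + 1 : ℝ) * P b = 0)).resolve_left (by positivity)
      exact ⟨hPb, hd.trans hPb⟩
  intro m hbm hmc
  obtain ⟨j, rfl⟩ := Nat.exists_eq_add_of_le hbm
  rw [hap j hmc, hzero.1, hzero.2, mul_zero, add_zero]

-- Row `a` minus row `a + 1` of `(S - 1) *ᵥ v`, written in the prefix sums `P` of `v`.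
def seidelRowDiff (β P : ℕ → ℝ) (a : ℕ) : ℝ :=
  (1 + β (a + 1)) * P a + (1 + β (a + 2)) * (P (a + 2) - 2 * P (a + 1))

section PrefixSums

variable {n : ℕ}

def extendByZero (v : Fin n → ℝ) (j : ℕ) : ℝ := if h : j < n then v ⟨j, h⟩ else 0

def prefixSum (v : Fin n → ℝ) (m : ℕ) : ℝ := ∑ j ∈ range m, extendByZero v j

lemma extendByZero_of_lt (v : Fin n → ℝ) {j : ℕ} (h : j < n) : extendByZero v j = v ⟨j, h⟩ :=
  dif_pos h

lemma extendByZero_eq_sub (v : Fin n → ℝ) (j : ℕ) :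
    extendByZero v j = prefixSum v (j + 1) - prefixSum v j := by
  simp [prefixSum, sum_range_succ]

theorem finrank_eq_of_prefixSum_vanishing {Z : Finset ℕ} (hZ : ∀ m ∈ Z, 0 < m ∧ m ≤ n)
    (W : Submodule ℝ (Fin n → ℝ)) (hW : ∀ v, v ∈ W ↔ ∀ m ∈ Z, prefixSum v m = 0) :
    finrank ℝ W = n - #Z := by
  let Φ : (Fin n → ℝ) →ₗ[ℝ] (Z → ℝ) :=
    { toFun v m := prefixSum v m
      map_add' u v := by
        ext m
        simp only [prefixSum, Pi.add_apply, ← sum_add_distrib]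
        refine sum_congr rfl fun j _ => ?_
        unfold extendByZero
        split_ifs <;> simp
      map_smul' c v := by
        ext m
        simp only [prefixSum, Pi.smul_apply, smul_eq_mul, mul_sum, RingHom.id_apply]
        refine sum_congr rfl fun j _ => ?_
        unfold extendByZero
        split_ifs <;> simp }
  have hker : W = LinearMap.ker Φ := by
    ext v
    simp [hW, Φ, funext_iff]
  have hsurj : Function.Surjective Φ := by
    intro y
    let g : ℕ → ℝ := fun m => if h : m ∈ Z then y ⟨m, h⟩ else 0
    refine ⟨fun j => g (j + 1) - g j, funext fun m => ?_⟩
    have hg0 : g 0 = 0 := dif_neg fun h => (hZ 0 h).1.ne rfl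
    show ∑ j ∈ range m, extendByZero _ j = y m
    have hterm : ∀ j ∈ range m, extendByZero (fun i : Fin n => g (i + 1) - g i) j =
        g (j + 1) - g j := fun j hj =>
      extendByZero_of_lt _ ((mem_range.mp hj).trans_le (hZ m m.2).2)
    rw [sum_congr rfl hterm, sum_range_sub g, hg0, sub_zero]
    exact dif_pos m.2
  have := LinearMap.finrank_range_add_finrank_ker Φ
  rw [LinearMap.range_eq_top.mpr hsurj, finrank_top, Module.finrank_fintype_fun_eq_card,
    Module.finrank_fintype_fun_eq_card, Fintype.card_coe, Fintype.card_fin] at this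
  rw [hker]
  omega

theorem seidel_mulVec_apply {β : ℕ → ℝ} {S : Matrix (Fin n) (Fin n) ℝ}
    (hS : ∀ i j : Fin n, S i j = if i = j then 0 else β (max (i : ℕ) (j : ℕ) + 1))
    (v : Fin n → ℝ) {a : ℕ} (ha : a < n) :
    (S *ᵥ v) ⟨a, ha⟩ =
      β (a + 1) * prefixSum v a + ∑ j ∈ Ico (a + 1) n, β (j + 1) * extendByZero v j := by
  have hrow : (S *ᵥ v) ⟨a, ha⟩ =
      ∑ j ∈ range n, (if j = a then 0 else β (max a j + 1)) * extendByZero v j := by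
    rw [mulVec, dotProduct, ← Fin.sum_univ_eq_sum_range]
    refine sum_congr rfl fun j _ => ?_
    simp [hS, extendByZero, Fin.ext_iff, eq_comm]
  rw [hrow, range_eq_Ico, ← sum_Ico_consecutive _ (Nat.zero_le a) ha.le,
    sum_eq_sum_Ico_succ_bot ha, prefixSum, range_eq_Ico, mul_sum, if_pos rfl, zero_mul, zero_add]
  congr 1 <;> refine sum_congr rfl fun j hj => ?_
  · have : j < a := (mem_Ico.mp hj).2
    rw [if_neg this.ne, max_eq_left this.le]
  · have : a < j := (mem_Ico.mp hj).1
    rw [if_neg this.ne', max_eq_right this.le]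

theorem seidel_mulVec_eq_self_iff {β : ℕ → ℝ} {S : Matrix (Fin n) (Fin n) ℝ}
    (hS : ∀ i j : Fin n, S i j = if i = j then 0 else β (max (i : ℕ) (j : ℕ) + 1))
    (hn : 0 < n) (v : Fin n → ℝ) :
    S *ᵥ v = v ↔ prefixSum v n = (1 + β n) * prefixSum v (n - 1) ∧
      ∀ a, a + 2 ≤ n → seidelRowDiff β (prefixSum v) a = 0 := by
  set P := prefixSum v
  let f : ℕ → ℝ := fun a =>
    β (a + 1) * P a + ∑ j ∈ Ico (a + 1) n, β (j + 1) * extendByZero v j - extendByZero v a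
  have hf : S *ᵥ v = v ↔ ∀ a < n, f a = 0 := by
    simp only [funext_iff, Fin.forall_iff, f, seidel_mulVec_apply hS, sub_eq_zero]
    exact forall₂_congr fun a ha => by rw [extendByZero_of_lt v ha]
  have hlast : f (n - 1) = (1 + β n) * P (n - 1) - P n := by
    simp only [f, Nat.sub_add_cancel hn, Ico_self, sum_empty, extendByZero_eq_sub]
    ring
  have hstep : ∀ a, a + 2 ≤ n → f a - f (a + 1) = seidelRowDiff β P a := by
    intro a ha
    simp only [f, seidelRowDiff, sum_eq_sum_Ico_succ_bot (show a + 1 < n by omega),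
      extendByZero_eq_sub]
    ring
  rw [hf, forall_lt_eq_iff_last_and_consecutive hn, hlast]
  refine and_congr (by constructor <;> intro h <;> linarith) (forall₂_congr fun a ha => ?_)
  rw [← hstep a ha, sub_eq_zero]

end PrefixSums

abbrev IsFreeIndex (β : ℕ → ℝ) (m : ℕ) : Prop := 0 < m ∧ β (m + 1) = -1 ∧ (m = 1 ∨ β m = -1)

-- The indices `m` at which the prefix sum of a `1`-eigenvector is unconstrained.
noncomputable def freeIndices (β : ℕ → ℝ) (n : ℕ) : Finset ℕ := (range n).filter (IsFreeIndex β)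

section SignRuns

variable {β : ℕ → ℝ} {n : ℕ}

theorem exists_run_end (hβ : ∀ p ∈ Icc 1 n, β p = 1 ∨ β p = -1) (hβn : β n = -1)
    {p : ℕ} (hpn : p ≤ n) (hp : β p = 1) :
    ∃ c, p ≤ c ∧ c < n ∧ (∀ q, p ≤ q → q ≤ c → β q = 1) ∧ β (c + 1) = -1 := by
  have hpn' : p < n := lt_of_le_of_ne hpn (by rintro rfl; norm_num [hp] at hβn)
  have hex : ∃ c, p ≤ c ∧ β (c + 1) = -1 :=
    ⟨n - 1, by omega, by rwa [Nat.sub_add_cancel (by omega)]⟩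
  obtain ⟨hpc, hc⟩ := Nat.find_spec hex
  have hcn : Nat.find hex < n := by
    have := Nat.find_min' hex ⟨show p ≤ n - 1 by omega, by rwa [Nat.sub_add_cancel (by omega)]⟩
    omega
  refine ⟨Nat.find hex, hpc, hcn, fun q hpq hqc => ?_, hc⟩
  rcases hpq.eq_or_lt with rfl | hpq
  · exact hp
  have hmin := Nat.find_min hex (m := q - 1) (by omega)
  rw [Nat.sub_add_cancel (by omega)] at hmin
  exact (hβ q (mem_Icc.mpr ⟨by omega, by omega⟩)).resolve_right fun h => hmin ⟨by omega, h⟩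

theorem exists_run_start (hβ : ∀ p ∈ Icc 1 n, β p = 1 ∨ β p = -1)
    {p : ℕ} (hp0 : 0 < p) (hpn : p ≤ n) (hp : β p = 1) :
    ∃ b < p, (∀ q, b < q → q ≤ p → β q = 1) ∧ (b = 0 ∨ β b = -1) := by
  classical
  let IsBoundary : ℕ → Prop := fun q => q = 0 ∨ β q = -1
  have hb : IsBoundary (Nat.findGreatest IsBoundary p) :=
    Nat.findGreatest_spec (Nat.zero_le p) (Or.inl rfl)
  have hmax : ∀ q, Nat.findGreatest IsBoundary p < q → q ≤ p → ¬IsBoundary q :=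
    fun q hbq hqp => Nat.findGreatest_is_greatest hbq hqp
  have hbp : Nat.findGreatest IsBoundary p < p := by
    refine lt_of_le_of_ne (Nat.findGreatest_le p) fun h => ?_
    rcases h ▸ hb with h0 | h1
    · omega
    · norm_num [hp] at h1
  refine ⟨_, hbp, fun q hbq hqp => ?_, hb⟩
  have := hmax q hbq hqp
  exact (hβ q (mem_Icc.mpr ⟨by omega, by omega⟩)).resolve_right fun h => this (Or.inr h)

theorem eq_zero_on_run {P : ℕ → ℝ} (hrel : ∀ a, a + 2 ≤ n → seidelRowDiff β P a = 0)
    (hP0 : P 0 = 0) {b c : ℕ} (hbc : b < c) (hc2 : 2 ≤ c) (hcn : c < n)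
    (hrun : ∀ q, b < q → q ≤ c → β q = 1) (hc : β (c + 1) = -1) (hb : b = 0 ∨ β b = -1) :
    ∀ m, b ≤ m → m ≤ c → P m = 0 := by
  refine eq_zero_of_arithmetic_run hbc (fun a hba hac => ?_) ?_ ?_
  · have h := hrel a (by omega)
    rw [seidelRowDiff, hrun (a + 1) (by omega) (by omega), hrun (a + 2) (by omega) hac] at h
    linarith
  · have h := hrel (c - 1) (by omega)
    rw [seidelRowDiff, Nat.sub_add_cancel (by omega), show c - 1 + 2 = c + 1 by omega,
      hrun c hbc le_rfl, hc] at h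
    linarith
  · rcases Nat.eq_zero_or_pos b with rfl | hb0
    · exact Or.inl ⟨hP0, by omega⟩
    · have h := hrel (b - 1) (by omega)
      rw [seidelRowDiff, Nat.sub_add_cancel hb0, show b - 1 + 2 = b + 1 by omega,
        hb.resolve_left hb0.ne', hrun (b + 1) (by omega) (by omega)] at h
      exact Or.inr (by linarith)

theorem prefix_eq_zero_of_seidelRowDiff (hβ : ∀ p ∈ Icc 1 n, β p = 1 ∨ β p = -1)
    (hβn : β n = -1) {P : ℕ → ℝ} (hP0 : P 0 = 0) (hPn : P n = 0)
    (hrel : ∀ a, a + 2 ≤ n → seidelRowDiff β P a = 0) :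
    ∀ m ∈ Icc 1 n \ freeIndices β n, P m = 0 := by
  intro m hm
  simp only [freeIndices, mem_sdiff, mem_Icc, mem_filter, mem_range] at hm
  obtain ⟨⟨hm1, hmn⟩, hfree⟩ := hm
  rcases hmn.eq_or_lt with rfl | hmn
  · exact hPn
  obtain ⟨p, hp2, hpn, hp, hmp⟩ : ∃ p, 2 ≤ p ∧ p ≤ n ∧ β p = 1 ∧ (m = p ∨ m + 1 = p) := by
    rcases hβ (m + 1) (mem_Icc.mpr ⟨by omega, by omega⟩) with h | h
    · exact ⟨m + 1, by omega, by omega, h, Or.inr rfl⟩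
    · obtain ⟨hm1', hm⟩ := not_or.mp fun h' => hfree ⟨hmn, hm1, h, h'⟩
      exact ⟨m, by omega, hmn.le, (hβ m (mem_Icc.mpr ⟨hm1, hmn.le⟩)).resolve_right hm,
        Or.inl rfl⟩
  obtain ⟨b, hbp, hrun₁, hb⟩ := exists_run_start hβ (by omega) hpn hp
  obtain ⟨c, hpc, hcn, hrun₂, hc⟩ := exists_run_end hβ hβn hpn hp
  refine eq_zero_on_run hrel hP0 (by omega) (by omega) hcn (fun q hbq hqc => ?_) hc hb m
    (by omega) (by omega)
  exact if hqp : q ≤ p then hrun₁ q hbq hqp else hrun₂ q (by omega) hqc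

theorem seidelRowDiff_eq_zero_of_prefix (hβ : ∀ p ∈ Icc 1 n, β p = 1 ∨ β p = -1)
    {P : ℕ → ℝ} (hP0 : P 0 = 0) (hZ : ∀ m ∈ Icc 1 n \ freeIndices β n, P m = 0)
    {a : ℕ} (ha : a + 2 ≤ n) : seidelRowDiff β P a = 0 := by
  have hzero : ∀ m, m ≤ n → (m < n ∧ β (m + 1) = 1 ∨ 2 ≤ m ∧ β m = 1) → P m = 0 := by
    intro m hmn hm
    rcases Nat.eq_zero_or_pos m with rfl | hm0
    · exact hP0
    refine hZ m (mem_sdiff.mpr ⟨mem_Icc.mpr ⟨hm0, hmn⟩, fun h => ?_⟩)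
    obtain ⟨-, -, h₁, h₂⟩ := mem_filter.mp h
    rcases hm with ⟨_, h'⟩ | ⟨h2, h'⟩
    · norm_num [h'] at h₁
    · rcases h₂ with rfl | h₂
      · omega
      · norm_num [h'] at h₂
  have h₁ : (1 + β (a + 1)) * P a = 0 := by
    rcases hβ (a + 1) (mem_Icc.mpr ⟨by omega, by omega⟩) with h | h
    · rw [hzero a (by omega) (Or.inl ⟨by omega, h⟩), mul_zero]
    · rw [h]; ring
  have h₂ : (1 + β (a + 2)) * (P (a + 2) - 2 * P (a + 1)) = 0 := by
    rcases hβ (a + 2) (mem_Icc.mpr ⟨by omega, ha⟩) with h | h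
    · rw [hzero (a + 1) (by omega) (Or.inl ⟨by omega, h⟩),
        hzero (a + 2) ha (Or.inr ⟨by omega, h⟩)]
      ring
    · rw [h]; ring
  rw [seidelRowDiff, h₁, h₂, add_zero]

theorem finrank_eigenspace_seidel_one {β : ℕ → ℝ} {S : Matrix (Fin n) (Fin n) ℝ}
    (hS : ∀ i j : Fin n, S i j = if i = j then 0 else β (max (i : ℕ) (j : ℕ) + 1))
    (hβ : ∀ p ∈ Icc 1 n, β p = 1 ∨ β p = -1) (hβn : β n = -1) (hn : 0 < n) :
    finrank ℝ (End.eigenspace (toLin' S) 1) = #(freeIndices β n) := by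
  have hP0 (v : Fin n → ℝ) : prefixSum v 0 = 0 := sum_range_zero _
  have hsub : freeIndices β n ⊆ Icc 1 n := fun m hm => by
    simp only [freeIndices, mem_filter, mem_range] at hm
    exact mem_Icc.mpr ⟨hm.2.1, hm.1.le⟩
  rw [finrank_eq_of_prefixSum_vanishing (Z := Icc 1 n \ freeIndices β n),
    card_sdiff_of_subset hsub, Nat.card_Icc, Nat.add_sub_cancel]
  · have := card_le_card hsub
    rw [Nat.card_Icc, Nat.add_sub_cancel] at this
    omega
  · intro m hm
    have := (mem_sdiff.mp hm).1
    rw [mem_Icc] at this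
    omega
  · intro v
    rw [End.mem_eigenspace_iff, toLin'_apply, one_smul, seidel_mulVec_eq_self_iff hS hn, hβn,
      add_neg_cancel, zero_mul]
    exact ⟨fun h => prefix_eq_zero_of_seidelRowDiff hβ hβn (hP0 v) h.1 h.2,
      fun h => ⟨h n (by simp [freeIndices]; omega),
        fun a ha => seidelRowDiff_eq_zero_of_prefix hβ (hP0 v) h ha⟩⟩

end SignRuns

theorem strictMonoOn_Iic_of_succ_eq_add {B c : ℕ → ℕ} {N : ℕ}
    (hB : ∀ p, B (p + 1) = B p + c (p + 1)) (hc : ∀ q, 1 ≤ q → q ≤ N → 1 ≤ c q) :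
    StrictMonoOn B (Set.Iic N) :=
  strictMonoOn_Iic_of_lt_succ fun p hp => by
    rw [Order.succ_eq_add_one, hB p]
    have := hc (p + 1) (by omega) (by omega)
    omega

section Blocks

variable {β : ℕ → ℝ} {B : ℕ → ℕ} {k : ℕ}

theorem exists_block_of_le (hB0 : B 0 = 0) :
    ∀ N j, 0 < j → j ≤ B N → ∃ q, 1 ≤ q ∧ q ≤ N ∧ B (q - 1) < j ∧ j ≤ B q := by
  intro N
  induction N with
  | zero => intro j hj hjN; omega
  | succ N ih =>
    intro j hj hjN
    by_cases h : j ≤ B N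
    · obtain ⟨q, hq⟩ := ih j hj h
      exact ⟨q, hq.1, by omega, hq.2.2⟩
    · exact ⟨N + 1, by omega, le_rfl, by simpa using h, hjN⟩

theorem sign_of_blocks (hB0 : B 0 = 0)
    (hβ : ∀ p j, 1 ≤ p → p ≤ 2 * k → B (p - 1) < j → j ≤ B p → β j = (-1 : ℝ) ^ (p + 1)) :
    ∀ j ∈ Icc 1 (B (2 * k)), β j = 1 ∨ β j = -1 := by
  intro j hj
  obtain ⟨q, hq1, hqk, hlo, hhi⟩ :=
    exists_block_of_le hB0 (2 * k) j (mem_Icc.mp hj).1 (mem_Icc.mp hj).2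
  rw [hβ q j hq1 hqk hlo hhi]
  exact neg_one_pow_eq_or ℝ _

theorem card_filter_isFreeIndex_Ico {a b c : ℕ} (hab : a < b) (hbc : b < c)
    (hone : ∀ j, a < j → j ≤ b → β j = 1) (hneg : ∀ j, b < j → j ≤ c → β j = -1) :
    #((Ico a c).filter (IsFreeIndex β)) = c - b - 1 + if b = 1 then 1 else 0 := by
  have hzero : ∀ m ∈ Ico a b, ¬IsFreeIndex β m := fun m hm ⟨_, h, _⟩ => by
    rw [hone (m + 1) (by simp at hm; omega) (by simp at hm; omega)] at h
    norm_num at h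
  have hall : ∀ m ∈ Ico (b + 1) c, IsFreeIndex β m := fun m hm => by
    simp only [mem_Ico] at hm
    exact ⟨by omega, hneg _ (by omega) (by omega), Or.inr (hneg _ (by omega) (by omega))⟩
  have hb : IsFreeIndex β b ↔ b = 1 := by
    norm_num [IsFreeIndex, hneg (b + 1) (by omega) (by omega), hone b hab le_rfl]
    omega
  rw [card_filter, ← sum_Ico_consecutive _ hab.le hbc.le,
    sum_eq_zero fun m hm => if_neg (hzero m hm), zero_add, sum_eq_sum_Ico_succ_bot hbc,
    sum_congr rfl fun m hm => if_pos (hall m hm), sum_const, Nat.card_Ico, smul_eq_mul, mul_one, if_congr hb rfl rfl]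
  omega

theorem card_freeIndices_eq_sum_blocks (hB0 : B 0 = 0) (hB : StrictMonoOn B (Set.Iic (2 * k)))
    (hβ : ∀ p j, 1 ≤ p → p ≤ 2 * k → B (p - 1) < j → j ≤ B p → β j = (-1 : ℝ) ^ (p + 1)) :
    ∀ j ≤ k, #(freeIndices β (B (2 * j))) =
      ∑ i ∈ Icc 1 j, (B (2 * i) - B (2 * i - 1) - 1 + if B (2 * i - 1) = 1 then 1 else 0) := by
  have hlt : ∀ p q, p < q → q ≤ 2 * k → B p < B q := fun p q hpq hq =>
    hB (Set.mem_Iic.mpr (by omega)) (Set.mem_Iic.mpr hq) hpq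
  intro j
  induction j with
  | zero => simp [freeIndices, hB0]
  | succ j ih =>
    intro hj
    have hpair := card_filter_isFreeIndex_Ico (β := β)
      (hlt (2 * j) (2 * j + 1) (by omega) (by omega))
      (hlt (2 * j + 1) (2 * j + 2) (by omega) (by omega))
      (fun i h1 h2 => by
        simpa [pow_succ, pow_mul] using hβ (2 * j + 1) i (by omega) (by omega) h1 h2)
      (fun i h1 h2 => by
        simpa [pow_succ, pow_mul] using hβ (2 * j + 2) i (by omega) (by omega) h1 h2)
    simp only [freeIndices] at ih ⊢
    rw [sum_Icc_succ_top (by omega), ← ih (by omega), show 2 * (j + 1) = 2 * j + 2 by ring,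
      show 2 * j + 2 - 1 = 2 * j + 1 by omega, ← hpair, card_filter, card_filter, card_filter,
      sum_range_add_sum_Ico _ (hlt _ _ (by omega) (by omega)).le]

theorem card_freeIndices_of_blocks (hk : 1 ≤ k) (hB0 : B 0 = 0)
    (hB : StrictMonoOn B (Set.Iic (2 * k)))
    (hβ : ∀ p j, 1 ≤ p → p ≤ 2 * k → B (p - 1) < j → j ≤ B p → β j = (-1 : ℝ) ^ (p + 1)) :
    #(freeIndices β (B (2 * k))) =
      (∑ i ∈ Icc 1 k, (B (2 * i) - B (2 * i - 1))) - k + if B 1 = 1 then 1 else 0 := by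
  have hlt : ∀ p q, p < q → q ≤ 2 * k → B p < B q := fun p q hpq hq =>
    hB (Set.mem_Iic.mpr (by omega)) (Set.mem_Iic.mpr hq) hpq
  have hfirst : ∑ i ∈ Icc 1 k, (if B (2 * i - 1) = 1 then 1 else 0) = if B 1 = 1 then 1 else 0 := by
    rw [sum_eq_single_of_mem 1 (mem_Icc.mpr ⟨le_rfl, hk⟩)]
    intro i hi hi1
    have := hlt 1 (2 * i - 1) (by simp at hi; omega) (by simp at hi; omega)
    have := hlt 0 1 (by omega) (by omega)
    rw [if_neg (by omega)]
  rw [card_freeIndices_eq_sum_blocks hB0 hB hβ k le_rfl, sum_add_distrib, hfirst,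
    sum_tsub_distrib _ fun i hi => ?_, sum_const, Nat.card_Icc, smul_eq_mul, mul_one,
    Nat.add_sub_cancel]
  simp only [mem_Icc] at hi
  have := hlt (2 * i - 1) (2 * i) (by omega) (by omega)
  omega

end Blocks

open Polynomial Matrix

theorem stmt_11
    (k : ℕ) (hk : 1 ≤ k) (s t : ℕ → ℕ)
    (hs : ∀ i, 1 ≤ i → i ≤ k → 1 ≤ s i) (ht : ∀ i, 1 ≤ i → i ≤ k → 1 ≤ t i)
    (c : ℕ → ℕ)
    (hc : ∀ i, 1 ≤ i → i ≤ k → c (2 * i - 1) = s i ∧ c (2 * i) = t i)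
    (B : ℕ → ℕ) (hB0 : B 0 = 0) (hB : ∀ p, B (p + 1) = B p + c (p + 1))
    (n : ℕ) (hn : n = B (2 * k))
    (β : ℕ → ℝ)
    (hβ : ∀ p j, 1 ≤ p → p ≤ 2 * k → B (p - 1) < j → j ≤ B p →
      β j = (-1 : ℝ) ^ (p + 1))
    (S : Matrix (Fin n) (Fin n) ℝ)
    (hS : ∀ i j : Fin n, S i j = if i = j then 0 else β (max (i : ℕ) (j : ℕ) + 1)) :
    (1 < s 1 → S.charpoly.rootMultiplicity 1 =
      (∑ i ∈ Finset.Icc 1 k, t i) - k) ∧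
    (s 1 = 1 → S.charpoly.rootMultiplicity 1 =
      (∑ i ∈ Finset.Icc 1 k, t i) - k + 1) := by
  subst hn
  have hcpos : ∀ q, 1 ≤ q → q ≤ 2 * k → 1 ≤ c q := by
    intro q hq1 hqk
    rcases Nat.even_or_odd' q with ⟨r, rfl | rfl⟩
    · rw [(hc r (by omega) (by omega)).2]
      exact ht r (by omega) (by omega)
    · rw [show 2 * r + 1 = 2 * (r + 1) - 1 by omega, (hc (r + 1) (by omega) (by omega)).1]
      exact hs (r + 1) (by omega) (by omega)
  have hBmono : StrictMonoOn B (Set.Iic (2 * k)) := strictMonoOn_Iic_of_succ_eq_add hB hcpos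
  have hherm : S.IsHermitian := IsHermitian.ext fun i j => by simp [hS, eq_comm, max_comm]
  have hβlast : β (B (2 * k)) = -1 := by
    rw [hβ (2 * k) _ (by omega) le_rfl (hBmono (by simp) (by simp) (by omega)) le_rfl]
    simp [pow_succ, pow_mul]
  have hpos : 0 < B (2 * k) := hB0 ▸ hBmono (by simp) (by simp) (by omega)
  have hsum : ∑ i ∈ Icc 1 k, (B (2 * i) - B (2 * i - 1)) = ∑ i ∈ Icc 1 k, t i := by
    refine sum_congr rfl fun i hi => ?_
    rw [mem_Icc] at hi
    rw [← (hc i hi.1 hi.2).2, show 2 * i = 2 * i - 1 + 1 by omega, hB,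
      Nat.sub_add_cancel (by omega)]
    omega
  have hB1 : B 1 = s 1 := by
    rw [hB 0, hB0, zero_add]
    exact (hc 1 le_rfl hk).1
  rw [hherm.rootMultiplicity_charpoly_s11, finrank_eigenspace_seidel_one hS (sign_of_blocks hB0 hβ)
    hβlast hpos, card_freeIndices_of_blocks hk hB0 hBmono hβ, hsum, hB1]
  exact ⟨fun h => by rw [if_neg h.ne', add_zero], fun h => by rw [if_pos h]⟩
end

section
/- The Seidel matrix S of the connected threshold graph with binary string 0^{s_1}1^{t_1}⋯0^{s_k}1^{t_k} has exactly two distinct eigenvalues if and only if k = 1 and (s_1 = 1 or t_1 = 1), i.e., if and only if the graph is the complete graph K_n (string 01^{n−1}) or the star S_n (string 0^{n−1}1). -/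
open Polynomial Matrix

lemma eval_charpoly'' {n : ℕ} (M : Matrix (Fin n) (Fin n) ℝ) (x : ℝ) :
    M.charpoly.eval x = (x • (1 : Matrix (Fin n) (Fin n) ℝ) - M).det := by
  rw [Matrix.charpoly, ← Polynomial.coe_evalRingHom, RingHom.map_det]
  congr 1
  ext i j
  by_cases h : i = j
  · subst h; simp [Matrix.charmatrix_apply_eq, Matrix.one_apply]
  · simp [Matrix.charmatrix_apply_ne _ _ _ h, Matrix.one_apply, h]

lemma root_iff_eigen {n : ℕ} (S : Matrix (Fin n) (Fin n) ℝ) (x : ℝ) :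
    x ∈ S.charpoly.roots ↔ ∃ v : Fin n → ℝ, v ≠ 0 ∧ S *ᵥ v = x • v := by
  rw [Polynomial.mem_roots (S.charpoly_monic.ne_zero), Polynomial.IsRoot, eval_charpoly'']
  rw [← Matrix.exists_mulVec_eq_zero_iff]
  constructor
  · rintro ⟨v, hv, hv0⟩
    refine ⟨v, hv, ?_⟩
    rw [Matrix.sub_mulVec, Matrix.smul_mulVec, Matrix.one_mulVec, sub_eq_zero] at hv0
    exact hv0.symm
  · rintro ⟨v, hv, hSv⟩
    exact ⟨v, hv, by
      rw [Matrix.sub_mulVec, Matrix.smul_mulVec, Matrix.one_mulVec, hSv, sub_self]⟩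

lemma quad_expand {n : ℕ} (S : Matrix (Fin n) (Fin n) ℝ) (a b : ℝ) :
    (S - a • 1) * (S - b • 1) = S * S - (a + b) • S + (a * b) • 1 := by
  rw [sub_mul, mul_sub, mul_sub, Matrix.mul_smul, Matrix.smul_mul, Matrix.smul_mul,
    Matrix.mul_smul, mul_one, one_mul, smul_smul, add_smul, mul_one]
  abel

lemma root_of_quad {n : ℕ} (S : Matrix (Fin n) (Fin n) ℝ) (a b x : ℝ)
    (hq : (S - a • 1) * (S - b • 1) = 0) (hx : x ∈ S.charpoly.roots) :
    x = a ∨ x = b := by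
  obtain ⟨v, hv, hSv⟩ := (root_iff_eigen S x).mp hx
  have h1 : (S - b • 1) *ᵥ v = (x - b) • v := by
    rw [Matrix.sub_mulVec, Matrix.smul_mulVec, Matrix.one_mulVec, hSv, sub_smul]
  have h2 : ((S - a • 1) * (S - b • 1)) *ᵥ v = ((x - a) * (x - b)) • v := by
    rw [← Matrix.mulVec_mulVec, h1, Matrix.mulVec_smul, Matrix.sub_mulVec,
      Matrix.smul_mulVec, Matrix.one_mulVec, hSv]
    module
  rw [hq, Matrix.zero_mulVec] at h2
  rcases smul_eq_zero.mp h2.symm with h3 | h3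
  · rcases mul_eq_zero.mp h3 with h | h
    · left; linarith [sub_eq_zero.mp h]
    · right; linarith [sub_eq_zero.mp h]
  · exact absurd h3 hv

lemma key_spec {n : ℕ} (hn2 : 2 ≤ n) (S : Matrix (Fin n) (Fin n) ℝ)
    (hsym : S.IsHermitian) (hd0 : ∀ i, S i i = 0)
    (hd2 : ∀ i, (S * S) i i = (n : ℝ) - 1) :
    S.charpoly.roots.toFinset.card = 2 ↔
      ∃ c : ℝ, S * S = c • S + ((n : ℝ) - 1) • (1 : Matrix (Fin n) (Fin n) ℝ) := by
  have hn1 : (1 : ℝ) ≤ (n : ℝ) - 1 := by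
    have : (2 : ℝ) ≤ (n : ℝ) := by exact_mod_cast hn2
    linarith
  set U : Matrix (Fin n) (Fin n) ℝ := (hsym.eigenvectorUnitary : Matrix (Fin n) (Fin n) ℝ) with hUdef
  set D : Matrix (Fin n) (Fin n) ℝ := Matrix.diagonal hsym.eigenvalues with hDdef
  have hU1 : star U * U = 1 := Matrix.mem_unitaryGroup_iff'.mp (hsym.eigenvectorUnitary).2
  have hU2 : U * star U = 1 := Matrix.mem_unitaryGroup_iff.mp (hsym.eigenvectorUnitary).2
  have hspec : S = U * D * star U := by
    have := hsym.spectral_theorem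
    simpa using this
  have htr : ∑ i, hsym.eigenvalues i = 0 := by
    have h4 : S.trace = ∑ i, hsym.eigenvalues i := by
      conv_lhs => rw [hspec]
      rw [Matrix.trace_mul_cycle, hU1, one_mul, hDdef, Matrix.trace_diagonal]
    rw [← h4, Matrix.trace]
    simp [Matrix.diag, hd0]
  have hevroot : ∀ i, hsym.eigenvalues i ∈ S.charpoly.roots := by
    intro i
    rw [root_iff_eigen]
    refine ⟨⇑(hsym.eigenvectorBasis i), ?_, hsym.mulVec_eigenvectorBasis i⟩
    intro hj
    apply hsym.eigenvectorBasis.orthonormal.ne_zero i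
    ext l
    exact congrFun hj l
  have i0 : Fin n := ⟨0, by omega⟩
  have hconj : ∀ x : ℝ, S - x • 1 = U * (D - x • 1) * star U := by
    intro x
    have h1 : U * (x • 1) * star U = x • 1 := by
      simp [Matrix.mul_smul, Matrix.smul_mul, hU2]
    rw [Matrix.mul_sub, Matrix.sub_mul, h1, ← hspec]
  have hcard : ∀ a b : ℝ, a ≠ b → (S - a • 1) * (S - b • 1) = 0 →
      S.charpoly.roots.toFinset ⊆ {a, b} := by
    intro a b hab hq
    intro x hx
    rcases root_of_quad S a b x hq (Multiset.mem_toFinset.mp hx) with h | h <;> simp [h]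
  constructor
  · -- card = 2 → quadratic relation
    intro h2
    obtain ⟨a, b, hab, habs⟩ := Finset.card_eq_two.mp h2
    have hroots : ∀ x ∈ S.charpoly.roots, x = a ∨ x = b := by
      intro x hx
      have : x ∈ ({a, b} : Finset ℝ) := habs ▸ Multiset.mem_toFinset.mpr hx
      simpa using this
    have heig : ∀ i, (hsym.eigenvalues i - a) * (hsym.eigenvalues i - b) = 0 := by
      intro i
      rcases hroots _ (hevroot i) with h | h <;> rw [h] <;> ring_nf <;>
        simp [sub_self, mul_comm]
    have hDq : (D - a • 1) * (D - b • 1) = 0 := by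
      rw [hDdef, Matrix.smul_one_eq_diagonal, Matrix.smul_one_eq_diagonal,
        Matrix.diagonal_sub, Matrix.diagonal_sub, Matrix.diagonal_mul_diagonal]
      ext i j
      by_cases h : i = j
      · subst h
        simp only [Matrix.diagonal_apply_eq, Matrix.zero_apply, Pi.sub_apply]
        simpa using heig i
      · simp [Matrix.diagonal_apply_ne _ h]
    have hSq : (S - a • 1) * (S - b • 1) = 0 := by
      rw [hconj a, hconj b]
      simp only [Matrix.mul_assoc]
      rw [← Matrix.mul_assoc (star U) U, hU1, one_mul,
        ← Matrix.mul_assoc (D - a • 1) (D - b • 1), hDq, Matrix.zero_mul, Matrix.mul_zero]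
    have hrel : S * S = (a + b) • S - (a * b) • 1 := by
      have := quad_expand S a b
      rw [hSq] at this
      have h := this.symm
      rw [← sub_eq_zero] at h ⊢
      rw [← h]
      abel
    have hprod : a * b = -((n : ℝ) - 1) := by
      have := congrFun (congrFun hrel i0) i0
      simp only [Matrix.sub_apply, Matrix.smul_apply, Matrix.one_apply_eq, smul_eq_mul,
        hd0 i0, hd2 i0, mul_zero, mul_one] at this
      linarith
    exact ⟨a + b, by rw [hrel, hprod]; module⟩
  · -- quadratic relation → card = 2
    rintro ⟨c, hc⟩
    set Δ : ℝ := Real.sqrt (c ^ 2 + 4 * ((n : ℝ) - 1)) with hΔdef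
    have hdisc : (0 : ℝ) < c ^ 2 + 4 * ((n : ℝ) - 1) := by nlinarith [sq_nonneg c]
    have hΔpos : 0 < Δ := Real.sqrt_pos.mpr hdisc
    have hΔsq : Δ ^ 2 = c ^ 2 + 4 * ((n : ℝ) - 1) := Real.sq_sqrt hdisc.le
    set a : ℝ := (c + Δ) / 2 with hadef
    set b : ℝ := (c - Δ) / 2 with hbdef
    have hsum : a + b = c := by rw [hadef, hbdef]; ring
    have hprod : a * b = -((n : ℝ) - 1) := by
      rw [hadef, hbdef]
      have : (c + Δ) / 2 * ((c - Δ) / 2) = (c ^ 2 - Δ ^ 2) / 4 := by ring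
      rw [this, hΔsq]; ring
    have hab : a ≠ b := by
      intro h
      rw [hadef, hbdef] at h
      have : Δ = 0 := by linarith
      linarith
    have hSq : (S - a • 1) * (S - b • 1) = 0 := by
      rw [quad_expand, hc, hsum, hprod]
      module
    have heig2 : ∀ i, hsym.eigenvalues i = a ∨ hsym.eigenvalues i = b := fun i =>
      root_of_quad S a b _ hSq (hevroot i)
    have hapos : ∃ i, hsym.eigenvalues i = a := by
      by_contra h
      push_neg at h
      have hall : ∀ i, hsym.eigenvalues i = b := fun i => (heig2 i).resolve_left (h i)
      have : ∑ i, hsym.eigenvalues i = n * b := by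
        rw [Finset.sum_congr rfl fun i _ => hall i]
        simp [mul_comm]
      rw [htr] at this
      have hb0 : b = 0 := by
        rcases mul_eq_zero.mp this.symm with h' | h'
        · exfalso
          have hn0 : (0 : ℝ) < (n : ℝ) := by exact_mod_cast (by omega : 0 < n)
          exact hn0.ne' h'
        · exact h'
      rw [hb0, mul_zero] at hprod
      linarith
    have hbpos : ∃ i, hsym.eigenvalues i = b := by
      by_contra h
      push_neg at h
      have hall : ∀ i, hsym.eigenvalues i = a := fun i => (heig2 i).resolve_right (h i)
      have : ∑ i, hsym.eigenvalues i = n * a := by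
        rw [Finset.sum_congr rfl fun i _ => hall i]
        simp [mul_comm]
      rw [htr] at this
      have ha0 : a = 0 := by
        rcases mul_eq_zero.mp this.symm with h' | h'
        · exfalso
          have hn0 : (0 : ℝ) < (n : ℝ) := by exact_mod_cast (by omega : 0 < n)
          exact hn0.ne' h'
        · exact h'
      rw [ha0, zero_mul] at hprod
      linarith
    have hfin : S.charpoly.roots.toFinset = {a, b} := by
      apply Finset.Subset.antisymm
      · exact hcard a b hab hSq
      · intro x hx
        simp only [Finset.mem_insert, Finset.mem_singleton] at hx
        rcases hx with rfl | rfl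
        · obtain ⟨i, hi⟩ := hapos
          exact Multiset.mem_toFinset.mpr (hi ▸ hevroot i)
        · obtain ⟨i, hi⟩ := hbpos
          exact Multiset.mem_toFinset.mpr (hi ▸ hevroot i)
    rw [hfin, Finset.card_insert_of_notMem (by simpa using hab), Finset.card_singleton]

lemma diag_entry {n : ℕ} (g : ℕ → ℝ) (S : Matrix (Fin n) (Fin n) ℝ)
    (hS : ∀ i j : Fin n, S i j = if i = j then 0 else g (max (i : ℕ) (j : ℕ)))
    (hg : ∀ m, m < n → g m * g m = 1) (i : Fin n) :
    (S * S) i i = (n : ℝ) - 1 := by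
  rw [Matrix.mul_apply]
  have h1 : ∀ l : Fin n, S i l * S l i = if l = i then 0 else 1 := by
    intro l
    by_cases h : l = i
    · subst h; simp [hS]
    · simp only [hS, if_neg h, if_neg (show ¬ i = l from fun hh => h hh.symm)]
      rw [max_comm (i : ℕ) (l : ℕ)]
      exact hg _ (max_lt l.isLt i.isLt)
  calc ∑ l : Fin n, S i l * S l i
      = ∑ l : Fin n, ((1 : ℝ) - if l = i then 1 else 0) := by
        refine Finset.sum_congr rfl fun l _ => ?_
        rw [h1 l]; by_cases h : l = i <;> simp [h]
    _ = (n : ℝ) - 1 := by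
        rw [Finset.sum_sub_distrib, Finset.sum_const,
          Finset.sum_ite_eq' Finset.univ i (fun _ => (1 : ℝ))]
        simp

lemma offdiag_entry {n : ℕ} (g : ℕ → ℝ) (S : Matrix (Fin n) (Fin n) ℝ)
    (hS : ∀ i j : Fin n, S i j = if i = j then 0 else g (max (i : ℕ) (j : ℕ)))
    (hg : ∀ m, m < n → g m * g m = 1) (i j : Fin n) (hij : (i : ℕ) < (j : ℕ)) :
    (S * S) i j = (i : ℕ) * (g i * g j)
      + (∑ m ∈ Finset.Ico ((i : ℕ) + 1) (j : ℕ), g m) * g j + ((n : ℝ) - 1 - (j : ℕ)) := by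
  rw [Matrix.mul_apply]
  set f : ℕ → ℝ := fun m =>
    (if (i : ℕ) = m then 0 else g (max (i : ℕ) m)) *
    (if m = (j : ℕ) then 0 else g (max m (j : ℕ))) with hfdef
  have hterm : ∀ l : Fin n, S i l * S l j = f (l : ℕ) := by
    intro l
    rw [hS, hS, hfdef]
    simp only [Fin.ext_iff]
  have hjn : (j : ℕ) < n := j.isLt
  have hfi : f (i : ℕ) = 0 := by simp [hfdef]
  have hfj : f (j : ℕ) = 0 := by simp [hfdef]
  have h1 : ∑ m ∈ Finset.Ico 0 (i : ℕ), f m = (i : ℕ) * (g i * g j) := by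
    have hc : ∀ m ∈ Finset.Ico 0 (i : ℕ), f m = g i * g j := by
      intro m hm
      rw [Finset.mem_Ico] at hm
      rw [hfdef]
      simp only
      rw [if_neg (by omega), if_neg (by omega),
        max_eq_left (by omega : m ≤ (i : ℕ)), max_eq_right (by omega : m ≤ (j : ℕ))]
    rw [Finset.sum_congr rfl hc, Finset.sum_const, Nat.card_Ico, nsmul_eq_mul]
    norm_num
  have h2 : ∑ m ∈ Finset.Ico ((i : ℕ) + 1) (j : ℕ), f m
      = (∑ m ∈ Finset.Ico ((i : ℕ) + 1) (j : ℕ), g m) * g j := by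
    rw [Finset.sum_mul]
    refine Finset.sum_congr rfl fun m hm => ?_
    rw [Finset.mem_Ico] at hm
    rw [hfdef]
    simp only
    rw [if_neg (by omega), if_neg (by omega),
      max_eq_right (by omega : (i : ℕ) ≤ m), max_eq_right (by omega : m ≤ (j : ℕ))]
  have h3 : ∑ m ∈ Finset.Ico ((j : ℕ) + 1) n, f m = (n : ℝ) - 1 - (j : ℕ) := by
    have hc : ∀ m ∈ Finset.Ico ((j : ℕ) + 1) n, f m = 1 := by
      intro m hm
      rw [Finset.mem_Ico] at hm
      rw [hfdef]
      simp only
      rw [if_neg (by omega), if_neg (by omega),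
        max_eq_right (by omega : (i : ℕ) ≤ m), max_eq_left (by omega : (j : ℕ) ≤ m)]
      exact hg _ hm.2
    rw [Finset.sum_congr rfl hc, Finset.sum_const, Nat.card_Ico, nsmul_eq_mul, mul_one]
    have : (j : ℕ) + 1 ≤ n := by omega
    push_cast [Nat.cast_sub this]
    ring
  rw [Finset.sum_congr rfl fun l _ => hterm l, Fin.sum_univ_eq_sum_range f n]
  rw [Finset.range_eq_Ico,
    ← Finset.sum_Ico_consecutive f (Nat.zero_le (i : ℕ)) (by omega : (i : ℕ) ≤ n),
    Finset.sum_eq_sum_Ico_succ_bot (by omega : (i : ℕ) < n) f,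
    ← Finset.sum_Ico_consecutive f (by omega : (i : ℕ) + 1 ≤ (j : ℕ)) (by omega : (j : ℕ) ≤ n),
    Finset.sum_eq_sum_Ico_succ_bot (by omega : (j : ℕ) < n) f,
    hfi, hfj, h1, h2, h3]
  ring

lemma Q_iff_M {n : ℕ} (hn2 : 2 ≤ n) (g : ℕ → ℝ)
    (hg0 : g 0 = 1) (hgn : g (n - 1) = -1) :
    (∃ c : ℝ, ∀ i j : ℕ, i < j → j < n →
        (i : ℝ) * g i + (∑ m ∈ Finset.Ico (i + 1) j, g m) + ((n : ℝ) - 1 - j) * g j = c)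
      ↔ (∀ m, 1 ≤ m → m + 3 ≤ n → g m = g (m + 1)) := by
  constructor
  · rintro ⟨c, hc⟩ m hm1 hm3
    have h1 := hc m (n - 1) (by omega) (by omega)
    have h2 := hc (m + 1) (n - 1) (by omega) (by omega)
    rw [Finset.sum_eq_sum_Ico_succ_bot (by omega : m + 1 < n - 1) g] at h1
    have key : (m : ℝ) * g m + g (m + 1) = ((m : ℝ) + 1) * g (m + 1) := by
      push_cast at h1 h2 ⊢
      linarith
    have hm0 : (0 : ℝ) < (m : ℝ) := by exact_mod_cast hm1
    nlinarith [key]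
  · intro hM
    set ε : ℝ := g 1 with hεdef
    have gmid : ∀ m, 1 ≤ m → m ≤ n - 2 → g m = ε := by
      intro m hm1
      induction m, hm1 using Nat.le_induction with
      | base => intro _; rfl
      | succ m hm ih =>
        intro hm2
        rw [← hM m hm (by omega)]
        exact ih (by omega)
    have gsum : ∀ a b : ℕ, 1 ≤ a → b ≤ n - 1 →
        ∑ m ∈ Finset.Ico a b, g m = ((b - a : ℕ) : ℝ) * ε := by
      intro a b ha hb
      rcases le_or_gt b a with h | h
      · rw [Finset.Ico_eq_empty (by omega), Finset.sum_empty, show b - a = 0 by omega]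
        simp
      · have hc : ∀ m ∈ Finset.Ico a b, g m = ε := by
          intro m hm
          rw [Finset.mem_Ico] at hm
          exact gmid m (by omega) (by omega)
        rw [Finset.sum_congr rfl hc, Finset.sum_const, Nat.card_Ico, nsmul_eq_mul]
    refine ⟨((n : ℝ) - 2) * ε, ?_⟩
    intro i j hij hjn
    have hsum : ∑ m ∈ Finset.Ico (i + 1) j, g m = ((j - (i + 1) : ℕ) : ℝ) * ε :=
      gsum (i + 1) j (by omega) (by omega)
    have hcast : ((j - (i + 1) : ℕ) : ℝ) = (j : ℝ) - (i : ℝ) - 1 := by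
      push_cast [Nat.cast_sub (by omega : i + 1 ≤ j)]
      ring
    have hcast2 : ((n - 1 : ℕ) : ℝ) = (n : ℝ) - 1 := by
      push_cast [Nat.cast_sub (by omega : 1 ≤ n)]
      ring
    rw [hsum, hcast]
    rcases Nat.eq_zero_or_pos i with hi0 | hi1
    · subst hi0
      rcases eq_or_lt_of_le (by omega : j ≤ n - 1) with hjn1 | hjlt
      · rw [hjn1, hgn, hcast2, hg0]
        push_cast
        ring
      · rw [gmid j (by omega) (by omega), hg0]
        push_cast
        ring
    · rw [gmid i (by omega) (by omega)]
      rcases eq_or_lt_of_le (by omega : j ≤ n - 1) with hjn1 | hjlt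
      · rw [hjn1, hgn, hcast2]
        ring
      · rw [gmid j (by omega) (by omega)]
        ring

theorem stmt_12
    (k : ℕ) (hk : 1 ≤ k) (s t : ℕ → ℕ)
    (hs : ∀ i, 1 ≤ i → i ≤ k → 1 ≤ s i) (ht : ∀ i, 1 ≤ i → i ≤ k → 1 ≤ t i)
    (c : ℕ → ℕ)
    (hc : ∀ i, 1 ≤ i → i ≤ k → c (2 * i - 1) = s i ∧ c (2 * i) = t i)
    (B : ℕ → ℕ) (hB0 : B 0 = 0) (hB : ∀ p, B (p + 1) = B p + c (p + 1))
    (n : ℕ) (hn : n = B (2 * k))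
    (β : ℕ → ℝ)
    (hβ : ∀ p j, 1 ≤ p → p ≤ 2 * k → B (p - 1) < j → j ≤ B p →
      β j = (-1 : ℝ) ^ (p + 1))
    (S : Matrix (Fin n) (Fin n) ℝ)
    (hS : ∀ i j : Fin n, S i j = if i = j then 0 else β (max (i : ℕ) (j : ℕ) + 1)) :
    S.charpoly.roots.toFinset.card = 2 ↔ (k = 1 ∧ (s 1 = 1 ∨ t 1 = 1)) := by
  -- basic combinatorial facts
  have cpos : ∀ p, 1 ≤ p → p ≤ 2 * k → 1 ≤ c p := by
    intro p hp1 hp2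
    rcases Nat.even_or_odd p with ⟨i, hi⟩ | ⟨i, hi⟩
    · have hi1 : 1 ≤ i := by omega
      have hik : i ≤ k := by omega
      rw [show p = 2 * i by omega, (hc i hi1 hik).2]
      exact ht i hi1 hik
    · have hi1 : 1 ≤ i + 1 := by omega
      have hik : i + 1 ≤ k := by omega
      rw [show p = 2 * (i + 1) - 1 by omega, (hc (i + 1) hi1 hik).1]
      exact hs (i + 1) hi1 hik
  have Badd : ∀ d p, p + d ≤ 2 * k → B p + d ≤ B (p + d) := by
    intro d
    induction d with
    | zero => intro p _; simp
    | succ d ih =>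
      intro p hp
      have h1 := ih p (by omega)
      have h2 := hB (p + d)
      have h3 := cpos (p + d + 1) (by omega) (by omega)
      have : p + (d + 1) = (p + d) + 1 := by omega
      rw [this, h2]
      omega
  have hn2 : 2 ≤ n := by
    have := Badd (2 * k) 0 (by omega)
    simp [hB0] at this
    omega
  have hfind : ∀ j, 1 ≤ j → j ≤ n →
      ∃ p, 1 ≤ p ∧ p ≤ 2 * k ∧ B (p - 1) < j ∧ j ≤ B p := by
    have key : ∀ q j, 1 ≤ j → j ≤ B q →
        ∃ p, 1 ≤ p ∧ p ≤ q ∧ B (p - 1) < j ∧ j ≤ B p := by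
      intro q
      induction q with
      | zero => intro j hj1 hj2; rw [hB0] at hj2; omega
      | succ q ih =>
        intro j hj1 hj2
        by_cases h : j ≤ B q
        · obtain ⟨p, h1, h2, h3, h4⟩ := ih j hj1 h
          exact ⟨p, h1, by omega, h3, h4⟩
        · refine ⟨q + 1, by omega, le_refl _, ?_, hj2⟩
          simpa using (by omega : B q < j)
    intro j hj1 hj2
    exact key (2 * k) j hj1 (by omega)
  have βpm : ∀ j, 1 ≤ j → j ≤ n → β j = 1 ∨ β j = -1 := by
    intro j hj1 hj2
    obtain ⟨p, hp1, hp2, hp3, hp4⟩ := hfind j hj1 hj2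
    rw [hβ p j hp1 hp2 hp3 hp4]
    rcases Nat.even_or_odd (p + 1) with h | h
    · left; exact h.neg_one_pow
    · right; exact h.neg_one_pow
  have hB1 : B 1 = c 1 := by rw [show (1:ℕ) = 0 + 1 from rfl, hB 0, hB0]; ring
  have hc1 : c 1 = s 1 := by
    have := (hc 1 (le_refl 1) hk).1
    norm_num at this
    exact this
  have hβ1 : β 1 = 1 := by
    have h := hβ 1 1 (le_refl 1) (by omega) (by simp [hB0]) (by have := cpos 1 (by omega) (by omega); omega)
    rw [h]; norm_num
  have hBlast : B (2 * k) = B (2 * k - 1) + c (2 * k) := by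
    have h := hB (2 * k - 1)
    rw [show 2 * k - 1 + 1 = 2 * k by omega] at h
    exact h
  have hβn : β n = -1 := by
    have hlt : B (2 * k - 1) < n := by
      have := cpos (2 * k) (by omega) (le_refl _)
      omega
    have h := hβ (2 * k) n (by omega) (le_refl _) hlt (by omega)
    rw [h]
    exact Odd.neg_one_pow ⟨k, by ring⟩
  -- the sign function on 0-based indices
  set g : ℕ → ℝ := fun m => β (m + 1) with hgdef
  have hS' : ∀ i j : Fin n, S i j = if i = j then 0 else g (max (i : ℕ) (j : ℕ)) :=
    fun i j => hS i j
  have hg : ∀ m, m < n → g m * g m = 1 := by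
    intro m hm
    rcases βpm (m + 1) (by omega) (by omega) with h | h <;>
      · rw [hgdef]; simp only; rw [h]; norm_num
  have hg0 : g 0 = 1 := hβ1
  have hgn : g (n - 1) = -1 := by
    rw [hgdef]; simp only
    rw [show n - 1 + 1 = n by omega]
    exact hβn
  have hSsymm : ∀ a b : Fin n, S a b = S b a := by
    intro a b
    rw [hS', hS']
    by_cases h : a = b
    · simp [h]
    · rw [if_neg h, if_neg (fun hh => h hh.symm), max_comm]
  have hherm : S.IsHermitian := by
    ext i j
    rw [Matrix.conjTranspose_apply, star_trivial]
    exact hSsymm j i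
  have hd0 : ∀ i : Fin n, S i i = 0 := by
    intro i; rw [hS', if_pos rfl]
  have hd2 : ∀ i : Fin n, (S * S) i i = (n : ℝ) - 1 := diag_entry g S hS' hg
  rw [key_spec hn2 S hherm hd0 hd2]
  -- bridge to F-constancy
  have hPQ : (∃ c₀ : ℝ, S * S = c₀ • S + ((n : ℝ) - 1) • (1 : Matrix (Fin n) (Fin n) ℝ)) ↔
      (∃ c₀ : ℝ, ∀ i j : ℕ, i < j → j < n →
        (i : ℝ) * g i + (∑ m ∈ Finset.Ico (i + 1) j, g m) + ((n : ℝ) - 1 - j) * g j = c₀) := by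
    constructor
    · rintro ⟨c₀, hrel⟩
      refine ⟨c₀, fun i j hij hjn => ?_⟩
      set I : Fin n := ⟨i, by omega⟩ with hIdef
      set J : Fin n := ⟨j, hjn⟩ with hJdef
      have hne : I ≠ J := by
        intro h
        have := congrArg Fin.val h
        simp [hIdef, hJdef] at this
        omega
      have hIJ : S I J = g j := by
        rw [hS' I J, if_neg hne]
        have : max (I : ℕ) (J : ℕ) = j := by
          simp [hIdef, hJdef]
          omega
        rw [this]
      have he := congrFun (congrFun hrel I) J
      rw [Matrix.add_apply, Matrix.smul_apply, Matrix.smul_apply, Matrix.one_apply_ne hne,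
        hIJ, offdiag_entry g S hS' hg I J (by simpa [hIdef, hJdef] using hij)] at he
      simp only [hIdef, hJdef, smul_eq_mul, mul_zero, add_zero] at he
      have hgj := hg j hjn
      linear_combination g j * he + (c₀ - (i : ℝ) * g i - (∑ m ∈ Finset.Ico (i + 1) j, g m)) * hgj
    · rintro ⟨c₀, hF⟩
      refine ⟨c₀, ?_⟩
      have hoff : ∀ I J : Fin n, (I : ℕ) < (J : ℕ) →
          (S * S) I J = (c₀ • S + ((n : ℝ) - 1) • (1 : Matrix (Fin n) (Fin n) ℝ)) I J := by
        intro I J hij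
        have hne : I ≠ J := fun h => by simp [h] at hij
        have hIJ : S I J = g (J : ℕ) := by
          rw [hS' I J, if_neg hne, max_eq_right hij.le]
        rw [Matrix.add_apply, Matrix.smul_apply, Matrix.smul_apply, Matrix.one_apply_ne hne,
          hIJ, offdiag_entry g S hS' hg I J hij]
        have hgj := hg (J : ℕ) J.isLt
        have hFe := hF (I : ℕ) (J : ℕ) hij J.isLt
        simp only [smul_eq_mul, mul_zero, add_zero]
        linear_combination g (J : ℕ) * hFe + (((J : ℕ) : ℝ) + 1 - (n : ℝ)) * hgj
      ext I J
      rcases lt_trichotomy (I : ℕ) (J : ℕ) with h | h | h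
      · exact hoff I J h
      · have hIJ : I = J := Fin.ext h
        subst hIJ
        rw [hd2 I, Matrix.add_apply, Matrix.smul_apply, Matrix.smul_apply,
          Matrix.one_apply_eq, hd0 I]
        simp
      · have h1 := hoff J I h
        have hmm : (S * S) I J = (S * S) J I := by
          rw [Matrix.mul_apply, Matrix.mul_apply]
          exact Finset.sum_congr rfl fun l _ => by rw [hSsymm I l, hSsymm l J, mul_comm]
        have hr : (c₀ • S + ((n : ℝ) - 1) • (1 : Matrix (Fin n) (Fin n) ℝ)) I J
            = (c₀ • S + ((n : ℝ) - 1) • (1 : Matrix (Fin n) (Fin n) ℝ)) J I := by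
          rw [Matrix.add_apply, Matrix.add_apply, Matrix.smul_apply, Matrix.smul_apply,
            Matrix.smul_apply, Matrix.smul_apply, hSsymm I J]
          congr 1
          rw [Matrix.one_apply, Matrix.one_apply]
          simp [eq_comm]
        rw [hmm, hr]
        exact h1
  rw [hPQ, Q_iff_M hn2 g hg0 hgn]
  -- final combinatorial equivalence
  constructor
  · -- middle constancy → k = 1 ∧ (s 1 = 1 ∨ t 1 = 1)
    intro hM
    have hgβ : ∀ m, g m = β (m + 1) := fun m => rfl
    have hβB1 : β (B 1) = 1 := by
      have h := hβ 1 (B 1) (le_refl 1) (by omega) (by simp [hB0]; have := cpos 1 (by omega) (by omega); omega) (le_refl _)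
      rw [h]; norm_num
    have hB2 : B 2 = B 1 + c 2 := by
      have h := hB 1
      norm_num at h
      exact h
    have hc2pos : 1 ≤ c 2 := cpos 2 (by omega) (by omega)
    have hβB1' : β (B 1 + 1) = -1 := by
      have h := hβ 2 (B 1 + 1) (by omega) (by omega) (by norm_num) (by omega)
      rw [h]; norm_num
    have hB1pos : 1 ≤ B 1 := by rw [hB1]; exact cpos 1 (by omega) (by omega)
    have main : s 1 = 1 ∨ n ≤ B 1 + 1 := by
      by_contra h
      push_neg at h
      obtain ⟨hs1, hBn⟩ := h
      have hs1' : 2 ≤ s 1 := by have := hs 1 (by omega) hk; omega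
      have hB1ge2 : 2 ≤ B 1 := by rw [hB1, hc1]; omega
      have := hM (B 1 - 1) (by omega) (by omega)
      rw [hgβ, hgβ, show B 1 - 1 + 1 = B 1 by omega, hβB1, hβB1'] at this
      norm_num at this
    rcases main with hs1 | hBn
    · -- s 1 = 1; show k = 1
      have hk1 : k = 1 := by
        by_contra hk1
        have hk2 : 2 ≤ k := by omega
        have hB1eq : B 1 = 1 := by rw [hB1, hc1, hs1]
        have hB2ge2 : 2 ≤ B 2 := by omega
        have hβB2 : β (B 2) = -1 := by
          have h := hβ 2 (B 2) (by omega) (by omega) (by norm_num; omega) (le_refl _)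
          rw [h]; norm_num
        have hB3 : B 3 = B 2 + c 3 := by
          have h := hB 2
          norm_num at h
          exact h
        have hc3pos : 1 ≤ c 3 := cpos 3 (by omega) (by omega)
        have hβB2' : β (B 2 + 1) = 1 := by
          have h := hβ 3 (B 2 + 1) (by omega) (by omega) (by norm_num) (by omega)
          rw [h]; norm_num
        have hB2n : B 2 + 2 ≤ n := by
          have := Badd (2 * k - 2) 2 (by omega)
          rw [show 2 + (2 * k - 2) = 2 * k by omega] at this
          omega
        have := hM (B 2 - 1) (by omega) (by omega)
        rw [hgβ, hgβ, show B 2 - 1 + 1 = B 2 by omega, hβB2, hβB2'] at this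
        norm_num at this
      exact ⟨hk1, Or.inl hs1⟩
    · -- n ≤ B 1 + 1 forces k = 1 and t 1 = 1
      have hkB : B 1 + (2 * k - 1) ≤ B (2 * k) := by
        have := Badd (2 * k - 1) 1 (by omega)
        rw [show 1 + (2 * k - 1) = 2 * k by omega] at this
        exact this
      have hk1 : k = 1 := by omega
      subst hk1
      have hn' : n = B 1 + c 2 := by
        have h := hB 1
        rw [hn, show 2 * 1 = 1 + 1 by norm_num, h]
      have ht1 : t 1 = 1 := by
        have hct : c 2 = t 1 := by
          have := (hc 1 (le_refl 1) (le_refl 1)).2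
          norm_num at this
          exact this
        have hc2pos : 1 ≤ c 2 := cpos 2 (by omega) (by omega)
        omega
      exact ⟨rfl, Or.inr ht1⟩
  · -- k = 1 ∧ (s 1 = 1 ∨ t 1 = 1) → middle constancy
    rintro ⟨hk1, hst⟩ m hm1 hm3
    subst hk1
    have hB2 : B 2 = B 1 + c 2 := by
      have h := hB 1
      norm_num at h
      exact h
    have hc2 : c 2 = t 1 := by
      have := (hc 1 (le_refl 1) (le_refl 1)).2
      norm_num at this
      exact this
    have hnB2 : n = B 2 := by rw [hn]
    rcases hst with hs1 | ht1
    · -- complete graph: all of positions 2..n are in block 2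
      have hB1eq : B 1 = 1 := by rw [hB1, hc1, hs1]
      have h1 : β (m + 1) = -1 := by
        have h := hβ 2 (m + 1) (by omega) (by omega) (by show B 1 < m + 1; omega) (by omega)
        rw [h]; norm_num
      have h2 : β (m + 1 + 1) = -1 := by
        have h := hβ 2 (m + 1 + 1) (by omega) (by omega) (by show B 1 < m + 1 + 1; omega) (by omega)
        rw [h]; norm_num
      show β (m + 1) = β (m + 1 + 1)
      rw [h1, h2]
    · -- star: positions 1..n-1 are in block 1
      have hB1eq : B 1 = n - 1 := by omega
      have h1 : β (m + 1) = 1 := by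
        have h := hβ 1 (m + 1) (le_refl 1) (by omega) (by simp [hB0]) (by omega)
        rw [h]; norm_num
      have h2 : β (m + 1 + 1) = 1 := by
        have h := hβ 1 (m + 1 + 1) (le_refl 1) (by omega) (by simp [hB0]) (by omega)
        rw [h]; norm_num
      show β (m + 1) = β (m + 1 + 1)
      rw [h1, h2]
end
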